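/- arXiv:0908.4316 — 8 statements merged into one kernel-verified Lean document; each statement's English description precedes it below -/
import Mathlib

section
/- Let n ≥ 1 and let Ω ⊆ ℝⁿ be open. Let H₀, S₀, ρ : Ω × ℝⁿ → ℝ be smooth functions on phase space, and let V, W, W_U, U : Ω → ℝ be smooth position functions (regarded as momentum-independent functions on Ω × ℝⁿ) with U(x) ≠ 0 for every x ∈ Ω. Set H = H₀ + V, S = S₀ + W and S_U = S₀ + W_U. Assume the conformal symmetry relations {S₀, H₀} = ρ·H₀, {S, H} = ρ·H, and {S_U, H₀ + U} = ρ·(H₀ + U) hold identically on Ω × ℝⁿ. Then the Stäckel-transformed function S̃ = S − (W_U/U)·H is in involution with the Stäckel-transformed Hamiltonian H̃ = H/U, i.e. {S̃, H̃} = 0 identically on Ω × ℝⁿ. -/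
noncomputable section

/-- The canonical Poisson bracket of two functions on phase space
`(Fin n → ℝ) × (Fin n → ℝ)` (positions and momenta). -/
def pb {n : ℕ} (f g : (Fin n → ℝ) × (Fin n → ℝ) → ℝ)
    (z : (Fin n → ℝ) × (Fin n → ℝ)) : ℝ :=
  ∑ i : Fin n,
    (fderiv ℝ f z (Pi.single i 1, 0) * fderiv ℝ g z (0, Pi.single i 1)
      - fderiv ℝ f z (0, Pi.single i 1) * fderiv ℝ g z (Pi.single i 1, 0))

section Aux

variable {n : ℕ} {f g h : (Fin n → ℝ) × (Fin n → ℝ) → ℝ} {z : (Fin n → ℝ) × (Fin n → ℝ)}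

lemma pb_antisymm (f g : (Fin n → ℝ) × (Fin n → ℝ) → ℝ) (z : (Fin n → ℝ) × (Fin n → ℝ)) :
    pb f g z = - pb g f z := by
  unfold pb
  rw [← Finset.sum_neg_distrib]
  exact Finset.sum_congr rfl fun i _ => by ring

lemma pb_self (f : (Fin n → ℝ) × (Fin n → ℝ) → ℝ) (z : (Fin n → ℝ) × (Fin n → ℝ)) :
    pb f f z = 0 := by
  unfold pb
  exact Finset.sum_eq_zero fun i _ => by ring

lemma pb_add_left (hf : DifferentiableAt ℝ f z) (hg : DifferentiableAt ℝ g z) :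
    pb (fun w => f w + g w) h z = pb f h z + pb g h z := by
  unfold pb
  rw [fderiv_fun_add hf hg, ← Finset.sum_add_distrib]
  exact Finset.sum_congr rfl fun i _ => by
    simp only [ContinuousLinearMap.add_apply]; ring

lemma pb_sub_left (hf : DifferentiableAt ℝ f z) (hg : DifferentiableAt ℝ g z) :
    pb (fun w => f w - g w) h z = pb f h z - pb g h z := by
  unfold pb
  rw [fderiv_fun_sub hf hg, ← Finset.sum_sub_distrib]
  exact Finset.sum_congr rfl fun i _ => by
    simp only [ContinuousLinearMap.sub_apply]; ring

lemma pb_mul_left (hf : DifferentiableAt ℝ f z) (hg : DifferentiableAt ℝ g z) :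
    pb (fun w => f w * g w) h z = f z * pb g h z + g z * pb f h z := by
  unfold pb
  rw [fderiv_fun_mul hf hg, Finset.mul_sum, Finset.mul_sum, ← Finset.sum_add_distrib]
  exact Finset.sum_congr rfl fun i _ => by
    simp only [ContinuousLinearMap.add_apply, ContinuousLinearMap.smul_apply, smul_eq_mul]
    ring

lemma pb_add_right (hg : DifferentiableAt ℝ g z) (hh : DifferentiableAt ℝ h z) :
    pb f (fun w => g w + h w) z = pb f g z + pb f h z := by
  rw [pb_antisymm, pb_add_left hg hh, pb_antisymm g f z, pb_antisymm h f z]; ring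

lemma pb_mul_right (hg : DifferentiableAt ℝ g z) (hh : DifferentiableAt ℝ h z) :
    pb f (fun w => g w * h w) z = g z * pb f h z + h z * pb f g z := by
  rw [pb_antisymm, pb_mul_left hg hh, pb_antisymm g f z, pb_antisymm h f z]; ring

lemma hasFDerivAt_pos (φ : (Fin n → ℝ) → ℝ) (hφ : DifferentiableAt ℝ φ z.1) :
    HasFDerivAt (fun w : (Fin n → ℝ) × (Fin n → ℝ) => φ w.1)
      ((fderiv ℝ φ z.1).comp (ContinuousLinearMap.fst ℝ (Fin n → ℝ) (Fin n → ℝ))) z :=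
  hφ.hasFDerivAt.comp z hasFDerivAt_fst

lemma fderiv_pos_mom (φ : (Fin n → ℝ) → ℝ) (hφ : DifferentiableAt ℝ φ z.1)
    (v : Fin n → ℝ) :
    fderiv ℝ (fun w : (Fin n → ℝ) × (Fin n → ℝ) => φ w.1) z ((0 : Fin n → ℝ), v) = 0 := by
  rw [(hasFDerivAt_pos φ hφ).fderiv]
  simp

lemma pb_pos_pos (φ ψ : (Fin n → ℝ) → ℝ) (hφ : DifferentiableAt ℝ φ z.1)
    (hψ : DifferentiableAt ℝ ψ z.1) :
    pb (fun w => φ w.1) (fun w => ψ w.1) z = 0 := by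
  unfold pb
  exact Finset.sum_eq_zero fun i _ => by
    rw [fderiv_pos_mom φ hφ, fderiv_pos_mom ψ hψ]; ring

lemma pb_right_of_fderiv_smul {c : ℝ} (hgh : fderiv ℝ g z = c • fderiv ℝ h z) :
    pb f g z = c * pb f h z := by
  unfold pb
  rw [hgh, Finset.mul_sum]
  exact Finset.sum_congr rfl fun i _ => by
    simp only [ContinuousLinearMap.smul_apply, smul_eq_mul]; ring

lemma pb_inv_right {U : (Fin n → ℝ) → ℝ} (hUd : DifferentiableAt ℝ U z.1)
    (hne : U z.1 ≠ 0) :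
    pb f (fun w => (U w.1)⁻¹) z = -((U z.1)^2)⁻¹ * pb f (fun w => U w.1) z := by
  apply pb_right_of_fderiv_smul
  have h1 : HasFDerivAt (fun t : ℝ => t⁻¹)
      (ContinuousLinearMap.smulRight (1 : ℝ →L[ℝ] ℝ) (-((U z.1)^2)⁻¹)) (U z.1) :=
    (hasDerivAt_inv hne).hasFDerivAt
  have h2 : HasFDerivAt (fun w : (Fin n → ℝ) × (Fin n → ℝ) => (U w.1)⁻¹)
      ((ContinuousLinearMap.smulRight (1 : ℝ →L[ℝ] ℝ) (-((U z.1)^2)⁻¹)).comp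
        ((fderiv ℝ U z.1).comp (ContinuousLinearMap.fst ℝ (Fin n → ℝ) (Fin n → ℝ)))) z :=
    h1.comp z (hasFDerivAt_pos U hUd)
  rw [h2.fderiv, (hasFDerivAt_pos U hUd).fderiv]
  refine ContinuousLinearMap.ext fun v => ?_
  simp only [ContinuousLinearMap.coe_comp', Function.comp_apply,
    ContinuousLinearMap.smulRight_apply, ContinuousLinearMap.one_apply,
    ContinuousLinearMap.smul_apply, smul_eq_mul]
  ring

end Aux

/-- The Stäckel transform of a conformal symmetry of a conformally superintegrable
classical system is a true symmetry of the Stäckel-transformed Hamiltonian. -/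
theorem stackel_transform_symmetry
    (n : ℕ) (hn : 1 ≤ n) (Ω : Set (Fin n → ℝ)) (hΩ : IsOpen Ω)
    (H₀ S₀ ρ : (Fin n → ℝ) × (Fin n → ℝ) → ℝ)
    (V W WU U : (Fin n → ℝ) → ℝ)
    (hH₀ : ContDiffOn ℝ (⊤ : ℕ∞) H₀ (Ω ×ˢ (Set.univ : Set (Fin n → ℝ))))
    (hS₀ : ContDiffOn ℝ (⊤ : ℕ∞) S₀ (Ω ×ˢ (Set.univ : Set (Fin n → ℝ))))
    (hρ : ContDiffOn ℝ (⊤ : ℕ∞) ρ (Ω ×ˢ (Set.univ : Set (Fin n → ℝ))))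
    (hV : ContDiffOn ℝ (⊤ : ℕ∞) V Ω) (hW : ContDiffOn ℝ (⊤ : ℕ∞) W Ω)
    (hWU : ContDiffOn ℝ (⊤ : ℕ∞) WU Ω) (hU : ContDiffOn ℝ (⊤ : ℕ∞) U Ω)
    (hU0 : ∀ x ∈ Ω, U x ≠ 0)
    -- {S₀, H₀} = ρ·H₀
    (h1 : ∀ z ∈ Ω ×ˢ (Set.univ : Set (Fin n → ℝ)),
      pb S₀ H₀ z = ρ z * H₀ z)
    -- {S, H} = ρ·H where S = S₀ + W, H = H₀ + V
    (h2 : ∀ z ∈ Ω ×ˢ (Set.univ : Set (Fin n → ℝ)),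
      pb (fun w => S₀ w + W w.1) (fun w => H₀ w + V w.1) z
        = ρ z * (H₀ z + V z.1))
    -- {S_U, H₀ + U} = ρ·(H₀ + U) where S_U = S₀ + W_U
    (h3 : ∀ z ∈ Ω ×ˢ (Set.univ : Set (Fin n → ℝ)),
      pb (fun w => S₀ w + WU w.1) (fun w => H₀ w + U w.1) z
        = ρ z * (H₀ z + U z.1)) :
    -- {S̃, H̃} = 0 where S̃ = S − (W_U/U)·H and H̃ = H/U
    ∀ z ∈ Ω ×ˢ (Set.univ : Set (Fin n → ℝ)),
      pb (fun w => (S₀ w + W w.1) - (WU w.1 / U w.1) * (H₀ w + V w.1))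
         (fun w => (H₀ w + V w.1) / U w.1) z = 0 := by
  intro z hz
  have hzΩ : z.1 ∈ Ω := hz.1
  have hmem : Ω ×ˢ (Set.univ : Set (Fin n → ℝ)) ∈ nhds z :=
    (hΩ.prod isOpen_univ).mem_nhds hz
  have hmem1 : Ω ∈ nhds z.1 := hΩ.mem_nhds hzΩ
  have dS₀ : DifferentiableAt ℝ S₀ z := (hS₀.contDiffAt hmem).differentiableAt (by simp)
  have dH₀ : DifferentiableAt ℝ H₀ z := (hH₀.contDiffAt hmem).differentiableAt (by simp)
  have dV1 : DifferentiableAt ℝ V z.1 := (hV.contDiffAt hmem1).differentiableAt (by simp)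
  have dW1 : DifferentiableAt ℝ W z.1 := (hW.contDiffAt hmem1).differentiableAt (by simp)
  have dWU1 : DifferentiableAt ℝ WU z.1 := (hWU.contDiffAt hmem1).differentiableAt (by simp)
  have dU1 : DifferentiableAt ℝ U z.1 := (hU.contDiffAt hmem1).differentiableAt (by simp)
  have hne : U z.1 ≠ 0 := hU0 _ hzΩ
  have dψ1 : DifferentiableAt ℝ (fun x => (U x)⁻¹) z.1 := dU1.inv hne
  have dχ1 : DifferentiableAt ℝ (fun x => WU x * (U x)⁻¹) z.1 := dWU1.mul dψ1
  have dV : DifferentiableAt ℝ (fun w : (Fin n → ℝ) × (Fin n → ℝ) => V w.1) z :=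
    dV1.comp z differentiableAt_fst
  have dW : DifferentiableAt ℝ (fun w : (Fin n → ℝ) × (Fin n → ℝ) => W w.1) z :=
    dW1.comp z differentiableAt_fst
  have dWU : DifferentiableAt ℝ (fun w : (Fin n → ℝ) × (Fin n → ℝ) => WU w.1) z :=
    dWU1.comp z differentiableAt_fst
  have dU : DifferentiableAt ℝ (fun w : (Fin n → ℝ) × (Fin n → ℝ) => U w.1) z :=
    dU1.comp z differentiableAt_fst
  have dψ : DifferentiableAt ℝ (fun w : (Fin n → ℝ) × (Fin n → ℝ) => (U w.1)⁻¹) z :=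
    dψ1.comp z differentiableAt_fst
  have dχ : DifferentiableAt ℝ (fun w : (Fin n → ℝ) × (Fin n → ℝ) => WU w.1 * (U w.1)⁻¹) z :=
    dWU.mul dψ
  have dHf : DifferentiableAt ℝ (fun w : (Fin n → ℝ) × (Fin n → ℝ) => H₀ w + V w.1) z :=
    dH₀.add dV
  have dSf : DifferentiableAt ℝ (fun w : (Fin n → ℝ) × (Fin n → ℝ) => S₀ w + W w.1) z :=
    dS₀.add dW
  have dχH : DifferentiableAt ℝ
      (fun w : (Fin n → ℝ) × (Fin n → ℝ) => WU w.1 * (U w.1)⁻¹ * (H₀ w + V w.1)) z :=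
    dχ.mul dHf
  -- zero brackets between position functions
  have zWU : pb (fun w => W w.1) (fun w => U w.1) z = 0 := pb_pos_pos W U dW1 dU1
  have zWV : pb (fun w => W w.1) (fun w => V w.1) z = 0 := pb_pos_pos W V dW1 dV1
  have zχU : pb (fun w => WU w.1 * (U w.1)⁻¹) (fun w => U w.1) z = 0 :=
    pb_pos_pos (fun x => WU x * (U x)⁻¹) U dχ1 dU1
  have zχV : pb (fun w => WU w.1 * (U w.1)⁻¹) (fun w => V w.1) z = 0 :=
    pb_pos_pos (fun x => WU x * (U x)⁻¹) V dχ1 dV1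
  have zVU : pb (fun w => V w.1) (fun w => U w.1) z = 0 := pb_pos_pos V U dV1 dU1
  have zVV : pb (fun w => V w.1) (fun w => V w.1) z = 0 := pb_pos_pos V V dV1 dV1
  have zψU : pb (fun w => (U w.1)⁻¹) (fun w => U w.1) z = 0 :=
    pb_pos_pos (fun x => (U x)⁻¹) U dψ1 dU1
  have zψV : pb (fun w => (U w.1)⁻¹) (fun w => V w.1) z = 0 :=
    pb_pos_pos (fun x => (U x)⁻¹) V dψ1 dV1
  have zWUU : pb (fun w => WU w.1) (fun w => U w.1) z = 0 := pb_pos_pos WU U dWU1 dU1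
  have zWUV : pb (fun w => WU w.1) (fun w => V w.1) z = 0 := pb_pos_pos WU V dWU1 dV1
  -- expand hypotheses
  have e1 := h1 z hz
  have e2 := h2 z hz
  rw [pb_add_left dS₀ dW, pb_add_right dH₀ dV, pb_add_right dH₀ dV, zWV] at e2
  have e3 := h3 z hz
  rw [pb_add_left dS₀ dWU, pb_add_right dH₀ dU, pb_add_right dH₀ dU, zWUU] at e3
  -- expand the goal
  have hψH : pb (fun w => (U w.1)⁻¹) H₀ z
      = ((U z.1)^2)⁻¹ * pb H₀ (fun w => U w.1) z := by
    rw [pb_antisymm (fun w => (U w.1)⁻¹) H₀ z, pb_inv_right dU1 hne]; ring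
  have hVH : pb (fun w => V w.1) H₀ z = - pb H₀ (fun w => V w.1) z :=
    pb_antisymm _ _ _
  simp only [div_eq_mul_inv]
  rw [pb_sub_left dSf dχH, pb_add_left dS₀ dW, pb_mul_left dχ dHf]
  rw [pb_mul_right dHf dψ, pb_mul_right dHf dψ, pb_mul_right dHf dψ, pb_mul_right dHf dψ]
  rw [pb_inv_right dU1 hne, pb_inv_right dU1 hne, pb_inv_right dU1 hne, pb_inv_right dU1 hne]
  rw [pb_add_right dH₀ dV, pb_add_right dH₀ dV, pb_add_right dH₀ dV, pb_add_right dH₀ dV]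
  rw [pb_add_left dH₀ dV, pb_add_left dH₀ dV, pb_add_left dH₀ dV]
  rw [pb_mul_left dWU dψ, pb_mul_left dWU dψ, pb_mul_left dWU dψ]
  rw [pb_self H₀ z, hψH, hVH, zWU, zWV, zVU, zVV, zψU, zψV, zWUU, zWUV]
  field_simp
  linear_combination (- U z.1) * ((H₀ z + V z.1) * e3 - U z.1 * e2 - (H₀ z + V z.1) * e1)
end
end

section
/- Let n ≥ 1 and let Ω ⊆ ℝⁿ be open. Let L, ρ, H : Ω × ℝⁿ → ℝ be smooth functions on phase space and let U : Ω → ℝ be a smooth position function with U(x) ≠ 0 for every x ∈ Ω. If {L, H} = ρ·H and {L, U} = ρ·U identically on Ω × ℝⁿ, then L is a true symmetry of the Stäckel-transformed Hamiltonian H/U, i.e. {L, H/U} = 0 identically on Ω × ℝⁿ. -/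
noncomputable section

/-- A first order conformal symmetry of a conformal superintegrable system is a
true symmetry of the Stäckel-transformed Hamiltonian H/U. -/
theorem first_order_stackel_symmetry
    (n : ℕ) (hn : 1 ≤ n) (Ω : Set (Fin n → ℝ)) (hΩ : IsOpen Ω)
    (L ρ H : (Fin n → ℝ) × (Fin n → ℝ) → ℝ)
    (U : (Fin n → ℝ) → ℝ)
    (hL : ContDiffOn ℝ (⊤ : ℕ∞) L (Ω ×ˢ (Set.univ : Set (Fin n → ℝ))))
    (hρ : ContDiffOn ℝ (⊤ : ℕ∞) ρ (Ω ×ˢ (Set.univ : Set (Fin n → ℝ))))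
    (hH : ContDiffOn ℝ (⊤ : ℕ∞) H (Ω ×ˢ (Set.univ : Set (Fin n → ℝ))))
    (hU : ContDiffOn ℝ (⊤ : ℕ∞) U Ω)
    (hU0 : ∀ x ∈ Ω, U x ≠ 0)
    -- {L, H} = ρ·H
    (h1 : ∀ z ∈ Ω ×ˢ (Set.univ : Set (Fin n → ℝ)), pb L H z = ρ z * H z)
    -- {L, U} = ρ·U  (U regarded as a momentum-independent function)
    (h2 : ∀ z ∈ Ω ×ˢ (Set.univ : Set (Fin n → ℝ)),
      pb L (fun w => U w.1) z = ρ z * U z.1) :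
    -- {L, H/U} = 0
    ∀ z ∈ Ω ×ˢ (Set.univ : Set (Fin n → ℝ)),
      pb L (fun w => H w / U w.1) z = 0 := by
  intro z hz
  have hzΩ : z.1 ∈ Ω := hz.1
  have hne : U z.1 ≠ 0 := hU0 _ hzΩ
  have hopen : IsOpen (Ω ×ˢ (Set.univ : Set (Fin n → ℝ))) := hΩ.prod isOpen_univ
  have hmem : Ω ×ˢ (Set.univ : Set (Fin n → ℝ)) ∈ nhds z := hopen.mem_nhds hz
  have hdH : DifferentiableAt ℝ H z := (hH.contDiffAt hmem).differentiableAt (by simp)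
  have hdU : DifferentiableAt ℝ (fun w : (Fin n → ℝ) × (Fin n → ℝ) => U w.1) z := by
    have h : DifferentiableAt ℝ U z.1 :=
      ((hU.contDiffAt (hΩ.mem_nhds hzΩ)).differentiableAt (by simp))
    exact h.comp z differentiableAt_fst
  have hinv : HasFDerivAt (fun w : (Fin n → ℝ) × (Fin n → ℝ) => (U w.1)⁻¹)
      ((ContinuousLinearMap.smulRight (1 : ℝ →L[ℝ] ℝ) (-((U z.1) ^ 2)⁻¹)).comp
        (fderiv ℝ (fun w : (Fin n → ℝ) × (Fin n → ℝ) => U w.1) z)) z :=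
    (hasFDerivAt_inv hne).comp z hdU.hasFDerivAt
  have hdiv := (hdH.hasFDerivAt.mul hinv).fderiv
  have key : ∀ v, fderiv ℝ (fun w => H w / U w.1) z v
      = ((U z.1)^2)⁻¹ * (U z.1 * fderiv ℝ H z v
        - H z * fderiv ℝ (fun w : (Fin n → ℝ) × (Fin n → ℝ) => U w.1) z v) := by
    intro v
    have : (fun w => H w / U w.1) = fun w : (Fin n → ℝ) × (Fin n → ℝ) => H w * (U w.1)⁻¹ := by
      funext w; rw [div_eq_mul_inv]
    rw [this, show (fun w : (Fin n → ℝ) × (Fin n → ℝ) => H w * (U w.1)⁻¹) = (H * fun w => (U w.1)⁻¹) from rfl, hdiv]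
    simp only [ContinuousLinearMap.add_apply, ContinuousLinearMap.smul_apply,
      ContinuousLinearMap.comp_apply, ContinuousLinearMap.smulRight_apply,
      ContinuousLinearMap.one_apply, smul_eq_mul]
    field_simp
    ring
  have main : pb L (fun w => H w / U w.1) z
      = ((U z.1)^2)⁻¹ * (U z.1 * pb L H z
        - H z * pb L (fun w : (Fin n → ℝ) × (Fin n → ℝ) => U w.1) z) := by
    unfold pb
    simp only [key]
    rw [Finset.mul_sum, Finset.mul_sum, ← Finset.sum_sub_distrib, Finset.mul_sum]
    apply Finset.sum_congr rfl
    intro i _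
    ring
  rw [main, h1 z hz, h2 z hz]
  ring
end
end

section
/- Let Ω ⊆ ℝ³ be open and, for h = 1, 2, 3, 4, let a^{jk}_{(h)} = a^{kj}_{(h)} (1 ≤ j,k ≤ 3) be smooth real functions on Ω. For x ∈ Ω let A(x) be the 4 × 5 matrix whose h-th row is ( a^{33}_{(h)}(x) − a^{11}_{(h)}(x), a^{22}_{(h)}(x) − a^{11}_{(h)}(x), a^{12}_{(h)}(x), a^{13}_{(h)}(x), a^{23}_{(h)}(x) ). Assume the functional linear independence condition: there is no nonempty open subset O ⊆ Ω together with smooth functions c₀, c₁, c₂, c₃, c₄ : O → ℝ satisfying (c₀(x), …, c₄(x)) ≠ (0,…,0) for all x ∈ O and Σ_{h=1}^{4} c_h(x) a^{jk}_{(h)}(x) = c₀(x) δ^{jk} for all 1 ≤ j,k ≤ 3 and all x ∈ O. Then the set { x ∈ Ω : rank A(x) = 4 } is an open dense subset of Ω (i.e. A has rank 4 for general x). -/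
noncomputable section

/-- The 4 × 5 matrix whose h-th row is
`(a³³₍ₕ₎ − a¹¹₍ₕ₎, a²²₍ₕ₎ − a¹¹₍ₕ₎, a¹²₍ₕ₎, a¹³₍ₕ₎, a²³₍ₕ₎)`. -/
def Amat (a : Fin 4 → Fin 3 → Fin 3 → (Fin 3 → ℝ) → ℝ) (x : Fin 3 → ℝ) :
    Matrix (Fin 4) (Fin 5) ℝ :=
  Matrix.of fun h =>
    ![a h 2 2 x - a h 0 0 x, a h 1 1 x - a h 0 0 x, a h 0 1 x, a h 0 2 x, a h 1 2 x]

open Matrix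

/-- explicit 3×3 determinant polynomial -/
def d3 (a b c d e f g h i : ℝ) : ℝ :=
  a * (e * i - f * h) - b * (d * i - f * g) + c * (d * h - e * g)

/-- cofactor expansion of a 4×4 determinant along the last column -/
lemma det4_cof (A : Matrix (Fin 4) (Fin 4) ℝ) :
    A.det =
      -(A 0 3) * d3 (A 1 0) (A 1 1) (A 1 2) (A 2 0) (A 2 1) (A 2 2) (A 3 0) (A 3 1) (A 3 2)
      + A 1 3 * d3 (A 0 0) (A 0 1) (A 0 2) (A 2 0) (A 2 1) (A 2 2) (A 3 0) (A 3 1) (A 3 2)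
      - A 2 3 * d3 (A 0 0) (A 0 1) (A 0 2) (A 1 0) (A 1 1) (A 1 2) (A 3 0) (A 3 1) (A 3 2)
      + A 3 3 * d3 (A 0 0) (A 0 1) (A 0 2) (A 1 0) (A 1 1) (A 1 2) (A 2 0) (A 2 1) (A 2 2) := by
  rw [Matrix.det_succ_row_zero]
  simp [Fin.sum_univ_succ, Matrix.det_fin_three, Matrix.submatrix_apply, Fin.succAbove, d3,
    show (Fin.succ 2 : Fin 4) = 3 from rfl, show (Fin.castSucc 2 : Fin 4) = 2 from rfl,
    show (Fin.castSucc 1 : Fin 4) = 1 from rfl, show (Fin.castSucc 0 : Fin 4) = 0 from rfl]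
  ring

/-- a square matrix of full rank has nonzero determinant -/
lemma det_ne_zero_of_rank_eq_four (G : Matrix (Fin 4) (Fin 4) ℝ) (h : G.rank = 4) :
    G.det ≠ 0 := by
  intro h0
  obtain ⟨v, hv0, hv⟩ := (Matrix.exists_vecMul_eq_zero_iff).mpr h0
  have hker : Gᵀ.mulVecLin v = 0 := by
    simpa [Matrix.mulVecLin_apply, Matrix.mulVec_transpose] using hv
  have hrt : Gᵀ.rank = 4 := by rw [Matrix.rank_transpose]; exact h
  have hrn := LinearMap.finrank_range_add_finrank_ker (Gᵀ.mulVecLin)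
  have hdom : Module.finrank ℝ (Fin 4 → ℝ) = 4 := by simp
  have hrange : Module.finrank ℝ (LinearMap.range Gᵀ.mulVecLin) = 4 := hrt
  have hkz : Module.finrank ℝ (LinearMap.ker Gᵀ.mulVecLin) = 0 := by omega
  have hbot : LinearMap.ker Gᵀ.mulVecLin = ⊥ := Submodule.finrank_eq_zero.mp hkz
  have hvmem : v ∈ LinearMap.ker Gᵀ.mulVecLin := LinearMap.mem_ker.mpr hker
  rw [hbot, Submodule.mem_bot] at hvmem
  exact hv0 hvmem

lemma rank_four_iff (M : Matrix (Fin 4) (Fin 5) ℝ) :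
    M.rank = 4 ↔ (M * Mᵀ).det ≠ 0 := by
  constructor
  · intro h
    exact det_ne_zero_of_rank_eq_four _ (by rw [Matrix.rank_self_mul_transpose, h])
  · intro h
    have hu : IsUnit (M * Mᵀ) :=
      (Matrix.isUnit_iff_isUnit_det _).2 (isUnit_iff_ne_zero.2 h)
    have h4 : (M * Mᵀ).rank = 4 := by
      simpa using Matrix.rank_of_isUnit _ hu
    have hle : M.rank ≤ 4 := by
      simpa using Matrix.rank_le_card_height M
    have hge : (M * Mᵀ).rank ≤ M.rank := Matrix.rank_mul_le_left _ _
    omega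

/-- all (generalized) 4×4 minors of a rank ≤ 3 matrix vanish -/
lemma det_submatrix_zero (M : Matrix (Fin 4) (Fin 5) ℝ) (hM : M.rank ≤ 3)
    (f : Fin 4 → Fin 4) (g : Fin 4 → Fin 5) : (M.submatrix f g).det = 0 := by
  by_contra hdet
  have hu : IsUnit (M.submatrix f g) :=
    (Matrix.isUnit_iff_isUnit_det _).2 (isUnit_iff_ne_zero.2 hdet)
  have h4 : (M.submatrix f g).rank = 4 := by
    simpa using Matrix.rank_of_isUnit _ hu
  have hEq : M.submatrix f g =
      (Matrix.of fun (p : Fin 4) (q : Fin 4) => if q = f p then (1 : ℝ) else 0) *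
        (M * Matrix.of fun (j : Fin 5) (q : Fin 4) => if j = g q then (1 : ℝ) else 0) := by
    ext p q
    simp [Matrix.mul_apply, Matrix.submatrix_apply, ite_mul, mul_ite,
      Finset.sum_ite_eq, Finset.sum_ite_eq']
  have hle : (M.submatrix f g).rank ≤ M.rank := by
    rw [hEq]
    exact le_trans (Matrix.rank_mul_le_right _ _) (Matrix.rank_mul_le_left _ _)
  omega

lemma exists_fourth (h₀ h₁ h₂ : Fin 4) (h01 : h₀ ≠ h₁) (h02 : h₀ ≠ h₂) (h12 : h₁ ≠ h₂) :
    ∃ h₃ : Fin 4, h₃ ≠ h₀ ∧ h₃ ≠ h₁ ∧ h₃ ≠ h₂ := by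
  revert h01 h02 h12; revert h₀ h₁ h₂; decide

lemma exists_third (h₀ h₁ : Fin 4) (h01 : h₀ ≠ h₁) :
    ∃ h₂ : Fin 4, h₂ ≠ h₀ ∧ h₂ ≠ h₁ := by
  revert h01; revert h₀ h₁; decide

lemma fin4_cover (h₀ h₁ h₂ h₃ i : Fin 4) (h01 : h₀ ≠ h₁) (h02 : h₀ ≠ h₂) (h03 : h₀ ≠ h₃)
    (h12 : h₁ ≠ h₂) (h13 : h₁ ≠ h₃) (h23 : h₂ ≠ h₃) :
    i = h₀ ∨ i = h₁ ∨ i = h₂ ∨ i = h₃ := by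
  revert h01 h02 h03 h12 h13 h23; revert h₀ h₁ h₂ h₃ i; decide

/-- the 3×3 minor of `Amat` with rows `h₀ h₁ h₂` and columns `j₀ j₁ j₂` -/
def P3 (a : Fin 4 → Fin 3 → Fin 3 → (Fin 3 → ℝ) → ℝ) (h₀ h₁ h₂ : Fin 4)
    (j₀ j₁ j₂ : Fin 5) (x : Fin 3 → ℝ) : ℝ :=
  d3 (Amat a x h₀ j₀) (Amat a x h₀ j₁) (Amat a x h₀ j₂)
     (Amat a x h₁ j₀) (Amat a x h₁ j₁) (Amat a x h₁ j₂)
     (Amat a x h₂ j₀) (Amat a x h₂ j₁) (Amat a x h₂ j₂)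

/-- the 2×2 minor of `Amat` with rows `h₀ h₁` and columns `j₀ j₁` -/
def P2 (a : Fin 4 → Fin 3 → Fin 3 → (Fin 3 → ℝ) → ℝ) (h₀ h₁ : Fin 4)
    (j₀ j₁ : Fin 5) (x : Fin 3 → ℝ) : ℝ :=
  Amat a x h₀ j₀ * Amat a x h₁ j₁ - Amat a x h₀ j₁ * Amat a x h₁ j₀

section Main

variable (Ω : Set (Fin 3 → ℝ)) (a : Fin 4 → Fin 3 → Fin 3 → (Fin 3 → ℝ) → ℝ)

lemma Amat_smooth (hsmooth : ∀ h j k, ContDiffOn ℝ (⊤ : ℕ∞) (a h j k) Ω) :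
    ∀ h j, ContDiffOn ℝ (⊤ : ℕ∞) (fun x => Amat a x h j) Ω := by
  intro h j
  fin_cases j
  · exact (hsmooth h 2 2).sub (hsmooth h 0 0)
  · exact (hsmooth h 1 1).sub (hsmooth h 0 0)
  · exact hsmooth h 0 1
  · exact hsmooth h 0 2
  · exact hsmooth h 1 2

lemma P3_smooth (hsmooth : ∀ h j k, ContDiffOn ℝ (⊤ : ℕ∞) (a h j k) Ω)
    (h₀ h₁ h₂ : Fin 4) (j₀ j₁ j₂ : Fin 5) :
    ContDiffOn ℝ (⊤ : ℕ∞) (P3 a h₀ h₁ h₂ j₀ j₁ j₂) Ω := by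
  have hA := Amat_smooth Ω a hsmooth
  unfold P3 d3
  exact ((((hA h₀ j₀).mul (((hA h₁ j₁).mul (hA h₂ j₂)).sub
    ((hA h₁ j₂).mul (hA h₂ j₁)))).sub
    ((hA h₀ j₁).mul (((hA h₁ j₀).mul (hA h₂ j₂)).sub
    ((hA h₁ j₂).mul (hA h₂ j₀))))).add
    ((hA h₀ j₂).mul (((hA h₁ j₀).mul (hA h₂ j₁)).sub
    ((hA h₁ j₁).mul (hA h₂ j₀)))))

lemma P2_smooth (hsmooth : ∀ h j k, ContDiffOn ℝ (⊤ : ℕ∞) (a h j k) Ω)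
    (h₀ h₁ : Fin 4) (j₀ j₁ : Fin 5) :
    ContDiffOn ℝ (⊤ : ℕ∞) (P2 a h₀ h₁ j₀ j₁) Ω := by
  have hA := Amat_smooth Ω a hsmooth
  unfold P2
  exact ((hA h₀ j₀).mul (hA h₁ j₁)).sub ((hA h₀ j₁).mul (hA h₁ j₀))

/-- from a smooth, nowhere-vanishing left kernel of `Amat` on an open set,
build the data contradicting functional linear independence. -/
lemma key (hsym : ∀ h j k, a h j k = a h k j)
    (hsmooth : ∀ h j k, ContDiffOn ℝ (⊤ : ℕ∞) (a h j k) Ω)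
    (W : Set (Fin 3 → ℝ)) (hWo : IsOpen W) (hWne : W.Nonempty) (hWΩ : W ⊆ Ω)
    (cr : Fin 4 → (Fin 3 → ℝ) → ℝ)
    (hcrs : ∀ i, ContDiffOn ℝ (⊤ : ℕ∞) (cr i) W)
    (hcrnz : ∀ x ∈ W, ∃ i, cr i x ≠ 0)
    (hker : ∀ x ∈ W, ∀ j : Fin 5, ∑ i : Fin 4, cr i x * Amat a x i j = 0) :
    ∃ (O : Set (Fin 3 → ℝ)) (c : Fin 5 → (Fin 3 → ℝ) → ℝ),
      O.Nonempty ∧ IsOpen O ∧ O ⊆ Ω ∧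
      (∀ i, ContDiffOn ℝ (⊤ : ℕ∞) (c i) O) ∧
      (∀ x ∈ O, ∃ i, c i x ≠ 0) ∧
      (∀ x ∈ O, ∀ j k : Fin 3,
        ∑ h : Fin 4, c h.succ x * a h j k x
          = c 0 x * (if j = k then (1 : ℝ) else 0)) := by
  refine ⟨W, fun i => Fin.cases (fun x => ∑ h : Fin 4, cr h x * a h 0 0 x)
    (fun i x => cr i x) i, hWne, hWo, hWΩ, ?_, ?_, ?_⟩
  · intro i
    refine Fin.cases ?_ ?_ i
    · simp only [Fin.cases_zero]
      exact ContDiffOn.sum fun h _ => (hcrs h).mul ((hsmooth h 0 0).mono hWΩ)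
    · intro i
      simpa using hcrs i
  · intro x hx
    obtain ⟨i, hi⟩ := hcrnz x hx
    exact ⟨i.succ, by simpa using hi⟩
  · intro x hx j k
    simp only [Fin.cases_succ, Fin.cases_zero]
    have H0 := hker x hx 0
    have H1 := hker x hx 1
    have H2 := hker x hx 2
    have H3 := hker x hx 3
    have H4 := hker x hx 4
    have e0 : ∀ i : Fin 4, Amat a x i 0 = a i 2 2 x - a i 0 0 x := fun i => rfl
    have e1 : ∀ i : Fin 4, Amat a x i 1 = a i 1 1 x - a i 0 0 x := fun i => rfl
    have e2 : ∀ i : Fin 4, Amat a x i 2 = a i 0 1 x := fun i => rfl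
    have e3 : ∀ i : Fin 4, Amat a x i 3 = a i 0 2 x := fun i => rfl
    have e4 : ∀ i : Fin 4, Amat a x i 4 = a i 1 2 x := fun i => rfl
    simp only [e0, mul_sub, Finset.sum_sub_distrib] at H0
    simp only [e1, mul_sub, Finset.sum_sub_distrib] at H1
    simp only [e2] at H2
    simp only [e3] at H3
    simp only [e4] at H4
    have S22 : ∑ h : Fin 4, cr h x * a h 2 2 x = ∑ h : Fin 4, cr h x * a h 0 0 x :=
      sub_eq_zero.mp H0
    have S11 : ∑ h : Fin 4, cr h x * a h 1 1 x = ∑ h : Fin 4, cr h x * a h 0 0 x :=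
      sub_eq_zero.mp H1
    have hs10 : ∀ h : Fin 4, a h 1 0 x = a h 0 1 x := fun h => by rw [hsym h 0 1]
    have hs20 : ∀ h : Fin 4, a h 2 0 x = a h 0 2 x := fun h => by rw [hsym h 0 2]
    have hs21 : ∀ h : Fin 4, a h 2 1 x = a h 1 2 x := fun h => by rw [hsym h 1 2]
    fin_cases j <;> fin_cases k <;>
      norm_num [Fin.zero_eta, Fin.mk_one, show (⟨2, by omega⟩ : Fin 3) = 2 from rfl,
        hs10, hs20, hs21]
    · exact H2
    · exact H3
    · exact H2
    · exact S11
    · exact H4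
    · exact H3
    · exact H4
    · exact S22

/-- if `Amat a` has rank at most 3 on a nonempty open subset of `Ω`, then functional
linear independence fails -/
lemma dense_step (hsym : ∀ h j k, a h j k = a h k j)
    (hsmooth : ∀ h j k, ContDiffOn ℝ (⊤ : ℕ∞) (a h j k) Ω)
    (B : Set (Fin 3 → ℝ)) (hBo : IsOpen B) (hBne : B.Nonempty) (hBΩ : B ⊆ Ω)
    (hB3 : ∀ x ∈ B, (Amat a x).rank ≤ 3) :
    ∃ (O : Set (Fin 3 → ℝ)) (c : Fin 5 → (Fin 3 → ℝ) → ℝ),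
      O.Nonempty ∧ IsOpen O ∧ O ⊆ Ω ∧
      (∀ i, ContDiffOn ℝ (⊤ : ℕ∞) (c i) O) ∧
      (∀ x ∈ O, ∃ i, c i x ≠ 0) ∧
      (∀ x ∈ O, ∀ j k : Fin 3,
        ∑ h : Fin 4, c h.succ x * a h j k x
          = c 0 x * (if j = k then (1 : ℝ) else 0)) := by
  have hA := Amat_smooth Ω a hsmooth
  by_cases C3 : ∃ x ∈ B, ∃ h₀ h₁ h₂ : Fin 4, ∃ j₀ j₁ j₂ : Fin 5,
      P3 a h₀ h₁ h₂ j₀ j₁ j₂ x ≠ 0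
  · obtain ⟨x₀, hx₀, h₀, h₁, h₂, j₀, j₁, j₂, hD⟩ := C3
    have h01 : h₀ ≠ h₁ := by rintro rfl; exact hD (by simp only [P3, d3]; ring)
    have h02 : h₀ ≠ h₂ := by rintro rfl; exact hD (by simp only [P3, d3]; ring)
    have h12 : h₁ ≠ h₂ := by rintro rfl; exact hD (by simp only [P3, d3]; ring)
    obtain ⟨h₃, h30, h31, h32⟩ := exists_fourth h₀ h₁ h₂ h01 h02 h12
    set W := B ∩ P3 a h₀ h₁ h₂ j₀ j₁ j₂ ⁻¹' {(0 : ℝ)}ᶜ with hW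
    have hWo : IsOpen W :=
      ContinuousOn.isOpen_inter_preimage
        (((P3_smooth Ω a hsmooth h₀ h₁ h₂ j₀ j₁ j₂).mono hBΩ).continuousOn) hBo
        isOpen_compl_singleton
    have hWB : W ⊆ B := Set.inter_subset_left
    refine key Ω a hsym hsmooth W hWo ⟨x₀, hx₀, hD⟩ (hWB.trans hBΩ)
      (fun i x => if i = h₀ then -(P3 a h₁ h₂ h₃ j₀ j₁ j₂ x)
        else if i = h₁ then P3 a h₀ h₂ h₃ j₀ j₁ j₂ x
        else if i = h₂ then -(P3 a h₀ h₁ h₃ j₀ j₁ j₂ x)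
        else if i = h₃ then P3 a h₀ h₁ h₂ j₀ j₁ j₂ x else 0) ?_ ?_ ?_
    · intro i
      have hWΩ : W ⊆ Ω := hWB.trans hBΩ
      split_ifs
      · exact ((P3_smooth Ω a hsmooth h₁ h₂ h₃ j₀ j₁ j₂).mono hWΩ).neg
      · exact (P3_smooth Ω a hsmooth h₀ h₂ h₃ j₀ j₁ j₂).mono hWΩ
      · exact ((P3_smooth Ω a hsmooth h₀ h₁ h₃ j₀ j₁ j₂).mono hWΩ).neg
      · exact (P3_smooth Ω a hsmooth h₀ h₁ h₂ j₀ j₁ j₂).mono hWΩ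
      · exact contDiffOn_const
    · intro x hx
      refine ⟨h₃, ?_⟩
      simp only [h30, h31, h32, eq_self_iff_true, if_true, if_false]
      exact hx.2
    · intro x hx j
      have hxB : x ∈ B := hx.1
      have h4 := det_submatrix_zero (Amat a x) (hB3 x hxB) ![h₀, h₁, h₂, h₃] ![j₀, j₁, j₂, j]
      rw [det4_cof] at h4
      simp only [Matrix.submatrix_apply, Matrix.cons_val_zero, Matrix.cons_val_one,
        Matrix.head_cons, Matrix.cons_val_two, Matrix.cons_val_three, Matrix.tail_cons,
        Matrix.head_cons] at h4
      have huniv : (Finset.univ : Finset (Fin 4)) = {h₀, h₁, h₂, h₃} := by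
        symm
        apply Finset.eq_univ_iff_forall.mpr
        intro i
        rcases fin4_cover h₀ h₁ h₂ h₃ i h01 h02 (Ne.symm h30) h12 (Ne.symm h31) (Ne.symm h32)
          with rfl | rfl | rfl | rfl <;> simp
      rw [huniv, Finset.sum_insert (by simp [h01, h02, Ne.symm h30]),
        Finset.sum_insert (by simp [h12, Ne.symm h31]),
        Finset.sum_insert (by simp [Ne.symm h32]), Finset.sum_singleton]
      simp only [eq_self_iff_true, if_true, Ne.symm h01, Ne.symm h02, Ne.symm h12,
        h30, h31, h32, if_false]
      simp only [P3, d3]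
      simp only [d3] at h4
      linear_combination h4
  · push_neg at C3
    by_cases C2 : ∃ x ∈ B, ∃ h₀ h₁ : Fin 4, ∃ j₀ j₁ : Fin 5, P2 a h₀ h₁ j₀ j₁ x ≠ 0
    · obtain ⟨x₀, hx₀, h₀, h₁, j₀, j₁, hD⟩ := C2
      have h01 : h₀ ≠ h₁ := by rintro rfl; exact hD (by simp only [P2]; ring)
      obtain ⟨h₂, h20, h21⟩ := exists_third h₀ h₁ h01
      set W := B ∩ P2 a h₀ h₁ j₀ j₁ ⁻¹' {(0 : ℝ)}ᶜ with hW
      have hWo : IsOpen W :=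
        ContinuousOn.isOpen_inter_preimage
          (((P2_smooth Ω a hsmooth h₀ h₁ j₀ j₁).mono hBΩ).continuousOn) hBo
          isOpen_compl_singleton
      have hWB : W ⊆ B := Set.inter_subset_left
      refine key Ω a hsym hsmooth W hWo ⟨x₀, hx₀, hD⟩ (hWB.trans hBΩ)
        (fun i x => if i = h₀ then P2 a h₁ h₂ j₀ j₁ x
          else if i = h₁ then -(P2 a h₀ h₂ j₀ j₁ x)
          else if i = h₂ then P2 a h₀ h₁ j₀ j₁ x else 0) ?_ ?_ ?_
      · intro i
        have hWΩ : W ⊆ Ω := hWB.trans hBΩ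
        split_ifs
        · exact (P2_smooth Ω a hsmooth h₁ h₂ j₀ j₁).mono hWΩ
        · exact ((P2_smooth Ω a hsmooth h₀ h₂ j₀ j₁).mono hWΩ).neg
        · exact (P2_smooth Ω a hsmooth h₀ h₁ j₀ j₁).mono hWΩ
        · exact contDiffOn_const
      · intro x hx
        refine ⟨h₂, ?_⟩
        simp only [h20, h21, eq_self_iff_true, if_true, if_false]
        exact hx.2
      · intro x hx j
        have hxB : x ∈ B := hx.1
        have h3 := C3 x hxB h₀ h₁ h₂ j₀ j₁ j
        rw [← Finset.sum_subset (Finset.subset_univ ({h₀, h₁, h₂} : Finset (Fin 4)))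
          (by
            intro i _ hi
            simp only [Finset.mem_insert, Finset.mem_singleton, not_or] at hi
            simp only [if_neg hi.1, if_neg hi.2.1, if_neg hi.2.2, zero_mul])]
        rw [Finset.sum_insert (by simp [h01, Ne.symm h20]),
          Finset.sum_insert (by simp [Ne.symm h21]), Finset.sum_singleton]
        simp only [eq_self_iff_true, if_true, Ne.symm h01, h20, h21, if_false]
        simp only [P2]
        simp only [P3, d3] at h3
        linear_combination h3
    · push_neg at C2
      by_cases C1 : ∃ x ∈ B, ∃ h₀ : Fin 4, ∃ j₀ : Fin 5, Amat a x h₀ j₀ ≠ 0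
      · obtain ⟨x₀, hx₀, h₀, j₀, hD⟩ := C1
        obtain ⟨h₁, h10⟩ := exists_ne h₀
        set W := B ∩ (fun x => Amat a x h₀ j₀) ⁻¹' {(0 : ℝ)}ᶜ with hW
        have hWo : IsOpen W :=
          ContinuousOn.isOpen_inter_preimage
            (((hA h₀ j₀).mono hBΩ).continuousOn) hBo isOpen_compl_singleton
        have hWB : W ⊆ B := Set.inter_subset_left
        refine key Ω a hsym hsmooth W hWo ⟨x₀, hx₀, hD⟩ (hWB.trans hBΩ)
          (fun i x => if i = h₀ then -(Amat a x h₁ j₀)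
            else if i = h₁ then Amat a x h₀ j₀ else 0) ?_ ?_ ?_
        · intro i
          have hWΩ : W ⊆ Ω := hWB.trans hBΩ
          split_ifs
          · exact ((hA h₁ j₀).mono hWΩ).neg
          · exact (hA h₀ j₀).mono hWΩ
          · exact contDiffOn_const
        · intro x hx
          refine ⟨h₁, ?_⟩
          simp only [h10, eq_self_iff_true, if_true, if_false]
          exact hx.2
        · intro x hx j
          have hxB : x ∈ B := hx.1
          have h2 := C2 x hxB h₀ h₁ j₀ j
          rw [← Finset.sum_subset (Finset.subset_univ ({h₀, h₁} : Finset (Fin 4)))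
            (by
              intro i _ hi
              simp only [Finset.mem_insert, Finset.mem_singleton, not_or] at hi
              simp only [if_neg hi.1, if_neg hi.2, zero_mul])]
          rw [Finset.sum_insert (by simp [Ne.symm h10]), Finset.sum_singleton]
          simp only [eq_self_iff_true, if_true, h10, if_false]
          simp only [P2] at h2
          linear_combination h2
      · push_neg at C1
        refine key Ω a hsym hsmooth B hBo hBne hBΩ
          (fun i _ => if i = 0 then (1 : ℝ) else 0) ?_ ?_ ?_
        · intro i
          split_ifs
          · exact contDiffOn_const
          · exact contDiffOn_const
        · intro x hx
          exact ⟨0, by norm_num⟩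
        · intro x hx j
          rw [Fin.sum_univ_four]
          norm_num [C1 x hx]

end Main

/-- If the four second-order conformal symmetries (with quadratic parts `a₍ₕ₎`)
together with the Hamiltonian are functionally linearly independent, then the
matrix `A(x)` has rank 4 for general `x`, i.e. on an open dense subset of `Ω`. -/
theorem rank_four_generic
    (Ω : Set (Fin 3 → ℝ)) (hΩ : IsOpen Ω)
    (a : Fin 4 → Fin 3 → Fin 3 → (Fin 3 → ℝ) → ℝ)
    (hsym : ∀ h j k, a h j k = a h k j)
    (hsmooth : ∀ h j k, ContDiffOn ℝ (⊤ : ℕ∞) (a h j k) Ω)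
    -- functional linear independence: no nonempty open O ⊆ Ω carries smooth,
    -- nowhere-vanishing coefficients c₀,…,c₄ with Σₕ cₕ a^{jk}_{(h)} = c₀ δ^{jk}
    (hind : ¬ ∃ (O : Set (Fin 3 → ℝ)) (c : Fin 5 → (Fin 3 → ℝ) → ℝ),
      O.Nonempty ∧ IsOpen O ∧ O ⊆ Ω ∧
      (∀ i, ContDiffOn ℝ (⊤ : ℕ∞) (c i) O) ∧
      (∀ x ∈ O, ∃ i, c i x ≠ 0) ∧
      (∀ x ∈ O, ∀ j k : Fin 3,
        ∑ h : Fin 4, c h.succ x * a h j k x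
          = c 0 x * (if j = k then (1 : ℝ) else 0))) :
    IsOpen {x | x ∈ Ω ∧ (Amat a x).rank = 4} ∧
      Ω ⊆ closure {x | x ∈ Ω ∧ (Amat a x).rank = 4} := by
  have hA := Amat_smooth Ω a hsmooth
  have hG : ContinuousOn (fun x => (Amat a x) * (Amat a x)ᵀ) Ω := by
    apply continuousOn_pi.mpr
    intro i
    apply continuousOn_pi.mpr
    intro j
    have : ∀ x, (Amat a x * (Amat a x)ᵀ) i j
        = ∑ k : Fin 5, Amat a x i k * Amat a x j k := by
      intro x
      simp [Matrix.mul_apply, Matrix.transpose_apply]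
    simp only [this]
    exact continuousOn_finset_sum _ fun k _ =>
      ((hA i k).continuousOn).mul ((hA j k).continuousOn)
  have hdet : Continuous fun m : Matrix (Fin 4) (Fin 4) ℝ => m.det :=
    Continuous.matrix_det continuous_id
  have hfc : ContinuousOn (fun x => ((Amat a x) * (Amat a x)ᵀ).det) Ω :=
    hdet.comp_continuousOn hG
  have hSeq : {x | x ∈ Ω ∧ (Amat a x).rank = 4}
      = Ω ∩ (fun x => ((Amat a x) * (Amat a x)ᵀ).det) ⁻¹' {(0 : ℝ)}ᶜ := by
    ext x
    simp only [Set.mem_setOf_eq, Set.mem_inter_iff, Set.mem_preimage, Set.mem_compl_iff,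
      Set.mem_singleton_iff, rank_four_iff]
  constructor
  · rw [hSeq]
    exact hfc.isOpen_inter_preimage hΩ isOpen_compl_singleton
  · intro x₀ hx₀
    by_contra hcl
    rw [mem_closure_iff] at hcl
    push_neg at hcl
    obtain ⟨U, hUo, hx₀U, hU⟩ := hcl
    have hBne : (U ∩ Ω).Nonempty := ⟨x₀, hx₀U, hx₀⟩
    have hB3 : ∀ x ∈ U ∩ Ω, (Amat a x).rank ≤ 3 := by
      intro x hx
      have h4 : (Amat a x).rank ≤ 4 := by
        simpa using Matrix.rank_le_card_height (Amat a x)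
      have hne : (Amat a x).rank ≠ 4 := by
        intro hr
        exact Set.eq_empty_iff_forall_notMem.mp hU x ⟨hx.1, hx.2, hr⟩
      omega
    exact hind (dense_step Ω a hsym hsmooth (U ∩ Ω) (hUo.inter hΩ) hBne
      Set.inter_subset_right hB3)
end
end

section
/- Fix an integer n ≥ 2 and constants a₁,…,aₙ ∈ ℂ. For the inversion operator (Iψ)(x) = r^{2−n} ψ(x/r²): (a) I is an involution, I(Iψ) = ψ on Ω for every smooth ψ : Ω → ℂ; (b) for every smooth ψ : Ω → ℂ and every x ∈ Ω, H(Iψ)(x) = |x|^{−n−2} (Hψ)(x/|x|²); consequently, if Hψ = 0 on Ω then H(Iψ) = 0 on Ω (inversion maps solutions of the Laplace equation with inverse-square potentials to solutions). -/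
noncomputable section

/-- The domain `Ω = {x ∈ ℝⁿ : x ≠ 0 and xⱼ ≠ 0 for all j}`. -/
def Omega (n : ℕ) : Set (Fin n → ℝ) := {x | x ≠ 0 ∧ ∀ j, x j ≠ 0}

/-- Partial derivative `∂ⱼ f`. -/
def pd {n : ℕ} (j : Fin n) (f : (Fin n → ℝ) → ℂ) (x : Fin n → ℝ) : ℂ :=
  fderiv ℝ f x (Pi.single j 1)

/-- `r² = Σⱼ xⱼ²`. -/
def r2 {n : ℕ} (x : Fin n → ℝ) : ℝ := ∑ j, (x j) ^ 2

/-- The Euler operator `E = Σⱼ xⱼ ∂ⱼ`. -/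
def Eop {n : ℕ} (f : (Fin n → ℝ) → ℂ) (x : Fin n → ℝ) : ℂ :=
  ∑ j, (x j : ℂ) * pd j f x

/-- The Hamiltonian `Hf = Σⱼ (∂ⱼ²f + (aⱼ/xⱼ²) f)`. -/
def Hop {n : ℕ} (a : Fin n → ℂ) (f : (Fin n → ℝ) → ℂ) (x : Fin n → ℝ) : ℂ :=
  ∑ j, (pd j (pd j f) x + (a j / (x j : ℂ) ^ 2) * f x)

/-- The dilation operator `Df = −Ef − ((n−2)/2) f`. -/
def Dop {n : ℕ} (f : (Fin n → ℝ) → ℂ) (x : Fin n → ℝ) : ℂ :=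
  -Eop f x - (((n : ℂ) - 2) / 2) * f x

/-- `Pⱼf = ∂ⱼ²f + (aⱼ/xⱼ²) f`. -/
def Pop {n : ℕ} (a : Fin n → ℂ) (j : Fin n) (f : (Fin n → ℝ) → ℂ)
    (x : Fin n → ℝ) : ℂ :=
  pd j (pd j f) x + (a j / (x j : ℂ) ^ 2) * f x

/-- The rotation `xⱼ∂ₖ − xₖ∂ⱼ`. -/
def rot {n : ℕ} (j k : Fin n) (f : (Fin n → ℝ) → ℂ) (x : Fin n → ℝ) : ℂ :=
  (x j : ℂ) * pd k f x - (x k : ℂ) * pd j f x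

/-- `J_{jk}f = (xⱼ∂ₖ − xₖ∂ⱼ)²f + (aⱼxₖ²/xⱼ² + aₖxⱼ²/xₖ²) f`. -/
def Jop {n : ℕ} (a : Fin n → ℂ) (j k : Fin n) (f : (Fin n → ℝ) → ℂ)
    (x : Fin n → ℝ) : ℂ :=
  rot j k (rot j k f) x
    + (a j * (x k : ℂ) ^ 2 / (x j : ℂ) ^ 2
        + a k * (x j : ℂ) ^ 2 / (x k : ℂ) ^ 2) * f x

/-- `Mⱼf = (n−2)xⱼ f − r² ∂ⱼf + 2xⱼ Ef`. -/
def Mop {n : ℕ} (j : Fin n) (f : (Fin n → ℝ) → ℂ) (x : Fin n → ℝ) : ℂ :=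
  ((n : ℂ) - 2) * (x j : ℂ) * f x - (r2 x : ℂ) * pd j f x
    + 2 * (x j : ℂ) * Eop f x

/-- `Kⱼf = Mⱼ(Mⱼf) + (aⱼ r⁴/xⱼ²) f`. -/
def Kop {n : ℕ} (a : Fin n → ℂ) (j : Fin n) (f : (Fin n → ℝ) → ℂ)
    (x : Fin n → ℝ) : ℂ :=
  Mop j (Mop j f) x + (a j * (r2 x : ℂ) ^ 2 / (x j : ℂ) ^ 2) * f x

/-- The inversion (Kelvin-type) operator `(Iψ)(x) = r^{2−n} ψ(x/r²)`,
with `r^{2−n} = (r²)^{(2−n)/2}`. -/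
def Iop {n : ℕ} (f : (Fin n → ℝ) → ℂ) (x : Fin n → ℝ) : ℂ :=
  (((r2 x) ^ (((2 : ℝ) - (n : ℝ)) / 2) : ℝ) : ℂ) * f ((r2 x)⁻¹ • x)

namespace Kelvin

variable {n : ℕ}

lemma r2_nonneg (x : Fin n → ℝ) : 0 ≤ r2 x :=
  Finset.sum_nonneg fun j _ => sq_nonneg _

lemma r2_pos {x : Fin n → ℝ} (hx : x ≠ 0) : 0 < r2 x := by
  obtain ⟨j, hj⟩ := Function.ne_iff.1 hx
  have : 0 < x j ^ 2 := (sq_nonneg _).lt_of_ne (Ne.symm (pow_ne_zero 2 hj))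
  exact lt_of_lt_of_le this (Finset.single_le_sum (f := fun j => x j ^ 2)
    (fun i _ => sq_nonneg _) (Finset.mem_univ j))

lemma isOpen_Omega : IsOpen (Omega n) := by
  have : Omega n = {x : Fin n → ℝ | x ≠ 0} ∩ ⋂ j, {x | x j ≠ 0} := by
    ext x; simp [Omega, Set.mem_iInter]
  rw [this]
  exact isOpen_ne.inter (isOpen_iInter_of_finite fun j =>
    isOpen_ne.preimage (continuous_apply j))

def hmap (x : Fin n → ℝ) : Fin n → ℝ := (r2 x)⁻¹ • x

lemma r2_smul (t : ℝ) (x : Fin n → ℝ) : r2 (t • x) = t ^ 2 * r2 x := by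
  simp [r2, Finset.mul_sum, mul_pow]

lemma r2_hmap {x : Fin n → ℝ} (hx : x ≠ 0) : r2 (hmap x) = (r2 x)⁻¹ := by
  have h := (r2_pos hx).ne'
  rw [hmap, r2_smul]
  field_simp

lemma hmap_mem {x : Fin n → ℝ} (hx : x ∈ Omega n) : hmap x ∈ Omega n := by
  obtain ⟨hx0, hxj⟩ := hx
  have hs := (r2_pos hx0).ne'
  constructor
  · intro h
    have : r2 (hmap x) = 0 := by rw [h]; simp [r2]
    rw [r2_hmap hx0] at this
    exact hs (inv_eq_zero.1 this) |>.elim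
  · intro j
    simp only [hmap, Pi.smul_apply, smul_eq_mul]
    exact mul_ne_zero (inv_ne_zero hs) (hxj j)

lemma hmap_hmap {x : Fin n → ℝ} (hx : x ≠ 0) : hmap (hmap x) = x := by
  have hs := (r2_pos hx).ne'
  rw [hmap, r2_hmap hx, hmap, smul_smul, inv_inv, mul_inv_cancel₀ hs, one_smul]


/-! ### Derivative infrastructure -/

def r2' (x : Fin n → ℝ) : (Fin n → ℝ) →L[ℝ] ℝ :=
  ∑ j, (2 * x j) • ContinuousLinearMap.proj j

lemma r2'_single (x : Fin n → ℝ) (i : Fin n) : r2' x (Pi.single i 1) = 2 * x i := by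
  simp [r2', ContinuousLinearMap.sum_apply, Pi.single_apply, Finset.sum_ite_eq',
    ContinuousLinearMap.proj_apply]

lemma hasFDerivAt_r2 (x : Fin n → ℝ) : HasFDerivAt r2 (r2' x) x := by
  have h : ∀ j : Fin n, HasFDerivAt (fun y : Fin n → ℝ => y j ^ 2)
      ((2 * x j) • (ContinuousLinearMap.proj j : (Fin n → ℝ) →L[ℝ] ℝ)) x := by
    intro j
    have h0 : HasFDerivAt (fun y : Fin n → ℝ => y j)
        (ContinuousLinearMap.proj j : (Fin n → ℝ) →L[ℝ] ℝ) x :=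
      (ContinuousLinearMap.proj j : (Fin n → ℝ) →L[ℝ] ℝ).hasFDerivAt
    have h2 : (fun y : Fin n → ℝ => y j ^ 2) = fun y => y j * y j := by
      funext y; ring
    rw [h2, two_mul, add_smul]
    exact h0.mul h0
  have := HasFDerivAt.fun_sum (fun j (_ : j ∈ Finset.univ) => h j)
  exact this

lemma hasFDerivAt_rpow_r2 {x : Fin n → ℝ} (hx : x ≠ 0) (t : ℝ) :
    HasFDerivAt (fun y => r2 y ^ t) ((t * r2 x ^ (t - 1)) • r2' x) x :=
  (Real.hasDerivAt_rpow_const (Or.inl (r2_pos hx).ne')).comp_hasFDerivAt x (hasFDerivAt_r2 x)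

def hmap' (x : Fin n → ℝ) : (Fin n → ℝ) →L[ℝ] (Fin n → ℝ) :=
  (r2 x)⁻¹ • ContinuousLinearMap.id ℝ (Fin n → ℝ)
    + (-((r2 x ^ 2)⁻¹ • r2' x)).smulRight x

lemma hasFDerivAt_hmap {x : Fin n → ℝ} (hx : x ≠ 0) : HasFDerivAt hmap (hmap' x) x := by
  have h1 : HasFDerivAt (fun y : Fin n → ℝ => (r2 y)⁻¹) (-((r2 x ^ 2)⁻¹ • r2' x)) x := by
    have := (hasDerivAt_inv (r2_pos hx).ne').comp_hasFDerivAt x (hasFDerivAt_r2 x)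
    simpa [Function.comp_def] using this
  exact h1.smul (hasFDerivAt_id x)

lemma hmap'_single (x : Fin n → ℝ) (i : Fin n) :
    hmap' x (Pi.single i 1)
      = (r2 x)⁻¹ • (Pi.single i 1 : Fin n → ℝ) + (-(r2 x ^ 2)⁻¹ * (2 * x i)) • x := by
  simp [hmap', r2'_single, ContinuousLinearMap.smulRight_apply]

lemma clm_apply_sum (φ : (Fin n → ℝ) →L[ℝ] ℂ) (v : Fin n → ℝ) :
    φ v = ∑ l, (v l : ℂ) * φ (Pi.single l 1) := by
  conv_lhs => rw [← Finset.univ_sum_single v, map_sum]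
  refine Finset.sum_congr rfl fun l _ => ?_
  have h : Pi.single l (v l) = v l • (Pi.single l 1 : Fin n → ℝ) := by
    ext m; by_cases h : m = l <;> simp [Pi.single_apply, h]
  rw [h, map_smul, Complex.real_smul]

/-- entries of the Jacobian of `hmap`. -/
def dh (x : Fin n → ℝ) (i l : Fin n) : ℝ :=
  (if l = i then (r2 x)⁻¹ else 0) - 2 * x i * x l * ((r2 x) ^ 2)⁻¹

lemma pd_comp {g : (Fin n → ℝ) → ℂ} {x : Fin n → ℝ} (hx : x ≠ 0)
    (hg : DifferentiableAt ℝ g (hmap x)) (i : Fin n) :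
    pd i (fun y => g (hmap y)) x = ∑ l, (dh x i l : ℂ) * pd l g (hmap x) := by
  have H : HasFDerivAt (fun y => g (hmap y))
      ((fderiv ℝ g (hmap x)).comp (hmap' x)) x :=
    hg.hasFDerivAt.comp x (hasFDerivAt_hmap hx)
  have hfd : pd i (fun y => g (hmap y)) x
      = fderiv ℝ g (hmap x) (hmap' x (Pi.single i 1)) := by
    rw [pd, H.fderiv]; rfl
  rw [hfd, hmap'_single, map_add, map_smul, map_smul,
    clm_apply_sum (fderiv ℝ g (hmap x)) x]
  have hsingle : (fderiv ℝ g (hmap x)) (Pi.single i 1) = pd i g (hmap x) := rfl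
  rw [hsingle]
  have key : ∀ l : Fin n, (↑(dh x i l) : ℂ) * pd l g (hmap x)
      = (if l = i then ((r2 x : ℂ))⁻¹ * pd l g (hmap x) else 0)
        + (-(((r2 x : ℂ)) ^ 2)⁻¹ * (2 * (x i : ℂ))) * ((x l : ℂ) * pd l g (hmap x)) := by
    intro l; simp only [dh]; split <;> push_cast <;> ring
  rw [Finset.sum_congr rfl fun l _ => key l, Finset.sum_add_distrib,
    Finset.sum_ite_eq', ← Finset.mul_sum]
  simp only [Finset.mem_univ, if_true, Complex.real_smul]
  push_cast
  ring_nf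
  rfl


/-! ### pd algebra -/

lemma pd_rmul {x : Fin n → ℝ} {φ : (Fin n → ℝ) → ℝ} {φ' : (Fin n → ℝ) →L[ℝ] ℝ}
    (hφ : HasFDerivAt φ φ' x) {g : (Fin n → ℝ) → ℂ} (hg : DifferentiableAt ℝ g x)
    (i : Fin n) :
    pd i (fun y => (φ y : ℂ) * g y) x
      = ((φ' (Pi.single i 1) : ℝ) : ℂ) * g x + ((φ x : ℝ) : ℂ) * pd i g x := by
  have hφc : HasFDerivAt (fun y => ((φ y : ℝ) : ℂ)) (Complex.ofRealCLM.comp φ') x :=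
    Complex.ofRealCLM.hasFDerivAt.comp x hφ
  have H : HasFDerivAt (fun y => ((φ y : ℝ) : ℂ) * g y) _ x := hφc.mul hg.hasFDerivAt
  rw [pd, H.fderiv]
  simp only [ContinuousLinearMap.add_apply, ContinuousLinearMap.smul_apply,
    ContinuousLinearMap.comp_apply, Complex.ofRealCLM_apply, smul_eq_mul]
  rw [pd]
  ring

lemma pd_add {x : Fin n → ℝ} {f g : (Fin n → ℝ) → ℂ}
    (hf : DifferentiableAt ℝ f x) (hg : DifferentiableAt ℝ g x) (i : Fin n) :
    pd i (fun y => f y + g y) x = pd i f x + pd i g x := by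
  rw [pd, fderiv_fun_add hf hg]; rfl

lemma pd_sum {x : Fin n → ℝ} {f : Fin n → (Fin n → ℝ) → ℂ}
    (h : ∀ k, DifferentiableAt ℝ (f k) x) (i : Fin n) :
    pd i (fun y => ∑ k, f k y) x = ∑ k, pd i (f k) x := by
  rw [pd, fderiv_fun_sum fun k _ => h k]
  simp only [ContinuousLinearMap.sum_apply]
  rfl

/-! ### smoothness helpers -/

lemma contDiffAt_of_mem {ψ : (Fin n → ℝ) → ℂ} (hψ : ContDiffOn ℝ (⊤ : ℕ∞) ψ (Omega n))
    {x : Fin n → ℝ} (hx : x ∈ Omega n) : ContDiffAt ℝ (⊤ : ℕ∞) ψ x :=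
  hψ.contDiffAt (isOpen_Omega.mem_nhds hx)

lemma contDiffAt_pd {ψ : (Fin n → ℝ) → ℂ} {x : Fin n → ℝ}
    (hψ : ContDiffAt ℝ (⊤ : ℕ∞) ψ x) (k : Fin n) : ContDiffAt ℝ (⊤ : ℕ∞) (pd k ψ) x := by
  have h1 : ContDiffAt ℝ (⊤ : ℕ∞) (fderiv ℝ ψ) x := hψ.fderiv_right (by simp)
  exact h1.clm_apply contDiffAt_const

lemma diff_comp_hmap {x : Fin n → ℝ} {g : (Fin n → ℝ) → ℂ}
    (hg : DifferentiableAt ℝ g (hmap x)) (hx : x ≠ 0) :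
    DifferentiableAt ℝ (fun y => g (hmap y)) x :=
  hg.comp x (hasFDerivAt_hmap hx).differentiableAt

/-! ### rpow helpers -/

lemma rpow_mul_rpow {s : ℝ} (hs : 0 < s) (t u : ℝ) : s ^ t * s ^ u = s ^ (t + u) :=
  (Real.rpow_add hs t u).symm

lemma rpow_inv_eq {s : ℝ} (hs : 0 < s) (t : ℝ) : s ^ t * s⁻¹ = s ^ (t - 1) := by
  rw [← Real.rpow_neg_one s, rpow_mul_rpow hs]; ring_nf

lemma rpow_sqinv_eq {s : ℝ} (hs : 0 < s) (t : ℝ) : s ^ t * ((s ^ 2)⁻¹) = s ^ (t - 2) := by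
  have h2 : ((s : ℝ) ^ 2)⁻¹ = s ^ (-2 : ℝ) := by
    rw [← Real.rpow_natCast s 2, ← Real.rpow_neg hs.le]; norm_num
  rw [h2, rpow_mul_rpow hs]; ring_nf

/-- the Kelvin exponent `c = (2-n)/2`. -/
def cE (n : ℕ) : ℝ := ((2 : ℝ) - (n : ℝ)) / 2

/-! ### first derivative of the Kelvin transform -/

lemma pd_Iop {ψ : (Fin n → ℝ) → ℂ} (hψ : ContDiffOn ℝ (⊤ : ℕ∞) ψ (Omega n)) (j : Fin n)
    {x : Fin n → ℝ} (hx : x ∈ Omega n) :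
    pd j (Iop ψ) x
      = ((2 * cE n * x j * r2 x ^ (cE n - 1) : ℝ) : ℂ) * ψ (hmap x)
        + ∑ k, (((if k = j then r2 x ^ (cE n - 1) else 0)
            - 2 * x j * x k * r2 x ^ (cE n - 2) : ℝ) : ℂ) * pd k ψ (hmap x) := by
  have hx0 : x ≠ 0 := hx.1
  have hs := r2_pos hx0
  have hgd : DifferentiableAt ℝ ψ (hmap x) :=
    (contDiffAt_of_mem hψ (hmap_mem hx)).differentiableAt (by simp)
  have hI : Iop ψ = fun y => ((r2 y ^ cE n : ℝ) : ℂ) * ψ (hmap y) := rfl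
  rw [hI, pd_rmul (hasFDerivAt_rpow_r2 hx0 (cE n)) (diff_comp_hmap hgd hx0) j,
    pd_comp hx0 hgd j]
  have hco : ∀ l, r2 x ^ cE n * dh x j l
      = (if l = j then r2 x ^ (cE n - 1) else 0) - 2 * x j * x l * r2 x ^ (cE n - 2) := by
    intro l
    have e2 : r2 x ^ cE n * (2 * x j * x l * ((r2 x ^ 2)⁻¹))
        = 2 * x j * x l * r2 x ^ (cE n - 2) := by
      rw [← rpow_sqinv_eq hs]; ring
    simp only [dh, mul_sub, mul_ite, mul_zero, rpow_inv_eq hs, e2]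
  rw [Finset.mul_sum]
  congr 1
  · simp only [ContinuousLinearMap.coe_smul', Pi.smul_apply, r2'_single, smul_eq_mul]
    push_cast; ring
  · refine Finset.sum_congr rfl fun l _ => ?_
    rw [← mul_assoc, ← Complex.ofReal_mul, hco l]


/-! ### second derivative of the Kelvin transform -/

set_option maxHeartbeats 1000000 in
lemma pd2_Iop {ψ : (Fin n → ℝ) → ℂ} (hψ : ContDiffOn ℝ (⊤ : ℕ∞) ψ (Omega n)) (j : Fin n)
    {x : Fin n → ℝ} (hx : x ∈ Omega n) :
    pd j (pd j (Iop ψ)) x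
      = ((2 * cE n * r2 x ^ (cE n - 1)
            + 4 * cE n * (cE n - 1) * x j ^ 2 * r2 x ^ (cE n - 2) : ℝ) : ℂ) * ψ (hmap x)
        + ∑ k, (((2 * cE n * x j * r2 x ^ (cE n - 1)) * dh x j k
            + (if k = j then 2 * (cE n - 1) * x j * r2 x ^ (cE n - 2) else 0)
            - (4 * (cE n - 2) * x j ^ 2 * x k * r2 x ^ (cE n - 3)
               + 2 * x k * r2 x ^ (cE n - 2)
               + (if k = j then 2 * x j * r2 x ^ (cE n - 2) else 0)) : ℝ) : ℂ)
              * pd k ψ (hmap x)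
        + ∑ k, ∑ l, ((((if k = j then r2 x ^ (cE n - 1) else 0)
              - 2 * x j * x k * r2 x ^ (cE n - 2)) * dh x j l : ℝ) : ℂ)
              * pd l (pd k ψ) (hmap x) := by
  have hx0 : x ≠ 0 := hx.1
  have hs := r2_pos hx0
  have hev : (fun y => (fun y => ((2 * cE n * y j * r2 y ^ (cE n - 1) : ℝ) : ℂ) * ψ (hmap y)) y + (fun y => ∑ k, (((if k = j then r2 y ^ (cE n - 1) else 0)
        - 2 * y j * y k * r2 y ^ (cE n - 2) : ℝ) : ℂ) * pd k ψ (hmap y)) y) =ᶠ[nhds x] pd j (Iop ψ) := by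
    filter_upwards [isOpen_Omega.mem_nhds hx] with y hy
    exact (pd_Iop hψ j hy).symm
  have hstep : pd j (pd j (Iop ψ)) x
      = pd j (fun y => (fun y => ((2 * cE n * y j * r2 y ^ (cE n - 1) : ℝ) : ℂ) * ψ (hmap y)) y + (fun y => ∑ k, (((if k = j then r2 y ^ (cE n - 1) else 0)
        - 2 * y j * y k * r2 y ^ (cE n - 2) : ℝ) : ℂ) * pd k ψ (hmap y)) y) x := by
    rw [pd, pd, hev.fderiv_eq]
  rw [hstep]
  -- differentiability helpers
  have hmem' := hmap_mem hx
  have hψ' : DifferentiableAt ℝ ψ (hmap x) :=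
    (contDiffAt_of_mem hψ hmem').differentiableAt (by simp)
  have hpdk : ∀ k : Fin n, DifferentiableAt ℝ (pd k ψ) (hmap x) := fun k =>
    (contDiffAt_pd (contDiffAt_of_mem hψ hmem') k).differentiableAt (by simp)
  have hproj : ∀ i : Fin n, HasFDerivAt (fun y : Fin n → ℝ => y i)
      (ContinuousLinearMap.proj i : (Fin n → ℝ) →L[ℝ] ℝ) x := fun i =>
    (ContinuousLinearMap.proj i : (Fin n → ℝ) →L[ℝ] ℝ).hasFDerivAt
  have hφ1 : HasFDerivAt (fun y : Fin n → ℝ => 2 * cE n * y j * r2 y ^ (cE n - 1))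
      ((2 * cE n * x j) • ((cE n - 1) * r2 x ^ (cE n - 1 - 1)) • r2' x
        + (r2 x ^ (cE n - 1)) • ((2 * cE n) • (ContinuousLinearMap.proj j
            : (Fin n → ℝ) →L[ℝ] ℝ))) x :=
    ((hproj j).const_mul (2 * cE n)).mul (hasFDerivAt_rpow_r2 hx0 (cE n - 1))
  have hφ2 : ∀ k : Fin n, HasFDerivAt
      (fun y : Fin n → ℝ => (if k = j then r2 y ^ (cE n - 1) else 0)
        - 2 * y j * y k * r2 y ^ (cE n - 2))
      ((if k = j then ((cE n - 1) * r2 x ^ (cE n - 1 - 1)) • r2' x else 0)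
        - ((2 * x j * x k) • ((cE n - 2) * r2 x ^ (cE n - 2 - 1)) • r2' x
           + (r2 x ^ (cE n - 2)) • ((2 * x j) • (ContinuousLinearMap.proj k
                : (Fin n → ℝ) →L[ℝ] ℝ)
              + (x k) • (2 : ℝ) • (ContinuousLinearMap.proj j
                : (Fin n → ℝ) →L[ℝ] ℝ)))) x := by
    intro k
    have hA : HasFDerivAt (fun y : Fin n → ℝ => if k = j then r2 y ^ (cE n - 1) else 0)
        (if k = j then ((cE n - 1) * r2 x ^ (cE n - 1 - 1)) • r2' x else 0) x := by
      split
      · exact hasFDerivAt_rpow_r2 hx0 (cE n - 1)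
      · exact hasFDerivAt_const 0 x
    exact hA.sub ((((hproj j).const_mul 2).mul (hproj k)).mul
      (hasFDerivAt_rpow_r2 hx0 (cE n - 2)))
  have hd1 : DifferentiableAt ℝ (fun y => ((2 * cE n * y j * r2 y ^ (cE n - 1) : ℝ) : ℂ) * ψ (hmap y)) x :=
    ((Complex.ofRealCLM.differentiableAt).comp x hφ1.differentiableAt).mul
      (diff_comp_hmap hψ' hx0)
  have hd2 : ∀ k : Fin n, DifferentiableAt ℝ
      (fun y => (((if k = j then r2 y ^ (cE n - 1) else 0)
          - 2 * y j * y k * r2 y ^ (cE n - 2) : ℝ) : ℂ) * pd k ψ (hmap y)) x := fun k =>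
    ((Complex.ofRealCLM.differentiableAt).comp x (hφ2 k).differentiableAt).mul
      (diff_comp_hmap (hpdk k) hx0)
  rw [show pd j (fun y => (fun y => ((2 * cE n * y j * r2 y ^ (cE n - 1) : ℝ) : ℂ) * ψ (hmap y)) y + (fun y => ∑ k, (((if k = j then r2 y ^ (cE n - 1) else 0)
        - 2 * y j * y k * r2 y ^ (cE n - 2) : ℝ) : ℂ) * pd k ψ (hmap y)) y) x
      = pd j (fun y => ((2 * cE n * y j * r2 y ^ (cE n - 1) : ℝ) : ℂ) * ψ (hmap y)) x + pd j (fun y => ∑ k, (((if k = j then r2 y ^ (cE n - 1) else 0)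
        - 2 * y j * y k * r2 y ^ (cE n - 2) : ℝ) : ℂ) * pd k ψ (hmap y)) x from
    pd_add hd1 (DifferentiableAt.fun_sum fun k _ => hd2 k) j]
  have hT1 : pd j (fun y => ((2 * cE n * y j * r2 y ^ (cE n - 1) : ℝ) : ℂ) * ψ (hmap y)) x
      = ((2 * cE n * r2 x ^ (cE n - 1)
          + 4 * cE n * (cE n - 1) * x j ^ 2 * r2 x ^ (cE n - 2) : ℝ) : ℂ) * ψ (hmap x)
        + ∑ k, (((2 * cE n * x j * r2 x ^ (cE n - 1)) * dh x j k : ℝ) : ℂ)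
            * pd k ψ (hmap x) := by
    rw [pd_rmul hφ1 (diff_comp_hmap hψ' hx0) j, pd_comp hx0 hψ' j]
    congr 1
    · simp only [ContinuousLinearMap.add_apply, ContinuousLinearMap.coe_smul',
        Pi.smul_apply, r2'_single, ContinuousLinearMap.proj_apply,
        Pi.single_eq_same, smul_eq_mul]
      rw [show cE n - 1 - 1 = cE n - 2 from by ring]
      push_cast
      ring
    · rw [Finset.mul_sum]
      refine Finset.sum_congr rfl fun k _ => ?_
      push_cast
      ring
  have hT2 : pd j (fun y => ∑ k, (((if k = j then r2 y ^ (cE n - 1) else 0)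
        - 2 * y j * y k * r2 y ^ (cE n - 2) : ℝ) : ℂ) * pd k ψ (hmap y)) x
      = ∑ k, ((((if k = j then 2 * (cE n - 1) * x j * r2 x ^ (cE n - 2) else 0)
            - (4 * (cE n - 2) * x j ^ 2 * x k * r2 x ^ (cE n - 3)
               + 2 * x k * r2 x ^ (cE n - 2)
               + (if k = j then 2 * x j * r2 x ^ (cE n - 2) else 0))) : ℝ) : ℂ)
            * pd k ψ (hmap x)
        + ∑ k, ∑ l, ((((if k = j then r2 x ^ (cE n - 1) else 0)
            - 2 * x j * x k * r2 x ^ (cE n - 2)) * dh x j l : ℝ) : ℂ)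
            * pd l (pd k ψ) (hmap x) := by
    rw [pd_sum (fun k => hd2 k) j, ← Finset.sum_add_distrib]
    refine Finset.sum_congr rfl fun k _ => ?_
    rw [pd_rmul (hφ2 k) (diff_comp_hmap (hpdk k) hx0) j, pd_comp hx0 (hpdk k) j]
    congr 1
    · congr 1
      simp only [show cE n - 1 - 1 = cE n - 2 from by ring,
        show cE n - 2 - 1 = cE n - 3 from by ring]
      by_cases hkj : k = j <;>
        simp only [hkj, eq_self_iff_true, if_true, if_false,
          ContinuousLinearMap.sub_apply, ContinuousLinearMap.add_apply,
          ContinuousLinearMap.zero_apply, ContinuousLinearMap.coe_smul',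
          Pi.smul_apply, r2'_single, ContinuousLinearMap.proj_apply,
          Pi.single_eq_same, Pi.single_apply, smul_eq_mul] <;>
        push_cast <;> ring
    · rw [Finset.mul_sum]
      refine Finset.sum_congr rfl fun l _ => ?_
      rw [← mul_assoc, ← Complex.ofReal_mul]
  rw [hT1, hT2]
  have hcomb : ∀ k : Fin n,
      (((2 * cE n * x j * r2 x ^ (cE n - 1)) * dh x j k
          + (if k = j then 2 * (cE n - 1) * x j * r2 x ^ (cE n - 2) else 0)
          - (4 * (cE n - 2) * x j ^ 2 * x k * r2 x ^ (cE n - 3)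
             + 2 * x k * r2 x ^ (cE n - 2)
             + (if k = j then 2 * x j * r2 x ^ (cE n - 2) else 0)) : ℝ) : ℂ)
            * pd k ψ (hmap x)
        = (((2 * cE n * x j * r2 x ^ (cE n - 1)) * dh x j k : ℝ) : ℂ) * pd k ψ (hmap x)
          + ((((if k = j then 2 * (cE n - 1) * x j * r2 x ^ (cE n - 2) else 0)
            - (4 * (cE n - 2) * x j ^ 2 * x k * r2 x ^ (cE n - 3)
               + 2 * x k * r2 x ^ (cE n - 2)
               + (if k = j then 2 * x j * r2 x ^ (cE n - 2) else 0))) : ℝ) : ℂ)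
            * pd k ψ (hmap x) := by
    intro k
    by_cases hkj : k = j <;>
      simp only [hkj, eq_self_iff_true, if_true, if_false] <;> push_cast <;> ring
  rw [Finset.sum_congr rfl fun k _ => hcomb k, Finset.sum_add_distrib]
  ring


/-! ### coefficient sums -/

section coeffs

variable {x : Fin n → ℝ}

lemma epow1 (hs : 0 < r2 x) : r2 x ^ (cE n - 1) = r2 x ^ cE n * (r2 x)⁻¹ := by
  rw [rpow_inv_eq hs]

lemma epow2 (hs : 0 < r2 x) :
    r2 x ^ (cE n - 2) = r2 x ^ cE n * (r2 x)⁻¹ * (r2 x)⁻¹ := by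
  rw [show cE n - 2 = cE n - 1 - 1 from by ring, ← rpow_inv_eq hs, ← rpow_inv_eq hs]

lemma epow3 (hs : 0 < r2 x) :
    r2 x ^ (cE n - 3) = r2 x ^ cE n * (r2 x)⁻¹ * (r2 x)⁻¹ * (r2 x)⁻¹ := by
  rw [show cE n - 3 = cE n - 1 - 1 - 1 from by ring, ← rpow_inv_eq hs, ← rpow_inv_eq hs,
    ← rpow_inv_eq hs]

lemma sum_sq (x : Fin n → ℝ) : ∑ j, x j ^ 2 = r2 x := rfl

lemma sumA (hx0 : x ≠ 0) :
    ∑ j : Fin n, (2 * cE n * r2 x ^ (cE n - 1)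
        + 4 * cE n * (cE n - 1) * x j ^ 2 * r2 x ^ (cE n - 2)) = 0 := by
  have hs := r2_pos hx0
  have hs0 := hs.ne'
  have hre : ∀ j : Fin n, (2 * cE n * r2 x ^ (cE n - 1)
        + 4 * cE n * (cE n - 1) * x j ^ 2 * r2 x ^ (cE n - 2))
      = x j ^ 2 * (4 * cE n * (cE n - 1) * (r2 x ^ cE n * (r2 x)⁻¹ * (r2 x)⁻¹))
        + 2 * cE n * (r2 x ^ cE n * (r2 x)⁻¹) := by
    intro j; rw [epow1 hs, epow2 hs]; ring
  rw [Finset.sum_congr rfl fun j _ => hre j, Finset.sum_add_distrib, ← Finset.sum_mul,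
    sum_sq, Finset.sum_const, Finset.card_univ, Fintype.card_fin, nsmul_eq_mul]
  simp only [cE]
  field_simp
  ring

lemma sumB (hx0 : x ≠ 0) (k : Fin n) :
    ∑ j : Fin n, ((2 * cE n * x j * r2 x ^ (cE n - 1)) * dh x j k
        + (if k = j then 2 * (cE n - 1) * x j * r2 x ^ (cE n - 2) else 0)
        - (4 * (cE n - 2) * x j ^ 2 * x k * r2 x ^ (cE n - 3)
           + 2 * x k * r2 x ^ (cE n - 2)
           + (if k = j then 2 * x j * r2 x ^ (cE n - 2) else 0))) = 0 := by
  have hs := r2_pos hx0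
  have hs0 := hs.ne'
  have hre : ∀ j : Fin n, ((2 * cE n * x j * r2 x ^ (cE n - 1)) * dh x j k
        + (if k = j then 2 * (cE n - 1) * x j * r2 x ^ (cE n - 2) else 0)
        - (4 * (cE n - 2) * x j ^ 2 * x k * r2 x ^ (cE n - 3)
           + 2 * x k * r2 x ^ (cE n - 2)
           + (if k = j then 2 * x j * r2 x ^ (cE n - 2) else 0)))
      = (if k = j then
            2 * cE n * x j * (r2 x ^ cE n * (r2 x)⁻¹) * (r2 x)⁻¹
              + 2 * (cE n - 1) * x j * (r2 x ^ cE n * (r2 x)⁻¹ * (r2 x)⁻¹)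
              - 2 * x j * (r2 x ^ cE n * (r2 x)⁻¹ * (r2 x)⁻¹)
          else 0)
        + (x j ^ 2 * (-(4 * cE n * x k * (r2 x ^ cE n * (r2 x)⁻¹) * ((r2 x) ^ 2)⁻¹)
              - 4 * (cE n - 2) * x k
                  * (r2 x ^ cE n * (r2 x)⁻¹ * (r2 x)⁻¹ * (r2 x)⁻¹))
            + (-(2 * x k * (r2 x ^ cE n * (r2 x)⁻¹ * (r2 x)⁻¹)))) := by
    intro j
    rw [epow1 hs, epow2 hs, epow3 hs]
    simp only [dh]
    by_cases hkj : k = j <;>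
      simp only [hkj, eq_self_iff_true, if_true, if_false] <;> ring
  rw [Finset.sum_congr rfl fun j _ => hre j, Finset.sum_add_distrib,
    Finset.sum_ite_eq, Finset.sum_add_distrib, ← Finset.sum_mul, sum_sq,
    Finset.sum_const, Finset.card_univ, Fintype.card_fin, nsmul_eq_mul]
  simp only [Finset.mem_univ, if_true, cE]
  field_simp
  ring

lemma sumC (hx0 : x ≠ 0) (k l : Fin n) :
    ∑ j : Fin n, (((if k = j then r2 x ^ (cE n - 1) else 0)
        - 2 * x j * x k * r2 x ^ (cE n - 2)) * dh x j l)
      = if l = k then r2 x ^ (cE n - 2) else 0 := by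
  have hs := r2_pos hx0
  have hs0 := hs.ne'
  have hre : ∀ j : Fin n, (((if k = j then r2 x ^ (cE n - 1) else 0)
        - 2 * x j * x k * r2 x ^ (cE n - 2)) * dh x j l)
      = (if k = j then
            (if l = j then (r2 x ^ cE n * (r2 x)⁻¹) * (r2 x)⁻¹ else 0)
              - 2 * x j * x l * (r2 x ^ cE n * (r2 x)⁻¹) * ((r2 x) ^ 2)⁻¹
          else 0)
        + ((if l = j then
              -(2 * x j * x k * (r2 x ^ cE n * (r2 x)⁻¹ * (r2 x)⁻¹) * (r2 x)⁻¹)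
            else 0)
          + x j ^ 2 * (4 * x k * x l * (r2 x ^ cE n * (r2 x)⁻¹ * (r2 x)⁻¹)
              * ((r2 x) ^ 2)⁻¹)) := by
    intro j
    rw [epow1 hs, epow2 hs]
    simp only [dh]
    by_cases hkj : k = j <;> by_cases hlj : l = j <;>
      simp only [hkj, hlj, eq_self_iff_true, if_true, if_false] <;> ring
  rw [Finset.sum_congr rfl fun j _ => hre j, Finset.sum_add_distrib,
    Finset.sum_ite_eq, Finset.sum_add_distrib, Finset.sum_ite_eq, ← Finset.sum_mul,
    sum_sq]
  simp only [Finset.mem_univ, if_true]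
  rw [epow2 hs]
  by_cases hlk : l = k <;>
    simp only [hlk, eq_self_iff_true, if_true, if_false] <;> field_simp <;> ring

end coeffs


/-! ### the involution property -/

lemma Iop_Iop {ψ : (Fin n → ℝ) → ℂ} {x : Fin n → ℝ} (hx0 : x ≠ 0) :
    Iop (Iop ψ) x = ψ x := by
  have hs := r2_pos hx0
  have h1 : Iop (Iop ψ) x
      = ((r2 x ^ cE n : ℝ) : ℂ) * (((r2 (hmap x) ^ cE n : ℝ) : ℂ) * ψ (hmap (hmap x))) :=
    rfl
  rw [h1, hmap_hmap hx0, r2_hmap hx0, Real.inv_rpow (r2_nonneg x), ← mul_assoc,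
    ← Complex.ofReal_mul, mul_inv_cancel₀ (Real.rpow_pos_of_pos hs (cE n)).ne',
    Complex.ofReal_one, one_mul]

/-! ### the main intertwining identity -/

set_option maxHeartbeats 1000000 in
lemma Hop_Iop {ψ : (Fin n → ℝ) → ℂ} (hψ : ContDiffOn ℝ (⊤ : ℕ∞) ψ (Omega n)) (a : Fin n → ℂ)
    {x : Fin n → ℝ} (hx : x ∈ Omega n) :
    Hop a (Iop ψ) x = ((r2 x ^ (cE n - 2) : ℝ) : ℂ) * Hop a ψ (hmap x) := by
  have hx0 : x ≠ 0 := hx.1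
  have hs := r2_pos hx0
  have hs0 := hs.ne'
  rw [Hop, Hop, Finset.mul_sum]
  have e1 : ∑ j, (pd j (pd j (Iop ψ)) x + a j / (x j : ℂ) ^ 2 * Iop ψ x)
      = ∑ j, (((2 * cE n * r2 x ^ (cE n - 1)
            + 4 * cE n * (cE n - 1) * x j ^ 2 * r2 x ^ (cE n - 2) : ℝ) : ℂ) * ψ (hmap x)
          + ∑ k, (((2 * cE n * x j * r2 x ^ (cE n - 1)) * dh x j k
              + (if k = j then 2 * (cE n - 1) * x j * r2 x ^ (cE n - 2) else 0)
              - (4 * (cE n - 2) * x j ^ 2 * x k * r2 x ^ (cE n - 3)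
                 + 2 * x k * r2 x ^ (cE n - 2)
                 + (if k = j then 2 * x j * r2 x ^ (cE n - 2) else 0)) : ℝ) : ℂ)
                * pd k ψ (hmap x)
          + ∑ k, ∑ l, ((((if k = j then r2 x ^ (cE n - 1) else 0)
                - 2 * x j * x k * r2 x ^ (cE n - 2)) * dh x j l : ℝ) : ℂ)
                * pd l (pd k ψ) (hmap x)
          + a j / (x j : ℂ) ^ 2 * ((r2 x ^ cE n : ℝ) : ℂ) * ψ (hmap x)) := by
    refine Finset.sum_congr rfl fun j _ => ?_
    rw [pd2_Iop hψ j hx,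
      show Iop ψ x = ((r2 x ^ cE n : ℝ) : ℂ) * ψ (hmap x) from rfl]
    ring
  rw [e1, Finset.sum_add_distrib, Finset.sum_add_distrib, Finset.sum_add_distrib]
  have b1 : ∑ j : Fin n, (((2 * cE n * r2 x ^ (cE n - 1)
        + 4 * cE n * (cE n - 1) * x j ^ 2 * r2 x ^ (cE n - 2) : ℝ)) : ℂ) * ψ (hmap x)
      = 0 := by
    rw [← Finset.sum_mul, ← Complex.ofReal_sum, sumA hx0]
    simp
  have b2 : ∑ j : Fin n, ∑ k, (((2 * cE n * x j * r2 x ^ (cE n - 1)) * dh x j k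
        + (if k = j then 2 * (cE n - 1) * x j * r2 x ^ (cE n - 2) else 0)
        - (4 * (cE n - 2) * x j ^ 2 * x k * r2 x ^ (cE n - 3)
           + 2 * x k * r2 x ^ (cE n - 2)
           + (if k = j then 2 * x j * r2 x ^ (cE n - 2) else 0)) : ℝ) : ℂ)
          * pd k ψ (hmap x) = 0 := by
    rw [Finset.sum_comm]
    refine Finset.sum_eq_zero fun k _ => ?_
    rw [← Finset.sum_mul, ← Complex.ofReal_sum, sumB hx0 k]
    simp
  have b3 : ∑ j : Fin n, ∑ k, ∑ l, ((((if k = j then r2 x ^ (cE n - 1) else 0)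
        - 2 * x j * x k * r2 x ^ (cE n - 2)) * dh x j l : ℝ) : ℂ)
        * pd l (pd k ψ) (hmap x)
      = ∑ k, ((r2 x ^ (cE n - 2) : ℝ) : ℂ) * pd k (pd k ψ) (hmap x) := by
    rw [Finset.sum_comm]
    refine Finset.sum_congr rfl fun k _ => ?_
    rw [Finset.sum_comm]
    have hl : ∀ l : Fin n, ∑ j, ((((if k = j then r2 x ^ (cE n - 1) else 0)
          - 2 * x j * x k * r2 x ^ (cE n - 2)) * dh x j l : ℝ) : ℂ)
          * pd l (pd k ψ) (hmap x)
        = (if l = k then ((r2 x ^ (cE n - 2) : ℝ) : ℂ) else 0)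
            * pd l (pd k ψ) (hmap x) := by
      intro l
      rw [← Finset.sum_mul, ← Complex.ofReal_sum, sumC hx0 k l]
      congr 1
      split <;> simp
    rw [Finset.sum_congr rfl fun l _ => hl l]
    simp [ite_mul, zero_mul, Finset.sum_ite_eq]
  have b4 : ∑ j : Fin n, a j / (x j : ℂ) ^ 2 * ((r2 x ^ cE n : ℝ) : ℂ) * ψ (hmap x)
      = ∑ k, ((r2 x ^ (cE n - 2) : ℝ) : ℂ)
          * (a k / ((hmap x k : ℝ) : ℂ) ^ 2 * ψ (hmap x)) := by
    refine Finset.sum_congr rfl fun j _ => ?_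
    have hxj : ((x j : ℝ) : ℂ) ≠ 0 := Complex.ofReal_ne_zero.2 (hx.2 j)
    have hsC : ((r2 x : ℝ) : ℂ) ≠ 0 := Complex.ofReal_ne_zero.2 hs0
    have hSC : ((r2 x ^ (cE n - 2) : ℝ) : ℂ) ≠ 0 :=
      Complex.ofReal_ne_zero.2 (Real.rpow_pos_of_pos hs _).ne'
    have hSrel : r2 x ^ cE n = r2 x ^ (cE n - 2) * r2 x ^ 2 := by
      rw [← Real.rpow_natCast (r2 x) 2, rpow_mul_rpow hs]
      congr 1
      push_cast
      ring
    rw [show hmap x j = (r2 x)⁻¹ * x j from rfl, hSrel]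
    push_cast
    field_simp
  rw [b1, b2, b3, b4, zero_add, zero_add, ← Finset.sum_add_distrib]
  refine Finset.sum_congr rfl fun k _ => ?_
  ring

end Kelvin

/-- (a) the inversion `I` is an involution on Ω;
(b) `H(Iψ)(x) = |x|^{−n−2} (Hψ)(x/|x|²)` on Ω; consequently inversion maps
solutions of `Hψ = 0` to solutions. -/
theorem inversion_involution_and_intertwines
    (n : ℕ) (hn : 2 ≤ n) (a : Fin n → ℂ) :
    (∀ ψ : (Fin n → ℝ) → ℂ, ContDiffOn ℝ (⊤ : ℕ∞) ψ (Omega n) →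
      ∀ x ∈ Omega n, Iop (Iop ψ) x = ψ x) ∧
    (∀ ψ : (Fin n → ℝ) → ℂ, ContDiffOn ℝ (⊤ : ℕ∞) ψ (Omega n) →
      ∀ x ∈ Omega n,
        Hop a (Iop ψ) x
          = (((r2 x) ^ ((-(n : ℝ) - 2) / 2) : ℝ) : ℂ) * Hop a ψ ((r2 x)⁻¹ • x)) ∧
    (∀ ψ : (Fin n → ℝ) → ℂ, ContDiffOn ℝ (⊤ : ℕ∞) ψ (Omega n) →
      (∀ x ∈ Omega n, Hop a ψ x = 0) →
      ∀ x ∈ Omega n, Hop a (Iop ψ) x = 0) := by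
  refine ⟨fun ψ hψ x hx => Kelvin.Iop_Iop hx.1, ?_, ?_⟩
  · intro ψ hψ x hx
    rw [show ((-(n : ℝ) - 2) / 2) = Kelvin.cE n - 2 from by
      simp only [Kelvin.cE]; ring]
    exact Kelvin.Hop_Iop hψ a hx
  · intro ψ hψ hsol x hx
    rw [Kelvin.Hop_Iop hψ a hx, hsol _ (Kelvin.hmap_mem hx), mul_zero]
end
end

section
/- Fix an integer n ≥ 2 and constants a₁,…,aₙ ∈ ℂ. For every smooth function ψ : Ω → ℂ: (a) D(Iψ) = −I(Dψ) on Ω, i.e. conjugation by the inversion I sends the dilation operator D to −D; (b) for all j ≠ k, J_{jk}(Iψ) = I(J_{jk}ψ) on Ω, i.e. the operators J_{jk} commute with the inversion I. -/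
noncomputable section
open ContinuousLinearMap

lemma Omega_open (n : ℕ) : IsOpen (Omega n) := by
  have : Omega n = {x : Fin n → ℝ | x ≠ 0} ∩ ⋂ j, {x | x j ≠ 0} := by
    ext x; simp [Omega, Set.mem_iInter]
  rw [this]
  exact (isOpen_compl_singleton).inter <| isOpen_iInter_of_finite fun j =>
    (isOpen_compl_singleton).preimage (continuous_apply j)

lemma r2_pos {n : ℕ} {x : Fin n → ℝ} (hx : x ≠ 0) : 0 < r2 x := by
  obtain ⟨j, hj⟩ := Function.ne_iff.1 hx
  exact Finset.sum_pos' (fun i _ => sq_nonneg _) ⟨j, Finset.mem_univ j, by have := sq_pos_of_ne_zero hj; simpa using this⟩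

lemma inv_mem {n : ℕ} {x : Fin n → ℝ} (hx : x ∈ Omega n) :
    (r2 x)⁻¹ • x ∈ Omega n := by
  have h := (r2_pos hx.1).ne'
  refine ⟨?_, fun j => by simp [mul_ne_zero (inv_ne_zero h) (hx.2 j)]⟩
  obtain ⟨j, hj⟩ := Function.ne_iff.1 hx.1
  exact Function.ne_iff.2 ⟨j, by simp [mul_ne_zero (inv_ne_zero h) hj]⟩

def gam (n : ℕ) : ℝ := ((2:ℝ) - (n:ℝ)) / 2

def dr2 {n : ℕ} (x : Fin n → ℝ) : (Fin n → ℝ) →L[ℝ] ℝ :=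
  ∑ i, (2 * x i) • ContinuousLinearMap.proj i

lemma hasFDerivAt_r2 {n : ℕ} (x : Fin n → ℝ) : HasFDerivAt r2 (dr2 x) x := by
  have : HasFDerivAt (fun x : Fin n → ℝ => ∑ i, (x i)^2) (∑ i, (2 * x i) • (ContinuousLinearMap.proj i : (Fin n → ℝ) →L[ℝ] ℝ)) x := by
    apply HasFDerivAt.fun_sum
    intro i _
    have h := HasFDerivAt.mul (𝕜 := ℝ) (hasFDerivAt_apply i x) (hasFDerivAt_apply i x)
    have h2 : HasFDerivAt (fun x : Fin n → ℝ => (x i)^2) (x i • (proj i : (Fin n → ℝ) →L[ℝ] ℝ) + x i • proj i) x := by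
      simp only [pow_two]; exact h
    refine h2.congr_fderiv ?_
    rw [two_mul, add_smul]
  exact this

lemma dr2_single {n : ℕ} (x : Fin n → ℝ) (j : Fin n) : dr2 x (Pi.single j 1) = 2 * x j := by
  simp [dr2, ContinuousLinearMap.proj_apply, Pi.single_apply]

/-- Derivative of the inversion map `x ↦ ρ⁻¹ • x`. -/
def dinv {n : ℕ} (x : Fin n → ℝ) : (Fin n → ℝ) →L[ℝ] (Fin n → ℝ) :=
  (r2 x)⁻¹ • ContinuousLinearMap.id ℝ _
    + ((-((r2 x ^ 2)⁻¹)) • dr2 x).smulRight x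

lemma hasFDerivAt_invmap {n : ℕ} {x : Fin n → ℝ} (hρ : r2 x ≠ 0) :
    HasFDerivAt (fun x : Fin n → ℝ => (r2 x)⁻¹ • x) (dinv x) x := by
  have h1 : HasFDerivAt (fun x : Fin n → ℝ => (r2 x)⁻¹)
      ((-((r2 x ^ 2)⁻¹)) • dr2 x) x := by
    have := (hasFDerivAt_inv' (𝕜 := ℝ) hρ).comp x (hasFDerivAt_r2 x)
    refine this.congr_fderiv ?_
    ext v
    simp [ContinuousLinearMap.mulLeftRight_apply, pow_two]
    ring
  have h2 := h1.smul (hasFDerivAt_id x)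
  simpa [dinv] using h2

lemma dinv_single {n : ℕ} (x : Fin n → ℝ) (j : Fin n) :
    dinv x (Pi.single j 1)
      = (r2 x)⁻¹ • (Pi.single j 1 : Fin n → ℝ) + (-((r2 x ^ 2)⁻¹) * (2 * x j)) • x := by
  simp [dinv, dr2_single]

lemma Iop_eq {n : ℕ} (ψ : (Fin n → ℝ) → ℂ) :
    Iop ψ = fun x => (((r2 x ^ gam n : ℝ)) : ℂ) * ψ ((r2 x)⁻¹ • x) := rfl

lemma hasFDerivAt_Iop {n : ℕ} {ψ : (Fin n → ℝ) → ℂ} {x : Fin n → ℝ}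
    (hρ : 0 < r2 x) (hd : DifferentiableAt ℝ ψ ((r2 x)⁻¹ • x)) :
    HasFDerivAt (Iop ψ)
      ( (((r2 x ^ gam n : ℝ)) : ℂ) • ((fderiv ℝ ψ ((r2 x)⁻¹ • x)).comp (dinv x))
        + ψ ((r2 x)⁻¹ • x) • (Complex.ofRealCLM.comp
            ((gam n * r2 x ^ (gam n - 1)) • dr2 x)) ) x := by
  rw [Iop_eq]
  have h1 : HasFDerivAt (fun x : Fin n → ℝ => (((r2 x ^ gam n : ℝ)) : ℂ))
      (Complex.ofRealCLM.comp ((gam n * r2 x ^ (gam n - 1)) • dr2 x)) x :=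
    Complex.ofRealCLM.hasFDerivAt.comp x
      ((hasFDerivAt_r2 x).rpow_const (Or.inl hρ.ne'))
  have h2 : HasFDerivAt (fun x : Fin n → ℝ => ψ ((r2 x)⁻¹ • x))
      ((fderiv ℝ ψ ((r2 x)⁻¹ • x)).comp (dinv x)) x := by
    have := HasFDerivAt.comp (g := ψ) (f := fun x : Fin n → ℝ => (r2 x)⁻¹ • x) x hd.hasFDerivAt (hasFDerivAt_invmap hρ.ne')
    exact this
  exact h1.mul h2

lemma pd_Iop {n : ℕ} {ψ : (Fin n → ℝ) → ℂ} {x : Fin n → ℝ}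
    (hρ : 0 < r2 x) (hd : DifferentiableAt ℝ ψ ((r2 x)⁻¹ • x)) (j : Fin n) :
    pd j (Iop ψ) x =
      ((gam n * r2 x ^ (gam n - 1) * (2 * x j) : ℝ) : ℂ) * ψ ((r2 x)⁻¹ • x)
      + ((r2 x ^ gam n : ℝ) : ℂ) *
        ( (((r2 x)⁻¹ : ℝ) : ℂ) * pd j ψ ((r2 x)⁻¹ • x)
          - ((2 * x j * (r2 x ^ 2)⁻¹ : ℝ) : ℂ)
              * (fderiv ℝ ψ ((r2 x)⁻¹ • x)) x ) := by
  rw [pd, (hasFDerivAt_Iop hρ hd).fderiv]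
  simp only [ContinuousLinearMap.add_apply, ContinuousLinearMap.coe_smul',
    Pi.smul_apply, ContinuousLinearMap.comp_apply, dinv_single, dr2_single,
    map_add, map_smul, Complex.ofRealCLM_apply]
  rw [pd]
  push_cast
  simp only [smul_eq_mul, Complex.real_smul]
  push_cast
  ring

lemma clm_apply_eq_sum {n : ℕ} (T : (Fin n → ℝ) →L[ℝ] ℂ) (x : Fin n → ℝ) :
    T x = ∑ j, (x j : ℂ) * T (Pi.single j 1) := by
  have hrepr : x = ∑ j, (x j) • (Pi.single j 1 : Fin n → ℝ) := by
    funext i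
    simp [Finset.sum_apply, Pi.single_apply]
  conv_lhs => rw [hrepr]
  rw [map_sum]
  exact Finset.sum_congr rfl fun j _ => by rw [map_smul, Complex.real_smul]

lemma r2_cast {n : ℕ} (x : Fin n → ℝ) : ((r2 x : ℝ) : ℂ) = ∑ j, (x j : ℂ) ^ 2 := by
  rw [r2]; push_cast; rfl

lemma rpow_split {n : ℕ} {x : Fin n → ℝ} (hρ : 0 < r2 x) :
    ((r2 x ^ gam n : ℝ) : ℂ) = ((r2 x ^ (gam n - 1) : ℝ) : ℂ) * (r2 x : ℂ) := by
  rw [← Complex.ofReal_mul]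
  congr 1
  conv_lhs => rw [show gam n = (gam n - 1) + 1 by ring, Real.rpow_add_one hρ.ne']


lemma Eop_Iop {n : ℕ} {ψ : (Fin n → ℝ) → ℂ} {x : Fin n → ℝ}
    (hx : x ∈ Omega n) (hd : DifferentiableAt ℝ ψ ((r2 x)⁻¹ • x)) :
    Eop (Iop ψ) x = ((2 : ℂ) - (n : ℂ)) * Iop ψ x - Iop (Eop ψ) x := by
  have hρ : 0 < r2 x := r2_pos hx.1
  have hρ' : ((r2 x : ℝ) : ℂ) ≠ 0 := by exact_mod_cast hρ.ne'
  set y := (r2 x)⁻¹ • x with hy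
  set S := fderiv ℝ ψ y x with hS
  have expand : ∀ j : Fin n, (x j : ℂ) * pd j (Iop ψ) x =
      (2 * (gam n : ℂ) * ((r2 x ^ (gam n - 1) : ℝ) : ℂ) * ψ y) * (x j : ℂ) ^ 2
      + (((r2 x ^ gam n : ℝ) : ℂ) * ((r2 x : ℂ))⁻¹) * ((x j : ℂ) * pd j ψ y)
      + (-(2 * ((r2 x ^ gam n : ℝ) : ℂ) * (((r2 x : ℂ)) ^ 2)⁻¹ * S)) * (x j : ℂ) ^ 2 := by
    intro j
    rw [pd_Iop hρ hd j]
    push_cast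
    ring
  have hsumS : ∑ j, (x j : ℂ) * pd j ψ y = S := (clm_apply_eq_sum (fderiv ℝ ψ y) x).symm
  rw [Eop, Finset.sum_congr rfl fun j _ => expand j]
  rw [Finset.sum_add_distrib, Finset.sum_add_distrib, ← Finset.mul_sum, ← Finset.mul_sum,
    ← Finset.mul_sum, hsumS, ← r2_cast]
  have hEy : Eop ψ y = ((r2 x : ℂ))⁻¹ * S := by
    rw [Eop]
    have : ∀ j : Fin n, ((y j : ℝ) : ℂ) * pd j ψ y
        = ((r2 x : ℂ))⁻¹ * ((x j : ℂ) * pd j ψ y) := by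
      intro j
      rw [hy]
      simp only [Pi.smul_apply, smul_eq_mul]
      push_cast
      ring
    rw [Finset.sum_congr rfl fun j _ => this j, ← Finset.mul_sum, hsumS]
  show _ = ((2:ℂ) - n) * (((r2 x ^ gam n : ℝ) : ℂ) * ψ y) - ((r2 x ^ gam n : ℝ) : ℂ) * Eop ψ y
  rw [hEy, rpow_split hρ]
  have hg : ((2:ℂ) - n) = 2 * (gam n : ℂ) := by rw [gam]; push_cast; ring
  rw [hg]
  field_simp
  ring

lemma rot_Iop {n : ℕ} {ψ : (Fin n → ℝ) → ℂ} {x : Fin n → ℝ} (j k : Fin n)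
    (hx : x ∈ Omega n) (hd : DifferentiableAt ℝ ψ ((r2 x)⁻¹ • x)) :
    rot j k (Iop ψ) x = Iop (rot j k ψ) x := by
  have hρ : 0 < r2 x := r2_pos hx.1
  have hρ' : ((r2 x : ℝ) : ℂ) ≠ 0 := by exact_mod_cast hρ.ne'
  set y := (r2 x)⁻¹ • x with hy
  rw [rot, pd_Iop hρ hd j, pd_Iop hρ hd k]
  show _ = ((r2 x ^ gam n : ℝ) : ℂ) * rot j k ψ y
  rw [rot]
  have hyj : ∀ m : Fin n, ((y m : ℝ) : ℂ) = ((r2 x : ℂ))⁻¹ * (x m : ℂ) := by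
    intro m; rw [hy]; simp only [Pi.smul_apply, smul_eq_mul]; push_cast; ring
  rw [hyj j, hyj k, rpow_split hρ]
  rw [hy]
  push_cast
  field_simp
  ring

lemma diffAt_of_contDiffOn {n : ℕ} {ψ : (Fin n → ℝ) → ℂ}
    (hψ : ContDiffOn ℝ (⊤ : ℕ∞) ψ (Omega n)) {z : Fin n → ℝ} (hz : z ∈ Omega n) :
    DifferentiableAt ℝ ψ z :=
  ((hψ.contDiffAt ((Omega_open n).mem_nhds hz))).differentiableAt (by simp)

lemma diffAt_pd {n : ℕ} {ψ : (Fin n → ℝ) → ℂ}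
    (hψ : ContDiffOn ℝ (⊤ : ℕ∞) ψ (Omega n)) {z : Fin n → ℝ} (hz : z ∈ Omega n) (m : Fin n) :
    DifferentiableAt ℝ (pd m ψ) z := by
  have hca : ContDiffAt ℝ (⊤ : ℕ∞) ψ z := hψ.contDiffAt ((Omega_open n).mem_nhds hz)
  have h1 : ContDiffAt ℝ 1 (fderiv ℝ ψ) z := hca.fderiv_right (WithTop.coe_le_coe.mpr le_top)
  exact (h1.differentiableAt one_ne_zero).clm_apply (differentiableAt_const _)

lemma diffAt_rot {n : ℕ} {ψ : (Fin n → ℝ) → ℂ}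
    (hψ : ContDiffOn ℝ (⊤ : ℕ∞) ψ (Omega n)) {z : Fin n → ℝ} (hz : z ∈ Omega n) (j k : Fin n) :
    DifferentiableAt ℝ (rot j k ψ) z := by
  have hc : ∀ m : Fin n, DifferentiableAt ℝ (fun w : Fin n → ℝ => ((w m : ℝ) : ℂ)) z := by
    intro m
    exact Complex.ofRealCLM.differentiableAt.comp z (hasFDerivAt_apply m z).differentiableAt
  exact ((hc j).mul (diffAt_pd hψ hz k)).sub ((hc k).mul (diffAt_pd hψ hz j))


/-- (a) `D(Iψ) = −I(Dψ)`: conjugation by inversion sends `D` to `−D`;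
(b) the operators `J_{jk}` commute with the inversion `I`. -/
theorem inversion_dilation_rotation
    (n : ℕ) (hn : 2 ≤ n) (a : Fin n → ℂ)
    (ψ : (Fin n → ℝ) → ℂ) (hψ : ContDiffOn ℝ (⊤ : ℕ∞) ψ (Omega n)) :
    (∀ x ∈ Omega n, Dop (Iop ψ) x = -Iop (Dop ψ) x) ∧
    (∀ j k : Fin n, j ≠ k →
      ∀ x ∈ Omega n, Jop a j k (Iop ψ) x = Iop (Jop a j k ψ) x) := by
  constructor
  · intro x hx
    have hd := diffAt_of_contDiffOn hψ (inv_mem hx)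
    have h1 : Dop (Iop ψ) x
        = -(((2:ℂ) - (n:ℂ)) * Iop ψ x - Iop (Eop ψ) x) - (((n:ℂ) - 2) / 2) * Iop ψ x := by
      rw [Dop, Eop_Iop hx hd]
    rw [h1]
    simp only [Iop, Dop]
    ring
  · intro j k hjk x hx
    have hρ : 0 < r2 x := r2_pos hx.1
    have hρ' : ((r2 x : ℝ) : ℂ) ≠ 0 := by exact_mod_cast hρ.ne'
    have hxj : ((x j : ℝ) : ℂ) ≠ 0 := Complex.ofReal_ne_zero.mpr (hx.2 j)
    have hxk : ((x k : ℝ) : ℂ) ≠ 0 := Complex.ofReal_ne_zero.mpr (hx.2 k)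
    have hdr := diffAt_rot hψ (inv_mem hx) j k
    have hev : rot j k (Iop ψ) =ᶠ[nhds x] Iop (rot j k ψ) :=
      Filter.eventuallyEq_of_mem ((Omega_open n).mem_nhds hx)
        (fun z hz => rot_Iop j k hz (diffAt_of_contDiffOn hψ (inv_mem hz)))
    have hpd : ∀ m, pd m (rot j k (Iop ψ)) x = pd m (Iop (rot j k ψ)) x := fun m => by
      rw [pd, pd, hev.fderiv_eq]
    have hrr : rot j k (rot j k (Iop ψ)) x = Iop (rot j k (rot j k ψ)) x := by
      rw [rot, hpd j, hpd k, ← rot, rot_Iop j k hx hdr]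
    simp only [Jop]
    rw [hrr]
    simp only [Iop, Jop, Pi.smul_apply, smul_eq_mul]
    push_cast
    field_simp
end
end

section
/- Fix an integer n ≥ 2 and constants a₁,…,aₙ ∈ ℂ. For every j ∈ {1,…,n} and every smooth function ψ : Ω → ℂ, the second-order operator Kⱼ is the conjugate of Pⱼ by the inversion I: Kⱼψ = I(Pⱼ(Iψ)) on Ω. -/
noncomputable section

namespace Aux

variable {n : ℕ}

def iota (x : Fin n → ℝ) : Fin n → ℝ := (r2 x)⁻¹ • x

lemma r2_pos {x : Fin n → ℝ} (hx : x ≠ 0) : 0 < r2 x := by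
  obtain ⟨j, hj⟩ := Function.ne_iff.mp hx
  exact Finset.sum_pos' (fun i _ => sq_nonneg _)
    ⟨j, Finset.mem_univ j, pow_two_pos_of_ne_zero hj⟩

lemma isOpen_Omega : IsOpen (Omega n) := by
  have h1 : IsOpen {x : Fin n → ℝ | x ≠ 0} := isOpen_ne
  have h2 : ∀ j : Fin n, IsOpen {x : Fin n → ℝ | x j ≠ 0} := fun j =>
    isOpen_ne.preimage (continuous_apply j)
  have : Omega n = {x : Fin n → ℝ | x ≠ 0} ∩ ⋂ j, {x : Fin n → ℝ | x j ≠ 0} := by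
    ext x; simp [Omega, Set.mem_iInter]
  rw [this]
  exact h1.inter (isOpen_iInter_of_finite h2)

lemma r2_iota {x : Fin n → ℝ} (hx : x ≠ 0) : r2 (iota x) = (r2 x)⁻¹ := by
  have hs := (r2_pos hx).ne'
  simp only [r2, iota, Pi.smul_apply, smul_eq_mul, mul_pow, ← Finset.mul_sum]
  rw [show (∑ j, x j ^ 2) = r2 x from rfl]
  field_simp

lemma iota_mem {x : Fin n → ℝ} (hx : x ∈ Omega n) : iota x ∈ Omega n := by
  obtain ⟨hx0, hxj⟩ := hx
  have hs := (r2_pos hx0).ne'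
  constructor
  · intro h
    obtain ⟨j, hj⟩ := Function.ne_iff.mp hx0
    have := congrFun h j
    simp only [iota, Pi.smul_apply, smul_eq_mul, Pi.zero_apply] at this
    rcases mul_eq_zero.mp this with h | h
    · exact hs (inv_eq_zero.mp h)
    · exact hxj j h
  · intro j h
    simp only [iota, Pi.smul_apply, smul_eq_mul] at h
    rcases mul_eq_zero.mp h with h | h
    · exact hs (inv_eq_zero.mp h)
    · exact hxj j h

lemma iota_iota {x : Fin n → ℝ} (hx : x ≠ 0) : iota (iota x) = x := by
  have hs := (r2_pos hx).ne'
  rw [show iota (iota x) = (r2 (iota x))⁻¹ • iota x from rfl, r2_iota hx, inv_inv,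
    iota, smul_smul, mul_inv_cancel₀ hs, one_smul]

lemma hasFDerivAt_r2 (x : Fin n → ℝ) :
    HasFDerivAt r2 (∑ i, (2 * x i) • ContinuousLinearMap.proj (R := ℝ) (φ := fun _ : Fin n => ℝ) i) x := by
  have h : ∀ i : Fin n, HasFDerivAt (fun y : Fin n → ℝ => y i ^ 2)
      ((2 * x i) • ContinuousLinearMap.proj (R := ℝ) (φ := fun _ : Fin n => ℝ) i) x := by
    intro i
    have hp := (ContinuousLinearMap.proj (R := ℝ) (φ := fun _ : Fin n => ℝ) i).hasFDerivAt (x := x)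
    have := hp.mul hp
    convert this using 1
    case e'_11 => ext y; simp [sq]
    case e'_12 => ext v; simp; ring
    all_goals rfl
  exact HasFDerivAt.fun_sum (fun i _ => h i)

end Aux

namespace Aux
variable {n : ℕ}

def L1 (x : Fin n → ℝ) : (Fin n → ℝ) →L[ℝ] ℝ :=
  ∑ i, (2 * x i) • ContinuousLinearMap.proj (R := ℝ) (φ := fun _ : Fin n => ℝ) i

def cc (n : ℕ) : ℝ := ((2 : ℝ) - (n : ℝ)) / 2

lemma hasFDerivAt_r2' (x : Fin n → ℝ) : HasFDerivAt r2 (L1 x) x := hasFDerivAt_r2 x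

lemma L1_single (x : Fin n → ℝ) (j : Fin n) : L1 x (Pi.single j 1) = 2 * x j := by
  simp [L1, ContinuousLinearMap.sum_apply, Pi.single_apply]

def Liota (x : Fin n → ℝ) : (Fin n → ℝ) →L[ℝ] (Fin n → ℝ) :=
  (r2 x)⁻¹ • ContinuousLinearMap.id ℝ (Fin n → ℝ) + (-((r2 x ^ 2)⁻¹ • L1 x)).smulRight x

lemma hasFDerivAt_iota {x : Fin n → ℝ} (hx : x ≠ 0) : HasFDerivAt iota (Liota x) x := by
  have hs := (r2_pos hx).ne'
  have hinv : HasFDerivAt (fun z : Fin n → ℝ => (r2 z)⁻¹) (-((r2 x ^ 2)⁻¹ • L1 x)) x := by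
    simpa [Function.comp_def, neg_smul] using (hasDerivAt_inv hs).comp_hasFDerivAt x (hasFDerivAt_r2' x)
  exact hinv.smul (hasFDerivAt_id x)

lemma hasFDerivAt_Iop {x : Fin n → ℝ} (hx : x ≠ 0) {φ : (Fin n → ℝ) → ℂ}
    (hφ : DifferentiableAt ℝ φ (iota x)) :
    HasFDerivAt (Iop φ)
      ((((r2 x ^ cc n : ℝ) : ℂ)) • ((fderiv ℝ φ (iota x)).comp (Liota x))
        + φ (iota x) • (Complex.ofRealCLM.comp ((cc n * r2 x ^ (cc n - 1)) • L1 x))) x := by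
  have hs := (r2_pos hx).ne'
  have h2 : HasFDerivAt (fun z : Fin n → ℝ => r2 z ^ cc n)
      ((cc n * r2 x ^ (cc n - 1)) • L1 x) x :=
    (hasFDerivAt_r2' x).rpow_const (Or.inl hs)
  have h3 : HasFDerivAt (fun z : Fin n → ℝ => ((r2 z ^ cc n : ℝ) : ℂ))
      (Complex.ofRealCLM.comp ((cc n * r2 x ^ (cc n - 1)) • L1 x)) x :=
    Complex.ofRealCLM.hasFDerivAt.comp x h2
  have h6 : HasFDerivAt (fun z => φ (iota z)) ((fderiv ℝ φ (iota x)).comp (Liota x)) x :=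
    (hφ.hasFDerivAt).comp x (hasFDerivAt_iota hx)
  exact h3.mul h6

lemma pd_Iop {x : Fin n → ℝ} (hx : x ≠ 0) {φ : (Fin n → ℝ) → ℂ}
    (hφ : DifferentiableAt ℝ φ (iota x)) (j : Fin n) :
    pd j (Iop φ) x
      = ((r2 x ^ cc n : ℝ) : ℂ) * ((((r2 x)⁻¹ : ℝ) : ℂ) * pd j φ (iota x)
          - (((r2 x ^ 2)⁻¹ * (2 * x j) : ℝ) : ℂ) * fderiv ℝ φ (iota x) x)
        + φ (iota x) * ((cc n * r2 x ^ (cc n - 1) * (2 * x j) : ℝ) : ℂ) := by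
  rw [pd, (hasFDerivAt_Iop hx hφ).fderiv]
  simp only [ContinuousLinearMap.add_apply, ContinuousLinearMap.smul_apply,
    ContinuousLinearMap.comp_apply, Liota, ContinuousLinearMap.smulRight_apply,
    ContinuousLinearMap.id_apply, L1_single, map_add, map_smul, Complex.ofRealCLM_apply,
    smul_eq_mul, Complex.real_smul, ContinuousLinearMap.neg_apply, Pi.neg_apply,
    Pi.smul_apply, inv_pow, map_neg]
  push_cast
  rw [pd]
  ring

end Aux

namespace Aux
variable {n : ℕ}

lemma apply_eq_sum (L : (Fin n → ℝ) →L[ℝ] ℂ) (x : Fin n → ℝ) :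
    ∑ j, (x j : ℂ) * L (Pi.single j 1) = L x := by
  conv_rhs => rw [pi_eq_sum_univ x, map_sum]
  refine Finset.sum_congr rfl (fun j _ => ?_)
  rw [map_smul]
  rw [show (fun k => if j = k then (1:ℝ) else 0) = Pi.single j 1 by
    funext k; rw [Pi.single_apply]; simp [eq_comm]]
  rw [Complex.real_smul]

lemma sum_sq_complex (x : Fin n → ℝ) : ∑ j, ((x j : ℂ))^2 = ((r2 x : ℝ) : ℂ) := by
  rw [r2]; push_cast; rfl

lemma Eop_Iop {x : Fin n → ℝ} (hx : x ≠ 0) {φ : (Fin n → ℝ) → ℂ}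
    (hφ : DifferentiableAt ℝ φ (iota x)) :
    Eop (Iop φ) x
      = ((2 * cc n : ℝ) : ℂ) * ((r2 x ^ cc n : ℝ) : ℂ) * φ (iota x)
        - ((r2 x ^ cc n : ℝ) : ℂ) * (((r2 x)⁻¹ : ℝ) : ℂ) * fderiv ℝ φ (iota x) x := by
  have hs := (r2_pos hx).ne'
  have hc1 : r2 x ^ (cc n - 1) = r2 x ^ cc n / r2 x := Real.rpow_sub_one hs _
  have hC : ∑ j, (x j : ℂ) * pd j φ (iota x) = fderiv ℝ φ (iota x) x :=
    apply_eq_sum (fderiv ℝ φ (iota x)) x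
  have hS := sum_sq_complex x
  have step : Eop (Iop φ) x
      = ∑ j, ((((r2 x ^ cc n : ℝ) : ℂ) * (((r2 x)⁻¹ : ℝ) : ℂ)) * ((x j : ℂ) * pd j φ (iota x))
          + (-(((r2 x ^ cc n : ℝ) : ℂ) * (((r2 x ^ 2)⁻¹ : ℝ) : ℂ) * 2) * fderiv ℝ φ (iota x) x
             + ((cc n : ℝ) : ℂ) * ((r2 x ^ cc n : ℝ) : ℂ) * (((r2 x)⁻¹ : ℝ) : ℂ) * 2 * φ (iota x))
            * ((x j : ℂ))^2) := by
    rw [Eop]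
    refine Finset.sum_congr rfl (fun j _ => ?_)
    rw [pd_Iop hx hφ j, hc1]
    push_cast
    field_simp
    ring
  have hs' : ((r2 x : ℝ) : ℂ) ≠ 0 := Complex.ofReal_ne_zero.mpr hs
  rw [step, Finset.sum_add_distrib, ← Finset.mul_sum, ← Finset.mul_sum, hC, hS]
  push_cast
  field_simp [hs']
  ring

end Aux


namespace Aux
variable {n : ℕ}

set_option maxHeartbeats 1000000 in
lemma Mop_Iop {x : Fin n → ℝ} (hx : x ≠ 0) {φ : (Fin n → ℝ) → ℂ}
    (hφ : DifferentiableAt ℝ φ (iota x)) (j : Fin n) :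
    Mop j (Iop φ) x = - Iop (pd j φ) x := by
  have hs := (r2_pos hx).ne'
  have hs' : ((r2 x : ℝ) : ℂ) ≠ 0 := Complex.ofReal_ne_zero.mpr hs
  have hc1 : r2 x ^ (cc n - 1) = r2 x ^ cc n / r2 x := Real.rpow_sub_one hs _
  rw [Mop, Eop_Iop hx hφ, pd_Iop hx hφ j, hc1,
    show Iop (pd j φ) x = ((r2 x ^ cc n : ℝ) : ℂ) * pd j φ (iota x) from rfl,
    show Iop φ x = ((r2 x ^ cc n : ℝ) : ℂ) * φ (iota x) from rfl]
  simp only [cc]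
  push_cast
  generalize ((r2 x ^ (((2:ℝ) - (n:ℝ))/2) : ℝ) : ℂ) = R
  generalize hS : ((r2 x : ℝ) : ℂ) = S
  generalize (φ (iota x)) = A
  generalize (pd j φ (iota x)) = B
  generalize (fderiv ℝ φ (iota x) x : ℂ) = C
  rw [hS] at hs'
  field_simp
  ring_nf

end Aux

namespace Aux
variable {n : ℕ}

lemma Iop_apply (φ : (Fin n → ℝ) → ℂ) (x : Fin n → ℝ) :
    Iop φ x = ((r2 x ^ cc n : ℝ) : ℂ) * φ (iota x) := rfl

lemma contDiff_r2 : ContDiff ℝ (⊤ : ℕ∞) (r2 : (Fin n → ℝ) → ℝ) := by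
  have : (r2 : (Fin n → ℝ) → ℝ) = fun y => ∑ i, y i ^ 2 := rfl
  rw [this]
  exact ContDiff.sum fun i _ => ((ContinuousLinearMap.proj (R := ℝ)
    (φ := fun _ : Fin n => ℝ) i).contDiff).pow 2

lemma contDiffAt_iota {x : Fin n → ℝ} (hx : x ≠ 0) :
    ContDiffAt ℝ (⊤ : ℕ∞) (iota : (Fin n → ℝ) → (Fin n → ℝ)) x := by
  have hs := (r2_pos hx).ne'
  exact ((contDiff_r2.contDiffAt).inv hs).smul contDiffAt_id

lemma contDiffAt_Iop {x : Fin n → ℝ} (hx : x ∈ Omega n) {φ : (Fin n → ℝ) → ℂ}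
    (hφ : ContDiffOn ℝ (⊤ : ℕ∞) φ (Omega n)) : ContDiffAt ℝ (⊤ : ℕ∞) (Iop φ) x := by
  have hs := (r2_pos hx.1).ne'
  have h1 : ContDiffAt ℝ (⊤ : ℕ∞) (fun y : Fin n → ℝ => ((r2 y ^ cc n : ℝ) : ℂ)) x :=
    (Complex.ofRealCLM.contDiff.contDiffAt).comp x
      ((contDiff_r2.contDiffAt).rpow_const_of_ne hs)
  have h2 : ContDiffAt ℝ (⊤ : ℕ∞) (fun y => φ (iota y)) x :=
    (hφ.contDiffAt (isOpen_Omega.mem_nhds (iota_mem hx))).comp x (contDiffAt_iota hx.1)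
  exact h1.mul h2

lemma contDiffOn_Iop {φ : (Fin n → ℝ) → ℂ} (hφ : ContDiffOn ℝ (⊤ : ℕ∞) φ (Omega n)) :
    ContDiffOn ℝ (⊤ : ℕ∞) (Iop φ) (Omega n) :=
  fun x hx => (contDiffAt_Iop hx hφ).contDiffWithinAt

lemma contDiffOn_pd {φ : (Fin n → ℝ) → ℂ} (hφ : ContDiffOn ℝ (⊤ : ℕ∞) φ (Omega n)) (j : Fin n) :
    ContDiffOn ℝ (⊤ : ℕ∞) (pd j φ) (Omega n) := by
  intro x hx
  have h1 : ContDiffAt ℝ (⊤ : ℕ∞) (fderiv ℝ φ) x :=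
    (hφ.contDiffAt (isOpen_Omega.mem_nhds hx)).fderiv_right (by simp)
  exact (h1.clm_apply contDiffAt_const).contDiffWithinAt

lemma pd_congr {f g : (Fin n → ℝ) → ℂ} (h : ∀ y ∈ Omega n, f y = g y)
    {x : Fin n → ℝ} (hx : x ∈ Omega n) (j : Fin n) : pd j f x = pd j g x := by
  have he : f =ᶠ[nhds x] g := Filter.eventuallyEq_of_mem (isOpen_Omega.mem_nhds hx) h
  rw [pd, pd, he.fderiv_eq]

lemma Mop_congr {f g : (Fin n → ℝ) → ℂ} (h : ∀ y ∈ Omega n, f y = g y)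
    {x : Fin n → ℝ} (hx : x ∈ Omega n) (j : Fin n) : Mop j f x = Mop j g x := by
  have hE : Eop f x = Eop g x :=
    Finset.sum_congr rfl fun k _ => by rw [pd_congr h hx k]
  rw [Mop, Mop, h x hx, pd_congr h hx j, hE]

lemma Mop_neg (f : (Fin n → ℝ) → ℂ) (x : Fin n → ℝ) (j : Fin n) :
    Mop j (fun y => -(f y)) x = -(Mop j f x) := by
  have hpd : ∀ k : Fin n, pd k (fun y => -(f y)) x = -(pd k f x) := fun k => by
    rw [pd, pd, fderiv_fun_neg]; simp
  have hE : Eop (fun y => -(f y)) x = -(Eop f x) := by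
    rw [Eop, Eop, ← Finset.sum_neg_distrib]
    exact Finset.sum_congr rfl fun k _ => by rw [hpd k]; ring
  rw [Mop, Mop, hpd j, hE]
  ring

lemma I_I {ψ : (Fin n → ℝ) → ℂ} {x : Fin n → ℝ} (hx : x ∈ Omega n) :
    Iop (Iop ψ) x = ψ x := by
  have hp := r2_pos hx.1
  rw [Iop_apply, Iop_apply, r2_iota hx.1, iota_iota hx.1, Real.inv_rpow hp.le,
    ← mul_assoc, ← Complex.ofReal_mul, mul_inv_cancel₀ (Real.rpow_pos_of_pos hp _).ne',
    Complex.ofReal_one, one_mul]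

lemma Iop_aterm (a : ℂ) {x : Fin n → ℝ} (hx : x ∈ Omega n) (φ : (Fin n → ℝ) → ℂ)
    (j : Fin n) :
    Iop (fun y => (a / (y j : ℂ) ^ 2) * φ y) x
      = (a * ((r2 x : ℝ) : ℂ) ^ 2 / (x j : ℂ) ^ 2) * Iop φ x := by
  have hs := (r2_pos hx.1).ne'
  have hs' : ((r2 x : ℝ) : ℂ) ≠ 0 := Complex.ofReal_ne_zero.mpr hs
  have hj' : ((x j : ℝ) : ℂ) ≠ 0 := Complex.ofReal_ne_zero.mpr (hx.2 j)
  rw [Iop_apply, Iop_apply, show iota x j = (r2 x)⁻¹ * x j from rfl]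
  push_cast
  field_simp

end Aux


open Aux in
/-- `Kⱼ = I Pⱼ I`: the operator `Kⱼ` is the conjugate of `Pⱼ` by the inversion. -/
theorem K_is_conjugate_of_P
    (n : ℕ) (hn : 2 ≤ n) (a : Fin n → ℂ) (j : Fin n)
    (ψ : (Fin n → ℝ) → ℂ) (hψ : ContDiffOn ℝ (⊤ : ℕ∞) ψ (Omega n)) :
    ∀ x ∈ Omega n, Kop a j ψ x = Iop (Pop a j (Iop ψ)) x := by
  intro x hx
  set φ : (Fin n → ℝ) → ℂ := Iop ψ with hφdef
  have hφs : ContDiffOn ℝ (⊤ : ℕ∞) φ (Omega n) := contDiffOn_Iop hψ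
  have hpdφs : ContDiffOn ℝ (⊤ : ℕ∞) (pd j φ) (Omega n) := contDiffOn_pd hφs j
  have hψ_eq : ∀ y ∈ Omega n, ψ y = Iop φ y := fun y hy => (I_I hy).symm
  -- first conjugation
  have hM1 : ∀ y ∈ Omega n, Mop j ψ y = -(Iop (pd j φ) y) := by
    intro y hy
    have hdφ : DifferentiableAt ℝ φ (iota y) :=
      (hφs.contDiffAt (isOpen_Omega.mem_nhds (iota_mem hy))).differentiableAt (by simp)
    rw [Mop_congr hψ_eq hy j, Mop_Iop hy.1 hdφ j]
  -- second conjugation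
  have hdpd : DifferentiableAt ℝ (pd j φ) (iota x) :=
    (hpdφs.contDiffAt (isOpen_Omega.mem_nhds (iota_mem hx))).differentiableAt (by simp)
  have hM2 : Mop j (Mop j ψ) x = Iop (pd j (pd j φ)) x := by
    rw [Mop_congr hM1 hx j, Mop_neg, Mop_Iop hx.1 hdpd j, neg_neg]
  have hsplit : Iop (Pop a j φ) x
      = Iop (pd j (pd j φ)) x + Iop (fun y => (a j / (y j : ℂ) ^ 2) * φ y) x := by
    rw [Iop_apply, Iop_apply, Iop_apply, Pop, mul_add]
  rw [Kop, hM2, hsplit, Iop_aterm (a j) hx φ j, I_I hx]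
end
end

section
/- Fix an integer n ≥ 2 and constants a₁,…,aₙ ∈ ℂ. For every smooth function f : Ω → ℂ, for all j and all j ≠ k: D(Pⱼf) − Pⱼ(Df) = 2 Pⱼf, D(Kⱼf) − Kⱼ(Df) = −2 Kⱼf, and D(J_{jk}f) − J_{jk}(Df) = 0; i.e. [D,Pⱼ] = 2Pⱼ, [D,Kⱼ] = −2Kⱼ, [D,J_{jk}] = 0. -/
noncomputable section

open scoped ContDiff

namespace DSR

variable {n : ℕ}

lemma isOpen_Omega : IsOpen (Omega n) := by
  have h1 : IsOpen {x : Fin n → ℝ | x ≠ 0} := isOpen_compl_singleton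
  have h2 : IsOpen {x : Fin n → ℝ | ∀ j, x j ≠ 0} := by
    have : {x : Fin n → ℝ | ∀ j, x j ≠ 0} = ⋂ j, (fun x : Fin n → ℝ => x j) ⁻¹' {0}ᶜ := by
      ext x; simp
    rw [this]
    exact isOpen_iInter_of_finite fun j => (isOpen_compl_singleton).preimage (continuous_apply j)
  exact h1.inter h2

lemma Omega_mem_nhds {x : Fin n → ℝ} (hx : x ∈ Omega n) : Omega n ∈ nhds x :=
  isOpen_Omega.mem_nhds hx

/-- Smooth on Omega. -/
def Sm (n : ℕ) (g : (Fin n → ℝ) → ℂ) : Prop := ContDiffOn ℝ ∞ g (Omega n)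

lemma Sm.contDiffAt {g : (Fin n → ℝ) → ℂ} (hg : Sm n g) {x : Fin n → ℝ} (hx : x ∈ Omega n) :
    ContDiffAt ℝ ∞ g x := ContDiffOn.contDiffAt hg (Omega_mem_nhds hx)

lemma Sm.diffAt {g : (Fin n → ℝ) → ℂ} (hg : Sm n g) {x : Fin n → ℝ} (hx : x ∈ Omega n) :
    DifferentiableAt ℝ g x := (Sm.contDiffAt hg hx).differentiableAt (by norm_num)

lemma pd_congr_nhds {g h : (Fin n → ℝ) → ℂ} {x : Fin n → ℝ} (j : Fin n)
    (hgh : g =ᶠ[nhds x] h) : pd j g x = pd j h x := by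
  unfold pd; rw [hgh.fderiv_eq]

lemma pd_congr {g h : (Fin n → ℝ) → ℂ} {x : Fin n → ℝ} (j : Fin n)
    (hgh : ∀ y ∈ Omega n, g y = h y) (hx : x ∈ Omega n) : pd j g x = pd j h x :=
  pd_congr_nhds j (Filter.eventually_of_mem (Omega_mem_nhds hx) hgh)

lemma pd_add {g h : (Fin n → ℝ) → ℂ} {x : Fin n → ℝ} (j : Fin n)
    (hg : DifferentiableAt ℝ g x) (hh : DifferentiableAt ℝ h x) :
    pd j (fun y => g y + h y) x = pd j g x + pd j h x := by
  unfold pd; rw [fderiv_fun_add hg hh]; rfl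

lemma pd_const_mul {g : (Fin n → ℝ) → ℂ} {x : Fin n → ℝ} (j : Fin n) (c : ℂ)
    (hg : DifferentiableAt ℝ g x) :
    pd j (fun y => c * g y) x = c * pd j g x := by
  unfold pd; rw [fderiv_const_mul hg]; rfl

lemma pd_mul {g h : (Fin n → ℝ) → ℂ} {x : Fin n → ℝ} (j : Fin n)
    (hg : DifferentiableAt ℝ g x) (hh : DifferentiableAt ℝ h x) :
    pd j (fun y => g y * h y) x = pd j g x * h x + g x * pd j h x := by
  unfold pd; rw [fderiv_fun_mul hg hh]
  simp [smul_eq_mul]; ring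

lemma pd_sum {ι : Type*} {s : Finset ι} {F : ι → (Fin n → ℝ) → ℂ} {x : Fin n → ℝ} (j : Fin n)
    (hF : ∀ i ∈ s, DifferentiableAt ℝ (F i) x) :
    pd j (fun y => ∑ i ∈ s, F i y) x = ∑ i ∈ s, pd j (F i) x := by
  unfold pd; rw [fderiv_fun_sum hF]; simp

lemma pd_comp_coord {ψ : ℝ → ℂ} {d : ℂ} {x : Fin n → ℝ} (i j : Fin n)
    (hψ : HasDerivAt ψ d (x i)) :
    pd j (fun y => ψ (y i)) x = if i = j then d else 0 := by
  have hproj : HasFDerivAt (fun y : Fin n → ℝ => y i)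
      (ContinuousLinearMap.proj (R := ℝ) (φ := fun _ : Fin n => ℝ) i) x :=
    (ContinuousLinearMap.proj (R := ℝ) (φ := fun _ : Fin n => ℝ) i).hasFDerivAt (x := x)
  have hψ' : HasFDerivAt ψ ((1 : ℝ →L[ℝ] ℝ).smulRight d) ((fun y : Fin n → ℝ => y i) x) :=
    hψ.hasFDerivAt
  have hc := HasFDerivAt.comp x hψ' hproj
  unfold pd
  rw [show (fun y : Fin n → ℝ => ψ (y i)) = ψ ∘ (fun y : Fin n → ℝ => y i) from rfl]
  rw [hc.fderiv]
  simp [Pi.single_apply]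

end DSR
namespace DSR

variable {n : ℕ}

lemma contDiff_coordc (i : Fin n) : ContDiff ℝ ∞ (fun y : Fin n → ℝ => ((y i : ℝ) : ℂ)) :=
  Complex.ofRealCLM.contDiff.comp (ContinuousLinearMap.proj (R := ℝ) (φ := fun _ : Fin n => ℝ) i).contDiff

lemma diffAt_coordc (i : Fin n) (x : Fin n → ℝ) :
    DifferentiableAt ℝ (fun y : Fin n → ℝ => ((y i : ℝ) : ℂ)) x :=
  (contDiff_coordc i).differentiable (by norm_num) x

lemma pd_coord (i j : Fin n) (x : Fin n → ℝ) :
    pd j (fun y : Fin n → ℝ => ((y i : ℝ) : ℂ)) x = if i = j then 1 else 0 :=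
  pd_comp_coord i j (Complex.ofRealCLM.hasDerivAt (x := x i))

lemma Sm.pd {g : (Fin n → ℝ) → ℂ} (hg : Sm n g) (j : Fin n) : Sm n (pd j g) := by
  have h1 : ContDiffOn ℝ ∞ (fun y => fderiv ℝ g y) (Omega n) :=
    hg.fderiv_of_isOpen isOpen_Omega (by exact le_refl _)
  have h2 : ContDiff ℝ ∞ (fun L : (Fin n → ℝ) →L[ℝ] ℂ => L (Pi.single j 1)) :=
    contDiff_id.clm_apply contDiff_const
  exact h2.comp_contDiffOn h1

lemma Sm.add {g h : (Fin n → ℝ) → ℂ} (hg : Sm n g) (hh : Sm n h) :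
    Sm n (fun y => g y + h y) := ContDiffOn.add hg hh

lemma Sm.mul {g h : (Fin n → ℝ) → ℂ} (hg : Sm n g) (hh : Sm n h) :
    Sm n (fun y => g y * h y) := ContDiffOn.mul hg hh

lemma Sm.Eop {g : (Fin n → ℝ) → ℂ} (hg : Sm n g) : Sm n (Eop g) := by
  have : ∀ i : Fin n, ContDiffOn ℝ ∞ (fun y => ((y i : ℝ) : ℂ) * _root_.pd i g y) (Omega n) :=
    fun i => ((contDiff_coordc i).contDiffOn).mul (Sm.pd hg i)
  exact ContDiffOn.sum (fun i _ => this i)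

/-- Schwarz symmetry of second partials for smooth functions on Omega. -/
lemma pd_swap {g : (Fin n → ℝ) → ℂ} (hg : Sm n g) {x : Fin n → ℝ} (hx : x ∈ Omega n)
    (i j : Fin n) : pd i (pd j g) x = pd j (pd i g) x := by
  have hev : ∀ᶠ y in nhds x, HasFDerivAt g (fderiv ℝ g y) y := by
    filter_upwards [Omega_mem_nhds hx] with y hy using (hg.diffAt hy).hasFDerivAt
  have hf' : DifferentiableAt ℝ (fderiv ℝ g) x :=
    (ContDiffAt.fderiv_right (m := ∞) (hg.contDiffAt hx) (le_refl _)).differentiableAt (by norm_num)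
  have hsymm := second_derivative_symmetric_of_eventually hev hf'.hasFDerivAt
  have key : ∀ v w : Fin n → ℝ,
      fderiv ℝ (fun y => fderiv ℝ g y v) x w = fderiv ℝ (fderiv ℝ g) x w v := by
    intro v w
    have h2 : HasFDerivAt (fun y => fderiv ℝ g y v)
        ((ContinuousLinearMap.apply ℝ ℂ v).comp (fderiv ℝ (fderiv ℝ g) x)) x :=
      (ContinuousLinearMap.apply ℝ ℂ v).hasFDerivAt.comp x hf'.hasFDerivAt
    rw [h2.fderiv]; rfl
  unfold pd
  rw [key, key, hsymm]

lemma Eop_congr {g h : (Fin n → ℝ) → ℂ} {x : Fin n → ℝ} (hgh : ∀ y ∈ Omega n, g y = h y)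
    (hx : x ∈ Omega n) : Eop g x = Eop h x := by
  unfold Eop
  exact Finset.sum_congr rfl fun i _ => by rw [pd_congr i hgh hx]

lemma Eop_lin {g h : (Fin n → ℝ) → ℂ} {x : Fin n → ℝ} (c d : ℂ)
    (hg : DifferentiableAt ℝ g x) (hh : DifferentiableAt ℝ h x) :
    Eop (fun y => c * g y + d * h y) x = c * Eop g x + d * Eop h x := by
  unfold Eop
  rw [Finset.mul_sum, Finset.mul_sum, ← Finset.sum_add_distrib]
  refine Finset.sum_congr rfl fun i _ => ?_
  rw [pd_add i (hg.const_mul c) (hh.const_mul d), pd_const_mul i c hg, pd_const_mul i d hh]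
  ring

end DSR
namespace DSR

variable {n : ℕ}

/-- A (pointwise, local) homogeneous operator of degree `m` on Omega. -/
structure Hom (n : ℕ) (m : ℂ) (T : ((Fin n → ℝ) → ℂ) → ((Fin n → ℝ) → ℂ)) : Prop where
  smooth : ∀ g, Sm n g → Sm n (T g)
  loc : ∀ g h, (∀ y ∈ Omega n, g y = h y) → ∀ x ∈ Omega n, T g x = T h x
  lin : ∀ g h (c d : ℂ), Sm n g → Sm n h → ∀ x ∈ Omega n,
    T (fun y => c * g y + d * h y) x = c * T g x + d * T h x
  comm : ∀ g, Sm n g → ∀ x ∈ Omega n, Eop (T g) x = T (Eop g) x + m * T g x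

lemma hom_congr_deg {m m' : ℂ} {T} (hmm : m = m') (h : Hom n m T) : Hom n m' T := hmm ▸ h

lemma hom_pd (j : Fin n) : Hom n (-1) (pd j) := by
  constructor
  · exact fun g hg => Sm.pd hg j
  · exact fun g h hgh x hx => pd_congr j hgh hx
  · intro g h c d hg hh x hx
    rw [pd_add j ((hg.diffAt hx).const_mul c) ((hh.diffAt hx).const_mul d),
      pd_const_mul j c (hg.diffAt hx), pd_const_mul j d (hh.diffAt hx)]
  · intro g hg x hx
    have key : pd j (Eop g) x = pd j g x + Eop (pd j g) x := by
      have hdi : ∀ i : Fin n, DifferentiableAt ℝ (fun y => ((y i : ℝ) : ℂ) * pd i g y) x :=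
        fun i => (diffAt_coordc i x).mul ((Sm.pd hg i).diffAt hx)
      have h1 : pd j (Eop g) x = ∑ i, pd j (fun y => ((y i : ℝ) : ℂ) * pd i g y) x := by
        rw [show Eop g = fun y => ∑ i, ((y i : ℝ) : ℂ) * pd i g y from rfl]
        exact pd_sum j fun i _ => hdi i
      rw [h1]
      have h2 : ∀ i : Fin n, pd j (fun y => ((y i : ℝ) : ℂ) * pd i g y) x
          = (if i = j then 1 else 0) * pd i g x + (x i : ℂ) * pd j (pd i g) x := by
        intro i
        rw [pd_mul j (diffAt_coordc i x) ((Sm.pd hg i).diffAt hx), pd_coord]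
      simp only [h2]
      rw [Finset.sum_add_distrib]
      congr 1
      · simp [Finset.sum_ite_eq]
      · unfold Eop
        exact Finset.sum_congr rfl fun i _ => by rw [pd_swap hg hx j i]
    rw [key]; ring
lemma hom_mul {m : ℂ} (c : (Fin n → ℝ) → ℂ) (hc : Sm n c)
    (hE : ∀ x ∈ Omega n, Eop c x = m * c x) :
    Hom n m (fun g x => c x * g x) := by
  constructor
  · exact fun g hg => hc.mul hg
  · exact fun g h hgh x hx => by simp only [hgh x hx]
  · intro g h c' d hg hh x hx; ring
  · intro g hg x hx
    have : Eop (fun y => c y * g y) x = Eop c x * g x + c x * Eop g x := by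
      unfold Eop
      rw [Finset.sum_mul, Finset.mul_sum, ← Finset.sum_add_distrib]
      refine Finset.sum_congr rfl fun i _ => ?_
      rw [pd_mul i (hc.diffAt hx) (hg.diffAt hx)]
      ring
    rw [this, hE x hx]; ring

lemma hom_comp {m m' : ℂ} {T T'} (hT : Hom n m T) (hT' : Hom n m' T') :
    Hom n (m + m') (fun g => T (T' g)) := by
  constructor
  · exact fun g hg => hT.smooth _ (hT'.smooth _ hg)
  · intro g h hgh x hx
    exact hT.loc _ _ (fun y hy => hT'.loc _ _ hgh y hy) x hx
  · intro g h c d hg hh x hx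
    have e1 : ∀ y ∈ Omega n, T' (fun y' => c * g y' + d * h y') y
        = (fun y' => c * T' g y' + d * T' h y') y := fun y hy => hT'.lin g h c d hg hh y hy
    rw [hT.loc _ _ e1 x hx]
    exact hT.lin _ _ c d (hT'.smooth _ hg) (hT'.smooth _ hh) x hx
  · intro g hg x hx
    rw [hT.comm _ (hT'.smooth _ hg) x hx]
    have e1 : ∀ y ∈ Omega n, Eop (T' g) y
        = (fun y' => (1 : ℂ) * T' (Eop g) y' + m' * T' g y') y := by
      intro y hy
      rw [hT'.comm g hg y hy]; ring
    rw [hT.loc _ _ e1 x hx,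
      hT.lin _ _ 1 m' (hT'.smooth _ (Sm.Eop hg)) (hT'.smooth _ hg) x hx]
    ring

lemma hom_add {m : ℂ} {T T'} (hT : Hom n m T) (hT' : Hom n m T') :
    Hom n m (fun g x => T g x + T' g x) := by
  constructor
  · exact fun g hg => (hT.smooth _ hg).add (hT'.smooth _ hg)
  · intro g h hgh x hx; rw [hT.loc _ _ hgh x hx, hT'.loc _ _ hgh x hx]
  · intro g h c d hg hh x hx
    rw [hT.lin _ _ c d hg hh x hx, hT'.lin _ _ c d hg hh x hx]; ring
  · intro g hg x hx
    have : Eop (fun y => T g y + T' g y) x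
        = (1 : ℂ) * Eop (T g) x + (1 : ℂ) * Eop (T' g) x := by
      have := Eop_lin (g := T g) (h := T' g) (x := x) 1 1
        ((hT.smooth _ hg).diffAt hx) ((hT'.smooth _ hg).diffAt hx)
      simpa using this
    rw [this, hT.comm _ hg x hx, hT'.comm _ hg x hx]; ring

lemma hom_sub {m : ℂ} {T T'} (hT : Hom n m T) (hT' : Hom n m T') :
    Hom n m (fun g x => T g x - T' g x) := by
  constructor
  · exact fun g hg => (hT.smooth _ hg).sub (hT'.smooth _ hg)
  · intro g h hgh x hx; rw [hT.loc _ _ hgh x hx, hT'.loc _ _ hgh x hx]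
  · intro g h c d hg hh x hx
    rw [hT.lin _ _ c d hg hh x hx, hT'.lin _ _ c d hg hh x hx]; ring
  · intro g hg x hx
    have : Eop (fun y => T g y - T' g y) x
        = (1 : ℂ) * Eop (T g) x + (-1 : ℂ) * Eop (T' g) x := by
      have := Eop_lin (g := T g) (h := T' g) (x := x) 1 (-1)
        ((hT.smooth _ hg).diffAt hx) ((hT'.smooth _ hg).diffAt hx)
      rw [← this]
      exact Eop_congr (fun y _ => by ring) hx
    rw [this, hT.comm _ hg x hx, hT'.comm _ hg x hx]; ring

lemma hom_E : Hom n 0 Eop := by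
  constructor
  · exact fun g hg => Sm.Eop hg
  · intro g h hgh x hx; exact Eop_congr (fun y hy => hgh y hy) hx
  · intro g h c d hg hh x hx; exact Eop_lin c d (hg.diffAt hx) (hh.diffAt hx)
  · intro g hg x hx; ring

/-- The main abstract commutator computation. -/
lemma main {m : ℂ} {T} (hT : Hom n m T) {f : (Fin n → ℝ) → ℂ} (hf : Sm n f)
    {x : Fin n → ℝ} (hx : x ∈ Omega n) :
    Dop (T f) x - T (Dop f) x = -m * T f x := by
  have h1 : Eop (T f) x = T (Eop f) x + m * T f x := hT.comm f hf x hx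
  have e : ∀ y ∈ Omega n, Dop f y
      = (fun y' => (-1 : ℂ) * Eop f y' + (-(((n : ℂ) - 2) / 2)) * f y') y := by
    intro y _; unfold Dop; ring
  have h2 : T (Dop f) x = (-1 : ℂ) * T (Eop f) x + (-(((n : ℂ) - 2) / 2)) * T f x := by
    rw [hT.loc _ _ e x hx]
    exact hT.lin _ _ _ _ (Sm.Eop hf) hf x hx
  have h0 : Dop (T f) x = -Eop (T f) x - (((n : ℂ) - 2) / 2) * T f x := rfl
  rw [h0, h2, h1]
  ring

end DSR
namespace DSR

variable {n : ℕ}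

lemma Eop_mul {c d : (Fin n → ℝ) → ℂ} {x : Fin n → ℝ}
    (hc : DifferentiableAt ℝ c x) (hd : DifferentiableAt ℝ d x) :
    Eop (fun y => c y * d y) x = Eop c x * d x + c x * Eop d x := by
  unfold Eop
  rw [Finset.sum_mul, Finset.mul_sum, ← Finset.sum_add_distrib]
  refine Finset.sum_congr rfl fun i _ => ?_
  rw [pd_mul i hc hd]
  ring

/-- Coefficient homogeneous of degree `m` on Omega. -/
def Ehom (n : ℕ) (m : ℂ) (c : (Fin n → ℝ) → ℂ) : Prop :=
  Sm n c ∧ ∀ x ∈ Omega n, Eop c x = m * c x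

lemma Ehom_congr {m : ℂ} {c c' : (Fin n → ℝ) → ℂ} (h : ∀ x, c x = c' x)
    (hc : Ehom n m c') : Ehom n m c := by
  have : c = c' := funext h
  rw [this]; exact hc

lemma pd_const (j : Fin n) (c0 : ℂ) (x : Fin n → ℝ) : pd j (fun _ => c0) x = 0 := by
  unfold pd; rw [fderiv_fun_const]; rfl

lemma Ehom_const (c0 : ℂ) : Ehom n 0 (fun _ => c0) := by
  refine ⟨contDiffOn_const, fun x hx => ?_⟩
  unfold Eop
  simp [pd_const]

lemma Ehom_coord (j : Fin n) : Ehom n 1 (fun x => ((x j : ℝ) : ℂ)) := by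
  refine ⟨(contDiff_coordc j).contDiffOn, fun x hx => ?_⟩
  unfold Eop
  simp only [pd_coord]
  simp [Finset.sum_ite_eq, mul_ite]

lemma Ehom_mul {m m' : ℂ} {c c' : (Fin n → ℝ) → ℂ} (hc : Ehom n m c) (hc' : Ehom n m' c') :
    Ehom n (m + m') (fun x => c x * c' x) := by
  refine ⟨hc.1.mul hc'.1, fun x hx => ?_⟩
  rw [Eop_mul (hc.1.diffAt hx) (hc'.1.diffAt hx), hc.2 x hx, hc'.2 x hx]
  ring

lemma Ehom_add {m : ℂ} {c c' : (Fin n → ℝ) → ℂ} (hc : Ehom n m c) (hc' : Ehom n m c') :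
    Ehom n m (fun x => c x + c' x) := by
  refine ⟨hc.1.add hc'.1, fun x hx => ?_⟩
  have := Eop_lin (g := c) (h := c') (x := x) 1 1 (hc.1.diffAt hx) (hc'.1.diffAt hx)
  simp only [one_mul] at this
  rw [this, hc.2 x hx, hc'.2 x hx]
  ring

lemma pd_inv {c : (Fin n → ℝ) → ℂ} {x : Fin n → ℝ} (i : Fin n)
    (hc : DifferentiableAt ℝ c x) (h0 : c x ≠ 0) :
    pd i (fun y => (c y)⁻¹) x = -(c x ^ 2)⁻¹ * pd i c x := by
  have h2 : HasDerivAt (fun z : ℂ => z⁻¹) (-(c x ^ 2)⁻¹) (c x) := hasDerivAt_inv h0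
  have h3 := h2.comp_hasFDerivAt x hc.hasFDerivAt
  unfold pd
  rw [show (fun y => (c y)⁻¹) = (fun z : ℂ => z⁻¹) ∘ c from rfl, h3.fderiv]
  simp [smul_eq_mul]

lemma Ehom_inv {m : ℂ} {c : (Fin n → ℝ) → ℂ} (hc : Ehom n m c)
    (h0 : ∀ x ∈ Omega n, c x ≠ 0) : Ehom n (-m) (fun x => (c x)⁻¹) := by
  refine ⟨hc.1.inv h0, fun x hx => ?_⟩
  have he : Eop (fun y => (c y)⁻¹) x = -(c x ^ 2)⁻¹ * Eop c x := by
    unfold Eop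
    rw [Finset.mul_sum]
    refine Finset.sum_congr rfl fun i _ => ?_
    rw [pd_inv i (hc.1.diffAt hx) (h0 x hx)]
    ring
  rw [he, hc.2 x hx]
  field_simp [h0 x hx]

lemma Ehom_r2 : Ehom n 2 (fun x => ((r2 x : ℝ) : ℂ)) := by
  have hco : (fun y : Fin n → ℝ => ((r2 y : ℝ) : ℂ)) = fun y => ∑ i, ((y i : ℝ) : ℂ) ^ 2 := by
    funext y; unfold r2; push_cast; ring
  rw [hco]
  have hdiff : ∀ (i : Fin n) (x : Fin n → ℝ),
      DifferentiableAt ℝ (fun y : Fin n → ℝ => ((y i : ℝ) : ℂ) ^ 2) x :=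
    fun i x => (diffAt_coordc i x).pow 2
  constructor
  · exact ContDiffOn.sum fun i _ =>
      (((contDiff_coordc i).pow 2)).contDiffOn
  · intro x hx
    have hppd : ∀ i k : Fin n, pd k (fun y : Fin n → ℝ => ((y i : ℝ) : ℂ) ^ 2) x
        = if i = k then 2 * (x i : ℂ) else 0 := by
      intro i k
      have hψ : HasDerivAt (fun t : ℝ => ((t : ℝ) : ℂ) ^ 2) (2 * (x i : ℂ)) (x i) := by
        have h1 : HasDerivAt (fun s : ℝ => ((s : ℝ) : ℂ)) 1 (x i) := by
          have := Complex.ofRealCLM.hasDerivAt (x := x i); exact this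
        have h2 := h1.fun_mul h1
        rw [show (fun t : ℝ => ((t : ℝ) : ℂ) ^ 2)
            = fun t : ℝ => ((t : ℝ) : ℂ) * ((t : ℝ) : ℂ) from by funext t; ring]
        convert h2 using 1
        · rfl
        ring
      exact pd_comp_coord i k hψ
    unfold Eop
    have : ∀ k : Fin n, pd k (fun y : Fin n → ℝ => ∑ i, ((y i : ℝ) : ℂ) ^ 2) x
        = 2 * (x k : ℂ) := by
      intro k
      rw [pd_sum k fun i _ => hdiff i x]
      simp [hppd, Finset.sum_ite_eq]
    simp only [this]
    rw [Finset.mul_sum]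
    refine Finset.sum_congr rfl fun i _ => ?_
    ring

end DSR
namespace DSR

variable {n : ℕ}

lemma ehom_deg {m m' : ℂ} {c : (Fin n → ℝ) → ℂ} (h : m = m') (hc : Ehom n m c) :
    Ehom n m' c := h ▸ hc

lemma hxj_ne (j : Fin n) : ∀ x ∈ Omega n, ((x j : ℝ) : ℂ) * ((x j : ℝ) : ℂ) ≠ 0 :=
  fun x hx => mul_ne_zero (by exact_mod_cast hx.2 j) (by exact_mod_cast hx.2 j)

lemma hinv_sq (j : Fin n) :
    Ehom n (-2) (fun x => (((x j : ℝ) : ℂ) * ((x j : ℝ) : ℂ))⁻¹) :=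
  ehom_deg (by norm_num) (Ehom_inv (Ehom_mul (Ehom_coord j) (Ehom_coord j)) (hxj_ne j))

end DSR

/-- `[D,Pⱼ] = 2Pⱼ`, `[D,Kⱼ] = −2Kⱼ`, `[D,J_{jk}] = 0` on Ω. -/
theorem dilation_structure_relations
    (n : ℕ) (hn : 2 ≤ n) (a : Fin n → ℂ)
    (f : (Fin n → ℝ) → ℂ) (hf : ContDiffOn ℝ (⊤ : ℕ∞) f (Omega n)) :
    (∀ j : Fin n, ∀ x ∈ Omega n,
      Dop (Pop a j f) x - Pop a j (Dop f) x = 2 * Pop a j f x) ∧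
    (∀ j : Fin n, ∀ x ∈ Omega n,
      Dop (Kop a j f) x - Kop a j (Dop f) x = -2 * Kop a j f x) ∧
    (∀ j k : Fin n, j ≠ k → ∀ x ∈ Omega n,
      Dop (Jop a j k f) x - Jop a j k (Dop f) x = 0) := by

  classical
  have hfS : DSR.Sm n f := hf.of_le (by simp)
  refine ⟨?_, ?_, ?_⟩
  · -- P part
    intro j x hx
    have hcP : DSR.Ehom n (-2) (fun x : Fin n → ℝ => a j / ((x j : ℝ) : ℂ) ^ 2) :=
      DSR.Ehom_congr (fun x => by ring)
        (DSR.ehom_deg (by norm_num)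
          (DSR.Ehom_mul (DSR.Ehom_const (a j)) (DSR.hinv_sq j)))
    have hT : DSR.Hom n (-2)
        (fun g (x : Fin n → ℝ) => pd j (pd j g) x + (a j / ((x j : ℝ) : ℂ) ^ 2) * g x) :=
      DSR.hom_add (DSR.hom_congr_deg (by norm_num) (DSR.hom_comp (DSR.hom_pd j) (DSR.hom_pd j)))
        (DSR.hom_mul _ hcP.1 hcP.2)
    have h := DSR.main hT hfS hx
    have h2 : Dop (Pop a j f) x - Pop a j (Dop f) x = -(-2 : ℂ) * Pop a j f x := h
    rw [h2]; norm_num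
  · -- K part
    intro j x hx
    have hcM1 : DSR.Ehom n 1 (fun x : Fin n → ℝ => ((n : ℂ) - 2) * ((x j : ℝ) : ℂ)) :=
      DSR.ehom_deg (by norm_num) (DSR.Ehom_mul (DSR.Ehom_const ((n : ℂ) - 2)) (DSR.Ehom_coord j))
    have hcM2 : DSR.Ehom n 1 (fun x : Fin n → ℝ => (2 : ℂ) * ((x j : ℝ) : ℂ)) :=
      DSR.ehom_deg (by norm_num) (DSR.Ehom_mul (DSR.Ehom_const (2 : ℂ)) (DSR.Ehom_coord j))
    have hTM : DSR.Hom n 1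
        (fun g (x : Fin n → ℝ) =>
          (((n : ℂ) - 2) * ((x j : ℝ) : ℂ) * g x - ((r2 x : ℝ) : ℂ) * pd j g x)
            + 2 * ((x j : ℝ) : ℂ) * Eop g x) := by
      refine DSR.hom_add (DSR.hom_sub (DSR.hom_mul _ hcM1.1 hcM1.2) ?_) ?_
      · exact DSR.hom_congr_deg (by norm_num)
          (DSR.hom_comp (DSR.hom_mul _ DSR.Ehom_r2.1 DSR.Ehom_r2.2) (DSR.hom_pd j))
      · exact DSR.hom_congr_deg (by norm_num)
          (DSR.hom_comp (DSR.hom_mul _ hcM2.1 hcM2.2) DSR.hom_E)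
    have hcK : DSR.Ehom n 2
        (fun x : Fin n → ℝ => a j * ((r2 x : ℝ) : ℂ) ^ 2 / ((x j : ℝ) : ℂ) ^ 2) :=
      DSR.Ehom_congr (fun x => by ring)
        (DSR.ehom_deg (by norm_num)
          (DSR.Ehom_mul (DSR.Ehom_mul (DSR.Ehom_mul (DSR.Ehom_const (a j)) DSR.Ehom_r2)
            DSR.Ehom_r2) (DSR.hinv_sq j)))
    have hTK : DSR.Hom n 2
        (fun g (x : Fin n → ℝ) =>
          (fun g (x : Fin n → ℝ) =>
            (((n : ℂ) - 2) * ((x j : ℝ) : ℂ) * g x - ((r2 x : ℝ) : ℂ) * pd j g x)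
              + 2 * ((x j : ℝ) : ℂ) * Eop g x)
            ((fun g (x : Fin n → ℝ) =>
            (((n : ℂ) - 2) * ((x j : ℝ) : ℂ) * g x - ((r2 x : ℝ) : ℂ) * pd j g x)
              + 2 * ((x j : ℝ) : ℂ) * Eop g x) g) x
          + (a j * ((r2 x : ℝ) : ℂ) ^ 2 / ((x j : ℝ) : ℂ) ^ 2) * g x) :=
      DSR.hom_add (DSR.hom_congr_deg (by norm_num) (DSR.hom_comp hTM hTM))
        (DSR.hom_mul _ hcK.1 hcK.2)
    have h := DSR.main hTK hfS hx
    exact h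
  · -- J part
    intro j k hjk x hx
    have hTrot : DSR.Hom n 0
        (fun g (x : Fin n → ℝ) => ((x j : ℝ) : ℂ) * pd k g x - ((x k : ℝ) : ℂ) * pd j g x) := by
      refine DSR.hom_sub ?_ ?_
      · exact DSR.hom_congr_deg (by norm_num)
          (DSR.hom_comp (DSR.hom_mul _ (DSR.Ehom_coord j).1 (DSR.Ehom_coord j).2) (DSR.hom_pd k))
      · exact DSR.hom_congr_deg (by norm_num)
          (DSR.hom_comp (DSR.hom_mul _ (DSR.Ehom_coord k).1 (DSR.Ehom_coord k).2) (DSR.hom_pd j))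
    have hcJ : DSR.Ehom n 0
        (fun x : Fin n → ℝ => a j * ((x k : ℝ) : ℂ) ^ 2 / ((x j : ℝ) : ℂ) ^ 2
          + a k * ((x j : ℝ) : ℂ) ^ 2 / ((x k : ℝ) : ℂ) ^ 2) := by
      refine DSR.Ehom_add ?_ ?_
      · exact DSR.Ehom_congr (fun x => by ring)
          (DSR.ehom_deg (by norm_num)
            (DSR.Ehom_mul (DSR.Ehom_mul (DSR.Ehom_mul (DSR.Ehom_const (a j)) (DSR.Ehom_coord k))
              (DSR.Ehom_coord k)) (DSR.hinv_sq j)))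
      · exact DSR.Ehom_congr (fun x => by ring)
          (DSR.ehom_deg (by norm_num)
            (DSR.Ehom_mul (DSR.Ehom_mul (DSR.Ehom_mul (DSR.Ehom_const (a k)) (DSR.Ehom_coord j))
              (DSR.Ehom_coord j)) (DSR.hinv_sq k)))
    have hTJ : DSR.Hom n 0
        (fun g (x : Fin n → ℝ) =>
          (fun g (x : Fin n → ℝ) => ((x j : ℝ) : ℂ) * pd k g x - ((x k : ℝ) : ℂ) * pd j g x)
            ((fun g (x : Fin n → ℝ) =>
              ((x j : ℝ) : ℂ) * pd k g x - ((x k : ℝ) : ℂ) * pd j g x) g) x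
          + (a j * ((x k : ℝ) : ℂ) ^ 2 / ((x j : ℝ) : ℂ) ^ 2
              + a k * ((x j : ℝ) : ℂ) ^ 2 / ((x k : ℝ) : ℂ) ^ 2) * g x) :=
      DSR.hom_add (DSR.hom_congr_deg (by norm_num) (DSR.hom_comp hTrot hTrot))
        (DSR.hom_mul _ hcJ.1 hcJ.2)
    have h := DSR.main hTJ hfS hx
    have h2 : Dop (Jop a j k f) x - Jop a j k (Dop f) x = -(0 : ℂ) * Jop a j k f x := h
    rw [h2]; ring
end
end

section
/- Fix an integer n ≥ 2 and constants a₁,…,aₙ ∈ ℂ. For all i ≠ j in {1,…,n} and every smooth function f : Ω → ℂ, the second-order operators Kᵢ and Kⱼ commute: Kᵢ(Kⱼf) = Kⱼ(Kᵢf) on Ω. -/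
noncomputable section

open Set Filter Topology

namespace KK
variable {n : ℕ}

theorem isOpen_Omega (n : ℕ) : IsOpen (Omega n) := by
  have : Omega n = (setOf (fun x : Fin n → ℝ => x ≠ 0)) ∩ ⋂ j, setOf (fun x => x j ≠ 0) := by
    ext x; simp [Omega]; exact Iff.rfl
  rw [this]
  refine IsOpen.inter (isOpen_ne_fun continuous_id continuous_const) ?_
  exact isOpen_iInter_of_finite fun j =>
    isOpen_ne_fun (continuous_apply j) continuous_const

theorem r2_pos {x : Fin n → ℝ} (hx : x ∈ Omega n) : 0 < r2 x := by
  obtain ⟨hx0, hxj⟩ := hx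
  obtain ⟨j, hj⟩ : ∃ j, x j ≠ 0 := Function.ne_iff.mp hx0
  exact Finset.sum_pos' (fun k _ => sq_nonneg _) ⟨j, Finset.mem_univ j, by positivity⟩

/-! ### pd calculus -/

variable {f g : (Fin n → ℝ) → ℂ} {x : Fin n → ℝ} {j k : Fin n}

theorem pd_congr {s : Set (Fin n → ℝ)} (hs : IsOpen s) (h : Set.EqOn f g s)
    (hx : x ∈ s) (j : Fin n) : pd j f x = pd j g x := by
  unfold pd
  rw [Filter.EventuallyEq.fderiv_eq (h.eventuallyEq_of_mem (hs.mem_nhds hx))]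

theorem pd_add (hf : DifferentiableAt ℝ f x) (hg : DifferentiableAt ℝ g x) :
    pd j (fun y => f y + g y) x = pd j f x + pd j g x := by
  unfold pd; rw [fderiv_fun_add hf hg]; rfl

theorem pd_sub (hf : DifferentiableAt ℝ f x) (hg : DifferentiableAt ℝ g x) :
    pd j (fun y => f y - g y) x = pd j f x - pd j g x := by
  unfold pd; rw [fderiv_fun_sub hf hg]; rfl

theorem pd_mul (hf : DifferentiableAt ℝ f x) (hg : DifferentiableAt ℝ g x) :
    pd j (fun y => f y * g y) x = pd j f x * g x + f x * pd j g x := by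
  unfold pd; rw [fderiv_fun_mul hf hg]
  simp only [ContinuousLinearMap.add_apply, ContinuousLinearMap.smul_apply, smul_eq_mul]
  ring

theorem pd_const (c : ℂ) : pd j (fun _ => c) x = 0 := by
  unfold pd; rw [fderiv_fun_const]; rfl

theorem pd_const_mul (hf : DifferentiableAt ℝ f x) (c : ℂ) :
    pd j (fun y => c * f y) x = c * pd j f x := by
  unfold pd; rw [fderiv_const_mul hf]; rfl

theorem pd_sum {ι : Type*} (s : Finset ι) {F : ι → (Fin n → ℝ) → ℂ}
    (h : ∀ i ∈ s, DifferentiableAt ℝ (F i) x) :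
    pd j (fun y => ∑ i ∈ s, F i y) x = ∑ i ∈ s, pd j (F i) x := by
  unfold pd; rw [fderiv_fun_sum h]; simp

def coordL (k : Fin n) : (Fin n → ℝ) →L[ℝ] ℂ :=
  Complex.ofRealCLM.comp (ContinuousLinearMap.proj (R := ℝ) (φ := fun _ : Fin n => ℝ) k)

theorem coordCLM_eq (k : Fin n) : (fun y : Fin n → ℝ => ((y k : ℝ) : ℂ)) = ⇑(coordL k) :=
  rfl

theorem diff_coord : DifferentiableAt ℝ (fun y : Fin n → ℝ => ((y k : ℝ) : ℂ)) x := by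
  rw [coordCLM_eq]
  exact (coordL k).differentiableAt

theorem pd_coord : pd j (fun y : Fin n → ℝ => ((y k : ℝ) : ℂ)) x
    = if k = j then 1 else 0 := by
  unfold pd
  rw [coordCLM_eq, (coordL k).fderiv]
  simp only [coordL, ContinuousLinearMap.comp_apply, ContinuousLinearMap.proj_apply,
    Complex.ofRealCLM_apply, Pi.single_apply]
  split <;> simp

theorem cd_coord : ContDiff ℝ (⊤ : ℕ∞) (fun y : Fin n → ℝ => ((y k : ℝ) : ℂ)) := by
  rw [coordCLM_eq]
  exact (coordL k).contDiff

theorem r2C_eq : (fun y : Fin n → ℝ => ((r2 y : ℝ) : ℂ))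
    = fun y => ∑ k, ((y k : ℝ) : ℂ) ^ 2 := by
  funext y; unfold r2; push_cast; ring

theorem cd_r2C : ContDiff ℝ (⊤ : ℕ∞) (fun y : Fin n → ℝ => ((r2 y : ℝ) : ℂ)) := by
  rw [r2C_eq]
  exact ContDiff.sum fun k _ => cd_coord.pow 2

theorem diff_r2C : DifferentiableAt ℝ (fun y : Fin n → ℝ => ((r2 y : ℝ) : ℂ)) x :=
  cd_r2C.differentiable (by norm_num) x

theorem pd_r2C : pd j (fun y : Fin n → ℝ => ((r2 y : ℝ) : ℂ)) x = 2 * (x j : ℂ) := by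
  rw [r2C_eq]
  rw [pd_sum Finset.univ (fun i _ => by
    simpa [sq] using (diff_coord (k := i) (x := x)).fun_mul diff_coord)]
  have : ∀ i : Fin n, pd j (fun y : Fin n → ℝ => ((y i : ℝ) : ℂ) ^ 2) x
      = (if i = j then 1 else 0) * (2 * (x i : ℂ)) := by
    intro i
    have : (fun y : Fin n → ℝ => ((y i : ℝ) : ℂ) ^ 2)
        = fun y => ((y i : ℝ) : ℂ) * ((y i : ℝ) : ℂ) := by funext y; ring
    rw [this, pd_mul diff_coord diff_coord, pd_coord]
    ring
  simp only [this, ite_mul, one_mul, zero_mul]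
  rw [Finset.sum_ite_eq' Finset.univ j (fun i => 2 * (x i : ℂ))]
  simp

theorem pd_inv {s : Set (Fin n → ℝ)} (hs : IsOpen s) (hx : x ∈ s)
    {c : (Fin n → ℝ) → ℂ} (hc : DifferentiableAt ℝ c x)
    (hne : ∀ y ∈ s, c y ≠ 0) :
    pd j (fun y => (c y)⁻¹) x = -(pd j c x) / (c x) ^ 2 := by
  have hw : DifferentiableAt ℝ (fun y => (c y)⁻¹) x := hc.inv (hne x hx)
  have h1 : Set.EqOn (fun y => c y * (c y)⁻¹) (fun _ => (1 : ℂ)) s :=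
    fun y hy => mul_inv_cancel₀ (hne y hy)
  have h2 := pd_congr hs h1 hx j
  rw [pd_mul hc hw, pd_const] at h2
  have hcx := hne x hx
  set w := pd j (fun y => (c y)⁻¹) x with hwdef
  rw [eq_div_iff (pow_ne_zero 2 hcx)]
  field_simp at h2
  linear_combination h2

/-! ### smoothness -/

theorem diffOn_at {F : Type*} [NormedAddCommGroup F] [NormedSpace ℝ F]
    {g : (Fin n → ℝ) → F} (hg : ContDiffOn ℝ (⊤ : ℕ∞) g (Omega n)) (hx : x ∈ Omega n) :
    DifferentiableAt ℝ g x :=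
  (hg.contDiffAt ((isOpen_Omega n).mem_nhds hx)).differentiableAt (by norm_num)

theorem cd_fderiv (hf : ContDiffOn ℝ (⊤ : ℕ∞) f (Omega n)) :
    ContDiffOn ℝ (⊤ : ℕ∞) (fderiv ℝ f) (Omega n) :=
  hf.fderiv_of_isOpen (isOpen_Omega n) (by norm_num)

theorem cd_pd (hf : ContDiffOn ℝ (⊤ : ℕ∞) f (Omega n)) (j : Fin n) :
    ContDiffOn ℝ (⊤ : ℕ∞) (pd j f) (Omega n) := by
  have h1 := (cd_fderiv hf).clm_apply
    (contDiffOn_const (c := Pi.single j (1:ℝ)))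
  exact h1

theorem cd_Eop (hf : ContDiffOn ℝ (⊤ : ℕ∞) f (Omega n)) :
    ContDiffOn ℝ (⊤ : ℕ∞) (Eop f) (Omega n) := by
  have : ContDiffOn ℝ (⊤ : ℕ∞)
      (fun x : Fin n → ℝ => ∑ k, ((x k : ℝ) : ℂ) * pd k f x) (Omega n) :=
    ContDiffOn.sum fun k _ => (cd_coord.contDiffOn).mul (cd_pd hf k)
  exact this

theorem cd_Mop (hf : ContDiffOn ℝ (⊤ : ℕ∞) f (Omega n)) (j : Fin n) :
    ContDiffOn ℝ (⊤ : ℕ∞) (Mop j f) (Omega n) := by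
  have : ContDiffOn ℝ (⊤ : ℕ∞)
      (fun x : Fin n → ℝ => ((n : ℂ) - 2) * ((x j : ℝ) : ℂ) * f x
        - ((r2 x : ℝ) : ℂ) * pd j f x + 2 * ((x j : ℝ) : ℂ) * Eop f x) (Omega n) := by
    refine ContDiffOn.add (ContDiffOn.sub ?_ ?_) ?_
    · exact ((contDiffOn_const.mul cd_coord.contDiffOn)).mul hf
    · exact (cd_r2C.contDiffOn).mul (cd_pd hf j)
    · exact ((contDiffOn_const.mul cd_coord.contDiffOn)).mul (cd_Eop hf)
  exact this

/-! ### Schwarz symmetry -/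

theorem pd_pd_comm (hf : ContDiffOn ℝ (⊤ : ℕ∞) f (Omega n)) (hx : x ∈ Omega n)
    (i j : Fin n) : pd i (pd j f) x = pd j (pd i f) x := by
  have hat : ContDiffAt ℝ (⊤ : ℕ∞) f x :=
    hf.contDiffAt ((isOpen_Omega n).mem_nhds hx)
  have hsymm : IsSymmSndFDerivAt ℝ f x := hat.isSymmSndFDerivAt (by simp only [minSmoothness_of_isRCLikeNormedField]; exact WithTop.coe_le_coe.mpr (le_top : ((2:ℕ) : ℕ∞) ≤ ⊤))
  have hdf : DifferentiableAt ℝ (fderiv ℝ f) x := diffOn_at (cd_fderiv hf) hx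
  have key : ∀ l m : Fin n, pd l (pd m f) x
      = fderiv ℝ (fderiv ℝ f) x (Pi.single l 1) (Pi.single m 1) := by
    intro l m
    have : pd l (pd m f) x
        = fderiv ℝ (fun y => (fderiv ℝ f y) (Pi.single m 1)) x (Pi.single l 1) := rfl
    rw [this, fderiv_clm_apply hdf (differentiableAt_const _)]
    simp
  rw [key i j, key j i, hsymm]

/-! ### derivative formulas -/

/-- `Q f l x = Σ_k x_k ∂_l∂_k f`. -/
def Q (f : (Fin n → ℝ) → ℂ) (l : Fin n) (x : Fin n → ℝ) : ℂ :=
  ∑ k, ((x k : ℝ) : ℂ) * pd l (pd k f) x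

/-- `Rr f x = Σ_m x_m Q f m x`. -/
def Rr (f : (Fin n → ℝ) → ℂ) (x : Fin n → ℝ) : ℂ :=
  ∑ m, ((x m : ℝ) : ℂ) * Q f m x

theorem sum_coord_sq : (∑ m, ((x m : ℝ) : ℂ) * ((x m : ℝ) : ℂ)) = ((r2 x : ℝ) : ℂ) := by
  have := congrFun (r2C_eq (n := n)) x
  rw [this]
  exact Finset.sum_congr rfl fun m _ => (sq ((x m : ℝ) : ℂ)).symm

theorem Eop_def : Eop f x = ∑ m, ((x m : ℝ) : ℂ) * pd m f x := rfl

theorem pd_Eop (hf : ContDiffOn ℝ (⊤ : ℕ∞) f (Omega n)) (hx : x ∈ Omega n) (m : Fin n) :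
    pd m (Eop f) x = pd m f x + Q f m x := by
  have h0 : Eop f = fun y => ∑ k, ((y k : ℝ) : ℂ) * pd k f y := rfl
  rw [h0, pd_sum Finset.univ (fun k _ => diff_coord.fun_mul (diffOn_at (cd_pd hf k) hx))]
  have h1 : ∀ k : Fin n, pd m (fun y => ((y k : ℝ) : ℂ) * pd k f y) x
      = (if k = m then 1 else 0) * pd k f x + ((x k : ℝ) : ℂ) * pd m (pd k f) x := by
    intro k
    rw [pd_mul diff_coord (diffOn_at (cd_pd hf k) hx), pd_coord]
  simp only [h1, ite_mul, one_mul, zero_mul]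
  rw [Finset.sum_add_distrib, Finset.sum_ite_eq' Finset.univ m (fun k => pd k f x)]
  simp [Q]

theorem pd_Mop (hf : ContDiffOn ℝ (⊤ : ℕ∞) f (Omega n)) (hx : x ∈ Omega n) (m j : Fin n) :
    pd m (Mop j f) x =
      ((n : ℂ) - 2) * ((if j = m then 1 else 0) * f x + ((x j : ℝ) : ℂ) * pd m f x)
      - (2 * ((x m : ℝ) : ℂ) * pd j f x + ((r2 x : ℝ) : ℂ) * pd m (pd j f) x)
      + 2 * ((if j = m then 1 else 0) * Eop f x
          + ((x j : ℝ) : ℂ) * (pd m f x + Q f m x)) := by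
  have h0 : Mop j f = fun y => (((n : ℂ) - 2) * ((y j : ℝ) : ℂ) * f y
      - ((r2 y : ℝ) : ℂ) * pd j f y) + 2 * ((y j : ℝ) : ℂ) * Eop f y := rfl
  have df := diffOn_at hf hx
  have dj := diffOn_at (cd_pd hf j) hx
  have dE := diffOn_at (cd_Eop hf) hx
  have dc1 : DifferentiableAt ℝ (fun y : Fin n → ℝ => ((n : ℂ) - 2) * ((y j : ℝ) : ℂ)) x :=
    (differentiableAt_const _).mul diff_coord
  have dc2 : DifferentiableAt ℝ (fun y : Fin n → ℝ => (2 : ℂ) * ((y j : ℝ) : ℂ)) x :=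
    (differentiableAt_const _).mul diff_coord
  have hA : DifferentiableAt ℝ
      (fun y => ((n : ℂ) - 2) * ((y j : ℝ) : ℂ) * f y) x := dc1.mul df
  have hB : DifferentiableAt ℝ (fun y => ((r2 y : ℝ) : ℂ) * pd j f y) x := diff_r2C.mul dj
  have hC : DifferentiableAt ℝ (fun y => 2 * ((y j : ℝ) : ℂ) * Eop f y) x := dc2.mul dE
  rw [h0, pd_add (hA.fun_sub hB) hC, pd_sub hA hB,
    pd_mul dc1 df, pd_mul diff_r2C dj, pd_mul dc2 dE,
    pd_const_mul diff_coord ((n : ℂ) - 2), pd_const_mul diff_coord (2 : ℂ),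
    pd_coord, pd_r2C, pd_Eop hf hx m]
  ring

theorem E_Mop (hf : ContDiffOn ℝ (⊤ : ℕ∞) f (Omega n)) (hx : x ∈ Omega n) (j : Fin n) :
    Eop (Mop j f) x =
      ((n : ℂ) - 2) * ((x j : ℝ) : ℂ) * f x
      + ((n : ℂ) + 2) * ((x j : ℝ) : ℂ) * Eop f x
      - 2 * ((r2 x : ℝ) : ℂ) * pd j f x
      - ((r2 x : ℝ) : ℂ) * (∑ m, ((x m : ℝ) : ℂ) * pd m (pd j f) x)
      + 2 * ((x j : ℝ) : ℂ) * Rr f x := by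
  have h0 : Eop (Mop j f) x = ∑ m, ((x m : ℝ) : ℂ) * pd m (Mop j f) x := rfl
  rw [h0]
  have key : ∀ m : Fin n, ((x m : ℝ) : ℂ) * pd m (Mop j f) x =
      (if j = m then (((n : ℂ) - 2) * f x + 2 * Eop f x) * ((x m : ℝ) : ℂ) else 0)
      + ((((n : ℂ) - 2) * ((x j : ℝ) : ℂ) + 2 * ((x j : ℝ) : ℂ))
          * (((x m : ℝ) : ℂ) * pd m f x)
        - (((x m : ℝ) : ℂ) * ((x m : ℝ) : ℂ)) * (2 * pd j f x)
        - ((r2 x : ℝ) : ℂ) * (((x m : ℝ) : ℂ) * pd m (pd j f) x)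
        + 2 * ((x j : ℝ) : ℂ) * (((x m : ℝ) : ℂ) * Q f m x)) := by
    intro m
    rw [pd_Mop hf hx m j]
    by_cases h : j = m
    · simp only [h, if_true]; ring
    · simp only [h, if_false]; ring
  rw [Finset.sum_congr rfl fun m _ => key m]
  rw [Finset.sum_add_distrib, Finset.sum_ite_eq Finset.univ j
    (fun m => (((n : ℂ) - 2) * f x + 2 * Eop f x) * ((x m : ℝ) : ℂ))]
  simp only [Finset.mem_univ, if_true]
  rw [Finset.sum_add_distrib, Finset.sum_sub_distrib, Finset.sum_sub_distrib,
    ← Finset.mul_sum, ← Finset.sum_mul, ← Finset.mul_sum, ← Finset.mul_sum,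
    sum_coord_sq, ← Eop_def]
  rw [show (∑ m, ((x m : ℝ) : ℂ) * Q f m x) = Rr f x from rfl]
  ring

theorem MM_eval (hf : ContDiffOn ℝ (⊤ : ℕ∞) f (Omega n)) (hx : x ∈ Omega n)
    {i j : Fin n} (hij : i ≠ j) :
    Mop i (Mop j f) x =
      ((n : ℂ) - 2) * (n : ℂ) * ((x i : ℝ) : ℂ) * ((x j : ℝ) : ℂ) * f x
      - (n : ℂ) * ((r2 x : ℝ) : ℂ)
          * (((x i : ℝ) : ℂ) * pd j f x + ((x j : ℝ) : ℂ) * pd i f x)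
      + ((r2 x : ℝ) : ℂ) ^ 2 * pd i (pd j f) x
      + 4 * (n : ℂ) * ((x i : ℝ) : ℂ) * ((x j : ℝ) : ℂ) * Eop f x
      - 2 * ((r2 x : ℝ) : ℂ)
          * (((x j : ℝ) : ℂ) * Q f i x + ((x i : ℝ) : ℂ) * Q f j x)
      + 4 * ((x i : ℝ) : ℂ) * ((x j : ℝ) : ℂ) * Rr f x := by
  have h0 : Mop i (Mop j f) x = ((n : ℂ) - 2) * ((x i : ℝ) : ℂ) * (Mop j f x)
      - ((r2 x : ℝ) : ℂ) * pd i (Mop j f) x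
      + 2 * ((x i : ℝ) : ℂ) * Eop (Mop j f) x := rfl
  rw [h0, pd_Mop hf hx i j, E_Mop hf hx j]
  have hq : (∑ m, ((x m : ℝ) : ℂ) * pd m (pd j f) x) = Q f j x :=
    Finset.sum_congr rfl fun m _ => by rw [pd_pd_comm hf hx m j]
  rw [hq]
  have hd : (if j = i then (1 : ℂ) else 0) = 0 := by simp [Ne.symm hij]
  rw [hd]
  rw [show Mop j f x = ((n : ℂ) - 2) * ((x j : ℝ) : ℂ) * f x
    - ((r2 x : ℝ) : ℂ) * pd j f x + 2 * ((x j : ℝ) : ℂ) * Eop f x from rfl]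
  ring

theorem Mop_comm (hf : ContDiffOn ℝ (⊤ : ℕ∞) f (Omega n)) (hx : x ∈ Omega n)
    {i j : Fin n} (hij : i ≠ j) :
    Mop i (Mop j f) x = Mop j (Mop i f) x := by
  rw [MM_eval hf hx hij, MM_eval hf hx hij.symm, pd_pd_comm hf hx i j]
  ring

/-! ### potential -/

/-- The potential `V = c r⁴ / xⱼ²`. -/
def Vf (c : ℂ) (j : Fin n) : (Fin n → ℝ) → ℂ :=
  fun y => c * ((r2 y : ℝ) : ℂ) ^ 2 / ((y j : ℝ) : ℂ) ^ 2

theorem Vf_eq (c : ℂ) (j : Fin n) : Vf c j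
    = fun y => (c * (((r2 y : ℝ) : ℂ) * ((r2 y : ℝ) : ℂ)))
        * (((y j : ℝ) : ℂ) * ((y j : ℝ) : ℂ))⁻¹ := by
  funext y
  rw [Vf, div_eq_mul_inv, sq, sq]

theorem coord_ne_zero (hx : x ∈ Omega n) (j : Fin n) : ((x j : ℝ) : ℂ) ≠ 0 :=
  Complex.ofReal_ne_zero.mpr (hx.2 j)

theorem cd_V (c : ℂ) (j : Fin n) : ContDiffOn ℝ (⊤ : ℕ∞) (Vf c j) (Omega n) := by
  rw [Vf_eq]
  refine ContDiffOn.mul (contDiffOn_const.mul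
    ((cd_r2C.contDiffOn).mul (cd_r2C.contDiffOn))) ?_
  exact ((cd_coord.contDiffOn).mul (cd_coord.contDiffOn)).inv
    fun y hy => mul_ne_zero (coord_ne_zero hy j) (coord_ne_zero hy j)

theorem pd_V (hx : x ∈ Omega n) (c : ℂ) (j m : Fin n) :
    pd m (Vf c j) x = 4 * c * ((r2 x : ℝ) : ℂ) * ((x m : ℝ) : ℂ) / ((x j : ℝ) : ℂ) ^ 2
      - (if j = m then 1 else 0) * 2 * c * ((r2 x : ℝ) : ℂ) ^ 2 / ((x j : ℝ) : ℂ) ^ 3 := by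
  have hj := coord_ne_zero hx j
  have dG : DifferentiableAt ℝ
      (fun y : Fin n → ℝ => c * (((r2 y : ℝ) : ℂ) * ((r2 y : ℝ) : ℂ))) x :=
    (differentiableAt_const _).mul (diff_r2C.mul diff_r2C)
  have dcc : DifferentiableAt ℝ
      (fun y : Fin n → ℝ => ((y j : ℝ) : ℂ) * ((y j : ℝ) : ℂ)) x :=
    diff_coord.mul diff_coord
  rw [Vf_eq, pd_mul dG (dcc.fun_inv (mul_ne_zero hj hj)),
    pd_const_mul (diff_r2C.fun_mul diff_r2C) c, pd_mul diff_r2C diff_r2C, pd_r2C,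
    pd_inv (isOpen_Omega n) hx dcc
      (fun y hy => mul_ne_zero (coord_ne_zero hy j) (coord_ne_zero hy j)),
    pd_mul diff_coord diff_coord, pd_coord]
  by_cases h : j = m
  · subst h
    simp only [if_true]
    field_simp
    ring
  · simp only [h, if_false]
    field_simp
    ring

theorem E_V (hx : x ∈ Omega n) (c : ℂ) (j : Fin n) :
    (∑ m, ((x m : ℝ) : ℂ) * pd m (Vf c j) x)
      = 2 * c * ((r2 x : ℝ) : ℂ) ^ 2 / ((x j : ℝ) : ℂ) ^ 2 := by
  have hj := coord_ne_zero hx j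
  have key : ∀ m : Fin n, ((x m : ℝ) : ℂ) * pd m (Vf c j) x
      = (((x m : ℝ) : ℂ) * ((x m : ℝ) : ℂ))
          * (4 * c * ((r2 x : ℝ) : ℂ) / ((x j : ℝ) : ℂ) ^ 2)
        - (if j = m then ((x m : ℝ) : ℂ)
            * (2 * c * ((r2 x : ℝ) : ℂ) ^ 2 / ((x j : ℝ) : ℂ) ^ 3) else 0) := by
    intro m
    rw [pd_V hx c j m]
    by_cases h : j = m
    · simp only [h, if_true]; ring
    · simp only [h, if_false]; ring
  rw [Finset.sum_congr rfl fun m _ => key m, Finset.sum_sub_distrib,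
    ← Finset.sum_mul, sum_coord_sq,
    Finset.sum_ite_eq Finset.univ j
      (fun m => ((x m : ℝ) : ℂ) * (2 * c * ((r2 x : ℝ) : ℂ) ^ 2 / ((x j : ℝ) : ℂ) ^ 3))]
  simp only [Finset.mem_univ, if_true]
  field_simp
  ring

theorem Mop_V (hf : ContDiffOn ℝ (⊤ : ℕ∞) f (Omega n)) (hx : x ∈ Omega n)
    (c : ℂ) {i j : Fin n} (hij : i ≠ j) :
    Mop i (fun y => Vf c j y * f y) x = Vf c j x * Mop i f x := by
  have hj := coord_ne_zero hx j
  have dV : DifferentiableAt ℝ (Vf c j) x := diffOn_at (cd_V c j) hx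
  have df := diffOn_at hf hx
  have h0 : Mop i (fun y => Vf c j y * f y) x
      = ((n : ℂ) - 2) * ((x i : ℝ) : ℂ) * (Vf c j x * f x)
        - ((r2 x : ℝ) : ℂ) * pd i (fun y => Vf c j y * f y) x
        + 2 * ((x i : ℝ) : ℂ) * Eop (fun y => Vf c j y * f y) x := rfl
  have hE : Eop (fun y => Vf c j y * f y) x
      = (∑ m, ((x m : ℝ) : ℂ) * pd m (Vf c j) x) * f x + Vf c j x * Eop f x := by
    rw [Eop_def]
    have : ∀ m : Fin n, ((x m : ℝ) : ℂ) * pd m (fun y => Vf c j y * f y) x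
        = ((x m : ℝ) : ℂ) * pd m (Vf c j) x * f x
          + Vf c j x * (((x m : ℝ) : ℂ) * pd m f x) := by
      intro m
      rw [pd_mul dV (diffOn_at hf hx)]
      ring
    rw [Finset.sum_congr rfl fun m _ => this m, Finset.sum_add_distrib,
      ← Finset.sum_mul, ← Finset.mul_sum]
    rfl
  rw [h0, hE, E_V hx c j, pd_mul dV df, pd_V hx c j i]
  have hd : (if j = i then (1 : ℂ) else 0) = 0 := by simp [Ne.symm hij]
  rw [hd]
  rw [show Mop i f x = ((n : ℂ) - 2) * ((x i : ℝ) : ℂ) * f x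
    - ((r2 x : ℝ) : ℂ) * pd i f x + 2 * ((x i : ℝ) : ℂ) * Eop f x from rfl, Vf]
  field_simp
  ring

/-! ### linearity and congruence -/

theorem Eop_congr {s : Set (Fin n → ℝ)} (hs : IsOpen s) (h : Set.EqOn f g s)
    (hx : x ∈ s) : Eop f x = Eop g x :=
  Finset.sum_congr rfl fun k _ => by rw [pd_congr hs h hx]

theorem Mop_congr {s : Set (Fin n → ℝ)} (hs : IsOpen s) (h : Set.EqOn f g s)
    (hx : x ∈ s) (j : Fin n) : Mop j f x = Mop j g x := by
  unfold Mop
  rw [pd_congr hs h hx, Eop_congr hs h hx, h hx]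

theorem Mop_add (hg : DifferentiableAt ℝ f x) (hh : DifferentiableAt ℝ g x) (i : Fin n) :
    Mop i (fun y => f y + g y) x = Mop i f x + Mop i g x := by
  have hE : Eop (fun y => f y + g y) x = Eop f x + Eop g x := by
    rw [Eop_def, Eop_def, Eop_def, ← Finset.sum_add_distrib]
    exact Finset.sum_congr rfl fun m _ => by rw [pd_add hg hh]; ring
  have h0 : Mop i (fun y => f y + g y) x
      = ((n : ℂ) - 2) * ((x i : ℝ) : ℂ) * (f x + g x)
        - ((r2 x : ℝ) : ℂ) * pd i (fun y => f y + g y) x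
        + 2 * ((x i : ℝ) : ℂ) * Eop (fun y => f y + g y) x := rfl
  rw [h0, pd_add hg hh, hE]
  show _ = (((n:ℂ)-2) * _ * _ - _ * _ + 2 * _ * _) + (((n:ℂ)-2) * _ * _ - _ * _ + 2 * _ * _)
  ring

end KK

namespace KK
variable {n : ℕ} {f g : (Fin n → ℝ) → ℂ} {x : Fin n → ℝ}

theorem Kop_eq (a : Fin n → ℂ) (j : Fin n) (f : (Fin n → ℝ) → ℂ) :
    Kop a j f = fun y => Mop j (Mop j f) y + Vf (a j) j y * f y := rfl

theorem cd_Kop (a : Fin n → ℂ) (j : Fin n) (hf : ContDiffOn ℝ (⊤ : ℕ∞) f (Omega n)) :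
    ContDiffOn ℝ (⊤ : ℕ∞) (Kop a j f) (Omega n) := by
  rw [Kop_eq]
  exact (cd_Mop (cd_Mop hf j) j).add ((cd_V (a j) j).mul hf)

theorem KK_expand (a : Fin n → ℂ) (hf : ContDiffOn ℝ (⊤ : ℕ∞) f (Omega n))
    (hx : x ∈ Omega n) {i j : Fin n} (hij : i ≠ j) :
    Kop a i (Kop a j f) x
      = Mop i (Mop i (Mop j (Mop j f))) x + Vf (a j) j x * Mop i (Mop i f) x
        + Vf (a i) i x * Mop j (Mop j f) x + Vf (a i) i x * (Vf (a j) j x * f x) := by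
  have hMMf : ContDiffOn ℝ (⊤ : ℕ∞) (Mop j (Mop j f)) (Omega n) := cd_Mop (cd_Mop hf j) j
  have e1 : Set.EqOn (Mop i (Kop a j f))
      (fun y => Mop i (Mop j (Mop j f)) y + Vf (a j) j y * Mop i f y) (Omega n) := by
    intro y hy
    have h1 : Mop i (Kop a j f) y
        = Mop i (fun z => Mop j (Mop j f) z + Vf (a j) j z * f z) y := by rw [Kop_eq]
    rw [h1, Mop_add (diffOn_at hMMf hy) (diffOn_at ((cd_V (a j) j).mul hf) hy) i,
      Mop_V hf hy (a j) hij]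
  have h2 : Kop a i (Kop a j f) x
      = Mop i (Mop i (Kop a j f)) x + Vf (a i) i x * Kop a j f x := rfl
  rw [h2, Mop_congr (isOpen_Omega n) e1 hx i,
    Mop_add (diffOn_at (cd_Mop hMMf i) hx)
      (diffOn_at ((cd_V (a j) j).mul (cd_Mop hf i)) hx) i,
    Mop_V (cd_Mop hf i) hx (a j) hij]
  rw [show Kop a j f x = Mop j (Mop j f) x + Vf (a j) j x * f x from rfl]
  ring

theorem big4 (hf : ContDiffOn ℝ (⊤ : ℕ∞) f (Omega n)) (hx : x ∈ Omega n)
    {i j : Fin n} (hij : i ≠ j) :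
    Mop i (Mop i (Mop j (Mop j f))) x = Mop j (Mop j (Mop i (Mop i f))) x := by
  have hS := isOpen_Omega n
  have c1 : Set.EqOn (Mop i (Mop j (Mop j f))) (Mop j (Mop i (Mop j f))) (Omega n) :=
    fun y hy => Mop_comm (cd_Mop hf j) hy hij
  have step1 : Mop i (Mop i (Mop j (Mop j f))) x
      = Mop i (Mop j (Mop i (Mop j f))) x := Mop_congr hS c1 hx i
  have step2 : Mop i (Mop j (Mop i (Mop j f))) x
      = Mop j (Mop i (Mop i (Mop j f))) x :=
    Mop_comm (cd_Mop (cd_Mop hf j) i) hx hij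
  have c2 : Set.EqOn (Mop i (Mop j f)) (Mop j (Mop i f)) (Omega n) :=
    fun y hy => Mop_comm hf hy hij
  have c3 : Set.EqOn (Mop i (Mop i (Mop j f))) (Mop i (Mop j (Mop i f))) (Omega n) :=
    fun y hy => Mop_congr hS c2 hy i
  have step3 : Mop j (Mop i (Mop i (Mop j f))) x
      = Mop j (Mop i (Mop j (Mop i f))) x := Mop_congr hS c3 hx j
  have c4 : Set.EqOn (Mop i (Mop j (Mop i f))) (Mop j (Mop i (Mop i f))) (Omega n) :=
    fun y hy => Mop_comm (cd_Mop hf i) hy hij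
  have step4 : Mop j (Mop i (Mop j (Mop i f))) x
      = Mop j (Mop j (Mop i (Mop i f))) x := Mop_congr hS c4 hx j
  rw [step1, step2, step3, step4]

end KK

/-- The second-order operators `Kᵢ`, `Kⱼ` commute for `i ≠ j`. -/
theorem K_operators_commute
    (n : ℕ) (hn : 2 ≤ n) (a : Fin n → ℂ) (i j : Fin n) (hij : i ≠ j)
    (f : (Fin n → ℝ) → ℂ) (hf : ContDiffOn ℝ (⊤ : ℕ∞) f (Omega n)) :
    ∀ x ∈ Omega n, Kop a i (Kop a j f) x = Kop a j (Kop a i f) x := by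
  intro x hx
  have hf' : ContDiffOn ℝ (⊤ : ℕ∞) f (Omega n) := hf.of_le (by simp)
  rw [KK.KK_expand a hf' hx hij, KK.KK_expand a hf' hx hij.symm,
    KK.big4 hf' hx hij]
  ring
end
end
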